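/- arXiv:1605.03257 — 15 statements merged into one kernel-verified Lean document; each statement's English description precedes it below -/
import Mathlib

section
/- Let n > 12 and let x be an element of order 3 in the alternating group Alt_n. Then x centralizes an involution: there exists w ∈ Alt_n with w of order 2 and w * x = x * w. -/
set_option linter.unusedSectionVars false

open Equiv Equiv.Perm

section Helpers

variable {α : Type*} [DecidableEq α]

private lemma pick {s t : Finset α} (h : t.card < s.card) : ∃ a ∈ s, a ∉ t := by
  by_contra hc
  push_neg at hc
  exact absurd (Finset.card_le_card hc) (by omega)

private lemma card_triple (x y z : α) : ({x, y, z} : Finset α).card ≤ 3 :=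
  le_trans (Finset.card_insert_le _ _) (Nat.succ_le_succ
    (le_trans (Finset.card_insert_le _ _) (Nat.succ_le_succ
      (le_of_eq (Finset.card_singleton _)))))

variable (σ : Equiv.Perm α)

/-- the swapping permutation between the orbits of a and b -/
private def pp (a b : α) : Equiv.Perm α :=
  Equiv.swap a b * Equiv.swap (σ a) (σ b) * Equiv.swap (σ (σ a)) (σ (σ b))

/-- pp fixes points outside both orbits -/
private lemma pp_fix {a b y : α} (hy1 : y ≠ a) (hy2 : y ≠ σ a) (hy3 : y ≠ σ (σ a))
    (hy4 : y ≠ b) (hy5 : y ≠ σ b) (hy6 : y ≠ σ (σ b)) : pp σ a b y = y := by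
  simp only [pp, Equiv.Perm.mul_apply,
    Equiv.swap_apply_of_ne_of_ne hy3 hy6, Equiv.swap_apply_of_ne_of_ne hy2 hy5,
    Equiv.swap_apply_of_ne_of_ne hy1 hy4]

private lemma pp_symm (a b : α) : pp σ a b = pp σ b a := by
  rw [pp, pp, Equiv.swap_comm a b, Equiv.swap_comm (σ a) (σ b),
    Equiv.swap_comm (σ (σ a)) (σ (σ b))]

variable {σ}

private structure Nice (σ : Equiv.Perm α) (a b : α) : Prop where
  hσ : ∀ y, σ (σ (σ y)) = y
  ha : σ a ≠ a
  hb : σ b ≠ b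
  h0 : a ≠ b
  h1 : σ a ≠ b
  h2 : σ (σ a) ≠ b

namespace Nice

variable {a b : α} (h : Nice σ a b)
include h

private lemma a1 : σ a ≠ σ b := fun e => h.h0 (σ.injective e)
private lemma a2 : σ (σ a) ≠ σ (σ b) := fun e => h.h0 (σ.injective (σ.injective e))
private lemma ab1 : a ≠ σ b := fun e => h.h2 (by rw [e, h.hσ])
private lemma ab2 : a ≠ σ (σ b) := fun e => h.h1 (by rw [e, h.hσ])
private lemma ab3 : σ a ≠ σ (σ b) := fun e => h.ab1 (σ.injective e)
private lemma ab4 : σ (σ a) ≠ σ b := fun e => h.h1 (σ.injective e)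
private lemma aa1 : a ≠ σ a := h.ha.symm
private lemma aa2 : σ a ≠ σ (σ a) := fun e => h.ha (σ.injective e).symm
private lemma aa3 : a ≠ σ (σ a) := fun e => h.ha (by conv_lhs => rw [e, h.hσ])

private lemma symm : Nice σ b a :=
  ⟨h.hσ, h.hb, h.ha, h.h0.symm, h.ab1.symm, h.ab2.symm⟩

private lemma bb1 : b ≠ σ b := h.symm.aa1
private lemma bb2 : σ b ≠ σ (σ b) := h.symm.aa2
private lemma bb3 : b ≠ σ (σ b) := h.symm.aa3

private lemma pp_a : pp σ a b a = b := by
  simp only [pp, Equiv.Perm.mul_apply,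
    Equiv.swap_apply_of_ne_of_ne h.aa3 h.ab2, Equiv.swap_apply_of_ne_of_ne h.aa1 h.ab1,
    Equiv.swap_apply_left]

private lemma pp_sa : pp σ a b (σ a) = σ b := by
  simp only [pp, Equiv.Perm.mul_apply,
    Equiv.swap_apply_of_ne_of_ne h.aa2 h.ab3, Equiv.swap_apply_left,
    Equiv.swap_apply_of_ne_of_ne h.ab1.symm h.bb1.symm]

private lemma pp_ssa : pp σ a b (σ (σ a)) = σ (σ b) := by
  simp only [pp, Equiv.Perm.mul_apply, Equiv.swap_apply_left,
    Equiv.swap_apply_of_ne_of_ne h.ab3.symm h.bb2.symm,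
    Equiv.swap_apply_of_ne_of_ne h.ab2.symm h.bb3.symm]

private lemma pp_b : pp σ a b b = a := by rw [pp_symm]; exact h.symm.pp_a
private lemma pp_sb : pp σ a b (σ b) = σ a := by rw [pp_symm]; exact h.symm.pp_sa
private lemma pp_ssb : pp σ a b (σ (σ b)) = σ (σ a) := by rw [pp_symm]; exact h.symm.pp_ssa

private lemma pp_comm : Commute (pp σ a b) σ := by
  ext y
  rw [Equiv.Perm.mul_apply, Equiv.Perm.mul_apply]
  by_cases e1 : y = a
  · rw [e1, h.pp_sa, h.pp_a]
  by_cases e2 : y = σ a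
  · rw [e2, h.pp_ssa, h.pp_sa]
  by_cases e3 : y = σ (σ a)
  · rw [e3, h.hσ, h.pp_a, h.pp_ssa, h.hσ]
  by_cases e4 : y = b
  · rw [e4, h.pp_sb, h.pp_b]
  by_cases e5 : y = σ b
  · rw [e5, h.pp_ssb, h.pp_sb]
  by_cases e6 : y = σ (σ b)
  · rw [e6, h.hσ, h.pp_b, h.pp_ssb, h.hσ]
  · rw [pp_fix σ e1 e2 e3 e4 e5 e6, pp_fix σ]
    · intro e; exact e3 (by rw [← h.hσ y, e])
    · intro e; exact e1 (σ.injective e)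
    · intro e; exact e2 (σ.injective e)
    · intro e; exact e6 (by rw [← h.hσ y, e])
    · intro e; exact e4 (σ.injective e)
    · intro e; exact e5 (σ.injective e)

private lemma pp_sq : pp σ a b * pp σ a b = 1 := by
  ext y
  rw [Equiv.Perm.mul_apply, Equiv.Perm.one_apply]
  by_cases e1 : y = a
  · rw [e1, h.pp_a, h.pp_b]
  by_cases e2 : y = σ a
  · rw [e2, h.pp_sa, h.pp_sb]
  by_cases e3 : y = σ (σ a)
  · rw [e3, h.pp_ssa, h.pp_ssb]
  by_cases e4 : y = b
  · rw [e4, h.pp_b, h.pp_a]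
  by_cases e5 : y = σ b
  · rw [e5, h.pp_sb, h.pp_sa]
  by_cases e6 : y = σ (σ b)
  · rw [e6, h.pp_ssb, h.pp_ssa]
  · rw [pp_fix σ e1 e2 e3 e4 e5 e6, pp_fix σ e1 e2 e3 e4 e5 e6]

private lemma pp_sign [Fintype α] : Equiv.Perm.sign (pp σ a b) = -1 := by
  unfold pp
  rw [map_mul, map_mul, Equiv.Perm.sign_swap h.h0, Equiv.Perm.sign_swap h.a1,
    Equiv.Perm.sign_swap h.a2]
  norm_num

end Nice

private lemma pp_disjoint {a b c d : α} (hac : Nice σ a c) (had : Nice σ a d)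
    (hbc : Nice σ b c) (hbd : Nice σ b d) :
    Equiv.Perm.Disjoint (pp σ a b) (pp σ c d) := by
  intro y
  by_cases e1 : y = a
  · exact Or.inr (by rw [e1]; exact pp_fix σ hac.h0 hac.ab1 hac.ab2 had.h0 had.ab1 had.ab2)
  by_cases e2 : y = σ a
  · exact Or.inr (by rw [e2]; exact pp_fix σ hac.h1 hac.a1 hac.ab3 had.h1 had.a1 had.ab3)
  by_cases e3 : y = σ (σ a)
  · exact Or.inr (by rw [e3]; exact pp_fix σ hac.h2 hac.ab4 hac.a2 had.h2 had.ab4 had.a2)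
  by_cases e4 : y = b
  · exact Or.inr (by rw [e4]; exact pp_fix σ hbc.h0 hbc.ab1 hbc.ab2 hbd.h0 hbd.ab1 hbd.ab2)
  by_cases e5 : y = σ b
  · exact Or.inr (by rw [e5]; exact pp_fix σ hbc.h1 hbc.a1 hbc.ab3 hbd.h1 hbd.a1 hbd.ab3)
  by_cases e6 : y = σ (σ b)
  · exact Or.inr (by rw [e6]; exact pp_fix σ hbc.h2 hbc.ab4 hbc.a2 hbd.h2 hbd.ab4 hbd.a2)
  · exact Or.inl (pp_fix σ e1 e2 e3 e4 e5 e6)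

end Helpers

/-- For `n > 12`, every element of order 3 in the alternating group `Alt_n`
centralizes an involution. -/
theorem alternatingGroup_orderThree_centralizes_involution_of_gt_twelve
    (n : ℕ) (hn : 12 < n) (x : alternatingGroup (Fin n)) (hx : orderOf x = 3) :
    ∃ w : alternatingGroup (Fin n), orderOf w = 2 ∧ w * x = x * w := by
  set σ : Equiv.Perm (Fin n) := (x : Equiv.Perm (Fin n)) with hσdef
  have hord : orderOf σ = 3 := by rw [hσdef, Subgroup.orderOf_coe, hx]
  have hσ3 : σ ^ 3 = 1 := by rw [← hord]; exact pow_orderOf_eq_one σ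
  have hσy : ∀ y, σ (σ (σ y)) = y := by
    intro y
    have := congrArg (fun p : Equiv.Perm (Fin n) => p y) hσ3
    simpa [pow_succ, Equiv.Perm.mul_apply] using this
  by_cases hcase : σ.support.card + 4 ≤ n
  · -- at least 4 fixed points: double transposition on fixed points
    have hccard : 4 ≤ σ.supportᶜ.card := by
      rw [Finset.card_compl, Fintype.card_fin]; omega
    obtain ⟨a, ha, -⟩ := pick (s := σ.supportᶜ) (t := ∅)
      (by rw [Finset.card_empty]; omega)
    obtain ⟨b, hb, hb'⟩ := pick (s := σ.supportᶜ) (t := {a})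
      (by rw [Finset.card_singleton]; omega)
    obtain ⟨c, hc, hc'⟩ := pick (s := σ.supportᶜ) (t := {a, b})
      (by
        have h2 : ({a, b} : Finset (Fin n)).card ≤ 2 :=
          le_trans (Finset.card_insert_le _ _) (by simp)
        omega)
    obtain ⟨d, hd, hd'⟩ := pick (s := σ.supportᶜ) (t := {a, b, c})
      (by have h3 := card_triple a b c; omega)
    simp only [Finset.mem_insert, Finset.mem_singleton, not_or] at hb' hc' hd'
    have hfix : ∀ y ∈ σ.supportᶜ, σ y = y := fun y hy =>
      Equiv.Perm.notMem_support.mp (Finset.mem_compl.mp hy)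
    have hab : a ≠ b := fun e => hb' (e.symm)
    have hac : a ≠ c := fun e => hc'.1 e.symm
    have hbc : b ≠ c := fun e => hc'.2 e.symm
    have had : a ≠ d := fun e => hd'.1 e.symm
    have hbd : b ≠ d := fun e => hd'.2.1 e.symm
    have hcd : c ≠ d := fun e => hd'.2.2 e.symm
    set w : Equiv.Perm (Fin n) := Equiv.swap a b * Equiv.swap c d with hwdef
    have hwfix : ∀ y, y ≠ a → y ≠ b → y ≠ c → y ≠ d → w y = y := by
      intro y h1 h2 h3 h4
      rw [hwdef, Equiv.Perm.mul_apply, Equiv.swap_apply_of_ne_of_ne h3 h4,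
        Equiv.swap_apply_of_ne_of_ne h1 h2]
    have hwsign : Equiv.Perm.sign w = 1 := by
      rw [hwdef, map_mul, Equiv.Perm.sign_swap hab, Equiv.Perm.sign_swap hcd]; norm_num
    have hcomm : Commute w σ := by
      apply Equiv.Perm.Disjoint.commute
      intro y
      by_cases e1 : y = a
      · exact Or.inr (by rw [e1]; exact hfix a ha)
      by_cases e2 : y = b
      · exact Or.inr (by rw [e2]; exact hfix b hb)
      by_cases e3 : y = c
      · exact Or.inr (by rw [e3]; exact hfix c hc)
      by_cases e4 : y = d
      · exact Or.inr (by rw [e4]; exact hfix d hd)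
      · exact Or.inl (hwfix y e1 e2 e3 e4)
    have hwsq : w * w = 1 := by
      have hc1 : Commute (Equiv.swap a b) (Equiv.swap c d) := by
        apply Equiv.Perm.Disjoint.commute
        intro y
        by_cases e1 : y = a
        · exact Or.inr (by rw [e1]; exact Equiv.swap_apply_of_ne_of_ne hac had)
        by_cases e2 : y = b
        · exact Or.inr (by rw [e2]; exact Equiv.swap_apply_of_ne_of_ne hbc hbd)
        · exact Or.inl (Equiv.swap_apply_of_ne_of_ne e1 e2)
      calc w * w = Equiv.swap a b * (Equiv.swap c d * Equiv.swap a b) * Equiv.swap c d := by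
            rw [hwdef]; group
        _ = Equiv.swap a b * (Equiv.swap a b * Equiv.swap c d) * Equiv.swap c d := by
            rw [hc1.eq]
        _ = 1 := by
            rw [← mul_assoc, mul_assoc (Equiv.swap a b * Equiv.swap a b),
              Equiv.swap_mul_self, Equiv.swap_mul_self, one_mul]
    have hwne : w ≠ 1 := by
      intro e
      have : w a = a := by rw [e]; rfl
      rw [hwdef, Equiv.Perm.mul_apply, Equiv.swap_apply_of_ne_of_ne hac had,
        Equiv.swap_apply_left] at this
      exact hab this.symm
    refine ⟨⟨w, Equiv.Perm.mem_alternatingGroup.mpr hwsign⟩, ?_, ?_⟩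
    · rw [Subgroup.orderOf_mk]
      exact orderOf_eq_prime (by rw [sq]; exact hwsq) hwne
    · exact Subtype.ext (by simpa using hcomm.eq)
  · -- support is large: at least 4 disjoint 3-cycles
    have hscard : 10 ≤ σ.support.card := by omega
    obtain ⟨a1, ha1, -⟩ := pick (s := σ.support) (t := ∅)
      (by rw [Finset.card_empty]; omega)
    obtain ⟨a2, ha2, ht1⟩ := pick (s := σ.support) (t := {a1, σ a1, σ (σ a1)})
      (by have := card_triple a1 (σ a1) (σ (σ a1)); omega)
    obtain ⟨a3, ha3, ht2⟩ := pick (s := σ.support)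
      (t := {a1, σ a1, σ (σ a1)} ∪ {a2, σ a2, σ (σ a2)})
      (by
        have h1 := card_triple a1 (σ a1) (σ (σ a1))
        have h2 := card_triple a2 (σ a2) (σ (σ a2))
        have h3 := Finset.card_union_le ({a1, σ a1, σ (σ a1)} : Finset (Fin n))
          ({a2, σ a2, σ (σ a2)} : Finset (Fin n))
        omega)
    obtain ⟨a4, ha4, ht3⟩ := pick (s := σ.support)
      (t := ({a1, σ a1, σ (σ a1)} ∪ {a2, σ a2, σ (σ a2)}) ∪ {a3, σ a3, σ (σ a3)})
      (by
        have h1 := card_triple a1 (σ a1) (σ (σ a1))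
        have h2 := card_triple a2 (σ a2) (σ (σ a2))
        have h3 := card_triple a3 (σ a3) (σ (σ a3))
        have h4 := Finset.card_union_le ({a1, σ a1, σ (σ a1)} : Finset (Fin n))
          ({a2, σ a2, σ (σ a2)} : Finset (Fin n))
        have h5 := Finset.card_union_le
          (({a1, σ a1, σ (σ a1)} : Finset (Fin n)) ∪ {a2, σ a2, σ (σ a2)})
          ({a3, σ a3, σ (σ a3)} : Finset (Fin n))
        omega)
    simp only [Finset.mem_union, Finset.mem_insert, Finset.mem_singleton, not_or]
      at ht1 ht2 ht3
    rw [Equiv.Perm.mem_support] at ha1 ha2 ha3 ha4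
    have n12 : Nice σ a1 a2 := ⟨hσy, ha1, ha2, fun e => ht1.1 e.symm,
      fun e => ht1.2.1 e.symm, fun e => ht1.2.2 e.symm⟩
    have n13 : Nice σ a1 a3 := ⟨hσy, ha1, ha3, fun e => ht2.1.1 e.symm,
      fun e => ht2.1.2.1 e.symm, fun e => ht2.1.2.2 e.symm⟩
    have n23 : Nice σ a2 a3 := ⟨hσy, ha2, ha3, fun e => ht2.2.1 e.symm,
      fun e => ht2.2.2.1 e.symm, fun e => ht2.2.2.2 e.symm⟩
    have n14 : Nice σ a1 a4 := ⟨hσy, ha1, ha4, fun e => ht3.1.1.1 e.symm,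
      fun e => ht3.1.1.2.1 e.symm, fun e => ht3.1.1.2.2 e.symm⟩
    have n24 : Nice σ a2 a4 := ⟨hσy, ha2, ha4, fun e => ht3.1.2.1 e.symm,
      fun e => ht3.1.2.2.1 e.symm, fun e => ht3.1.2.2.2 e.symm⟩
    have n34 : Nice σ a3 a4 := ⟨hσy, ha3, ha4, fun e => ht3.2.1 e.symm,
      fun e => ht3.2.2.1 e.symm, fun e => ht3.2.2.2 e.symm⟩
    set w : Equiv.Perm (Fin n) := pp σ a1 a2 * pp σ a3 a4 with hwdef
    have hwsign : Equiv.Perm.sign w = 1 := by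
      rw [hwdef, map_mul, n12.pp_sign, n34.pp_sign]; norm_num
    have hcomm : Commute w σ := (n12.pp_comm).mul_left (n34.pp_comm)
    have hdisj : Equiv.Perm.Disjoint (pp σ a1 a2) (pp σ a3 a4) :=
      pp_disjoint n13 n14 n23 n24
    have hwsq : w * w = 1 := by
      calc w * w = pp σ a1 a2 * (pp σ a3 a4 * pp σ a1 a2) * pp σ a3 a4 := by
            rw [hwdef]; group
        _ = pp σ a1 a2 * (pp σ a1 a2 * pp σ a3 a4) * pp σ a3 a4 := by
            rw [hdisj.commute.eq]
        _ = 1 := by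
            rw [← mul_assoc, mul_assoc (pp σ a1 a2 * pp σ a1 a2),
              n12.pp_sq, n34.pp_sq, one_mul]
    have hwne : w ≠ 1 := by
      intro e
      have h1 : w a1 = a1 := by rw [e]; rfl
      have h2 : pp σ a3 a4 a1 = a1 :=
        pp_fix σ n13.h0 n13.ab1 n13.ab2 n14.h0 n14.ab1 n14.ab2
      rw [hwdef, Equiv.Perm.mul_apply, h2, n12.pp_a] at h1
      exact n12.h0 h1.symm
    refine ⟨⟨w, Equiv.Perm.mem_alternatingGroup.mpr hwsign⟩, ?_, ?_⟩
    · rw [Subgroup.orderOf_mk]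
      exact orderOf_eq_prime (by rw [sq]; exact hwsq) hwne
    · exact Subtype.ext (by simpa using hcomm.eq)
end

section
/- Let n ≥ 5 with n ∉ {5, 6, 7, 9, 10}, and let x be an element of order 3 in the alternating group Alt_n. Then the centralizer of x in Alt_n has even order (even cardinality). -/
open Equiv Equiv.Perm

section Aux

variable {α : Type*} [Fintype α] [DecidableEq α]

private lemma cube_apply {g : Perm α} (hg : g ^ 3 = 1) (z : α) : g (g (g z)) = z := by
  have := Equiv.Perm.ext_iff.mp hg z
  simpa [pow_succ, Equiv.Perm.mul_apply] using this

private lemma orbit_distinct {g : Perm α} (hg : g ^ 3 = 1) {a : α} (ha : g a ≠ a) :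
    g (g a) ≠ a ∧ g (g a) ≠ g a := by
  constructor
  · intro h
    have := congrArg g h
    rw [cube_apply hg] at this
    exact ha this.symm
  · intro h
    exact ha (g.injective h)

private lemma orbit_sep {g : Perm α} (hg : g ^ 3 = 1) {a b : α}
    (h1 : b ≠ a) (h2 : b ≠ g a) (h3 : b ≠ g (g a)) :
    b ≠ a ∧ b ≠ g a ∧ b ≠ g (g a) ∧
    g b ≠ a ∧ g b ≠ g a ∧ g b ≠ g (g a) ∧
    g (g b) ≠ a ∧ g (g b) ≠ g a ∧ g (g b) ≠ g (g a) := by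
  refine ⟨h1, h2, h3, ?_, fun h => h1 (g.injective h), fun h => h2 (g.injective h),
    ?_, ?_, fun h => h1 (g.injective (g.injective h))⟩
  · intro h
    have := cube_apply hg b
    rw [h] at this
    exact h3 this.symm
  · intro h
    have := congrArg g h
    rw [cube_apply hg] at this
    exact h2 this
  · intro h
    have h' := g.injective h
    have := cube_apply hg b
    rw [h'] at this
    exact h3 this.symm

private lemma disjoint_swap {u v w z : α} (h1 : w ≠ u) (h2 : w ≠ v) (h3 : z ≠ u) (h4 : z ≠ v) :
    Equiv.Perm.Disjoint (Equiv.swap u v) (Equiv.swap w z) := by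
  intro t
  by_cases h : t = u ∨ t = v
  · right
    rcases h with rfl | rfl
    · exact swap_apply_of_ne_of_ne h1.symm h3.symm
    · exact swap_apply_of_ne_of_ne h2.symm h4.symm
  · left
    push_neg at h
    exact swap_apply_of_ne_of_ne h.1 h.2

private lemma sigma_spec {g : Perm α} (hg : g ^ 3 = 1) {a b : α}
    (ha : g a ≠ a) (hb : g b ≠ b) (h1 : b ≠ a) (h2 : b ≠ g a) (h3 : b ≠ g (g a)) :
    ∃ σ : Perm α, σ * σ = 1 ∧ Commute g σ ∧ Equiv.Perm.sign σ = -1 ∧ σ a = b ∧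
      σ.support ⊆ ({a, b, g a, g b, g (g a), g (g b)} : Finset α) := by
  obtain ⟨ha2, ha3⟩ := orbit_distinct hg ha
  obtain ⟨hb2, hb3⟩ := orbit_distinct hg hb
  obtain ⟨s1, s2, s3, s4, s5, s6, s7, s8, s9⟩ := orbit_sep hg h1 h2 h3
  set t1 := Equiv.swap a b with ht1
  set t2 := Equiv.swap (g a) (g b) with ht2
  set t3 := Equiv.swap (g (g a)) (g (g b)) with ht3
  have d12 : Equiv.Perm.Disjoint t1 t2 := disjoint_swap ha (Ne.symm s2) s4 hb
  have d13 : Equiv.Perm.Disjoint t1 t3 := disjoint_swap ha2 (Ne.symm s3) s7 hb2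
  have d23 : Equiv.Perm.Disjoint t2 t3 := disjoint_swap ha3 (Ne.symm s6) s8 hb3
  have c12 : Commute t1 t2 := d12.commute
  have c13 : Commute t1 t3 := d13.commute
  have c23 : Commute t2 t3 := d23.commute
  refine ⟨t1 * t2 * t3, ?_, ?_, ?_, ?_, ?_⟩
  · have hA : Commute t3 (t1 * t2) := (c13.symm).mul_right c23.symm
    calc t1 * t2 * t3 * (t1 * t2 * t3) = (t1 * t2) * (t1 * t2) * (t3 * t3) :=
          hA.mul_mul_mul_comm _ _
      _ = t1 * t1 * (t2 * t2) * (t3 * t3) := by rw [c12.symm.mul_mul_mul_comm]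
      _ = 1 := by simp [ht1, ht2, ht3, Equiv.swap_mul_self]
  · have e1 : g * t1 = t2 * g := mul_swap_eq_swap_mul g a b
    have e2 : g * t2 = t3 * g := mul_swap_eq_swap_mul g (g a) (g b)
    have e3 : g * t3 = t1 * g := by
      have := mul_swap_eq_swap_mul g (g (g a)) (g (g b))
      rwa [cube_apply hg, cube_apply hg] at this
    have h23 : Commute t1 (t2 * t3) := c12.mul_right c13
    show g * (t1 * t2 * t3) = t1 * t2 * t3 * g
    calc g * (t1 * t2 * t3) = g * t1 * t2 * t3 := by simp only [mul_assoc]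
      _ = t2 * g * t2 * t3 := by rw [e1]
      _ = t2 * (g * t2) * t3 := by simp only [mul_assoc]
      _ = t2 * (t3 * g) * t3 := by rw [e2]
      _ = t2 * t3 * (g * t3) := by simp only [mul_assoc]
      _ = t2 * t3 * (t1 * g) := by rw [e3]
      _ = t2 * t3 * t1 * g := by simp only [mul_assoc]
      _ = t1 * (t2 * t3) * g := by rw [h23.eq]
      _ = t1 * t2 * t3 * g := by simp only [mul_assoc]
  · simp [ht1, ht2, ht3, Equiv.Perm.sign_swap, Ne.symm h1, Ne.symm s5, Ne.symm s9]
  · simp only [Equiv.Perm.mul_apply]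
    rw [ht3, swap_apply_of_ne_of_ne (Ne.symm ha2) (Ne.symm s7),
      ht2, swap_apply_of_ne_of_ne (Ne.symm ha) (Ne.symm s4),
      ht1, swap_apply_left]
  · intro z hz
    have hsub := Equiv.Perm.support_mul_le (t1 * t2) t3 hz
    simp only [Finset.sup_eq_union, Finset.mem_union] at hsub
    have hz3 : z ∈ t1.support ∪ t2.support ∪ t3.support := by
      rcases hsub with h | h
      · have := Equiv.Perm.support_mul_le t1 t2 h
        simp only [Finset.sup_eq_union] at this
        exact Finset.mem_union.mpr (Or.inl this)
      · exact Finset.mem_union.mpr (Or.inr h)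
    rw [ht1, ht2, ht3, support_swap (Ne.symm h1), support_swap (Ne.symm s5),
      support_swap (Ne.symm s9)] at hz3
    simp only [Finset.mem_union, Finset.mem_insert, Finset.mem_singleton] at hz3
    simp only [Finset.mem_insert, Finset.mem_singleton]
    tauto

private lemma even_card_centralizer {n : ℕ} (x : alternatingGroup (Fin n))
    (y : Equiv.Perm (Fin n)) (hy2 : y * y = 1) (hyne : y ≠ 1)
    (hsign : Equiv.Perm.sign y = 1)
    (hcomm : Commute (x : Equiv.Perm (Fin n)) y) :
    Even (Nat.card (Subgroup.centralizer {x})) := by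
  have hymem : y ∈ alternatingGroup (Fin n) := Equiv.Perm.mem_alternatingGroup.mpr hsign
  have hc : (⟨y, hymem⟩ : alternatingGroup (Fin n)) ∈ Subgroup.centralizer {x} := by
    rw [Subgroup.mem_centralizer_singleton_iff]
    exact Subtype.ext hcomm.eq.symm
  set z : Subgroup.centralizer {x} := ⟨⟨y, hymem⟩, hc⟩ with hz
  have hz2 : z ^ 2 = 1 := by
    rw [pow_two]
    exact Subtype.ext (Subtype.ext hy2)
  have hzne : z ≠ 1 := by
    intro h
    apply hyne
    exact congrArg (fun w => ((w : Subgroup.centralizer {x}) : alternatingGroup (Fin n)).1) h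
  have horder : orderOf z = 2 := orderOf_eq_prime hz2 hzne
  rw [even_iff_two_dvd, ← horder]
  exact orderOf_dvd_natCard z

end Aux

set_option maxHeartbeats 1000000 in
/-- For `n ≥ 5` with `n ∉ {5, 6, 7, 9, 10}`, every element of order 3 in the
alternating group `Alt_n` has centralizer of even order. -/
theorem alternatingGroup_orderThree_centralizer_even
    (n : ℕ) (hn : 5 ≤ n) (hn' : n ∉ ({5, 6, 7, 9, 10} : Set ℕ))
    (x : alternatingGroup (Fin n)) (hx : orderOf x = 3) :
    Even (Nat.card (Subgroup.centralizer {x})) := by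
  set g : Equiv.Perm (Fin n) := (x : Equiv.Perm (Fin n)) with hgdef
  clear_value g
  have hog : orderOf g = 3 := by
    rw [hgdef, ← hx]
    exact orderOf_injective (alternatingGroup (Fin n)).subtype Subtype.coe_injective x
  have hg3 : g ^ 3 = 1 := by rw [← hog]; exact pow_orderOf_eq_one g
  have hgne : g ≠ 1 := by
    intro h
    rw [h, orderOf_one] at hog
    omega
  -- cycle type facts
  have hct : ∀ r ∈ g.cycleType, r = 3 := by
    intro r hr
    have h2 := Equiv.Perm.two_le_of_mem_cycleType hr
    have hdvd : r ∣ 3 := by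
      rw [← hog, ← Equiv.Perm.lcm_cycleType]
      exact Multiset.dvd_lcm hr
    rcases (Nat.dvd_prime Nat.prime_three).mp hdvd with h | h <;> omega
  have hrep : g.cycleType = Multiset.replicate (Multiset.card g.cycleType) 3 :=
    Multiset.eq_replicate.mpr ⟨rfl, hct⟩
  have hsum : g.support.card = 3 * Multiset.card g.cycleType := by
    rw [← Equiv.Perm.sum_cycleType, hrep, Multiset.sum_replicate, smul_eq_mul, mul_comm,
      Multiset.card_replicate]
  have hk1 : 1 ≤ Multiset.card g.cycleType := by
    rcases Nat.eq_zero_or_pos (Multiset.card g.cycleType) with h | h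
    · exact absurd (Equiv.Perm.card_cycleType_eq_zero.mp h) hgne
    · exact h
  set s := g.support.card with hs
  have hsle : s ≤ n := by
    have := Finset.card_le_univ g.support
    simpa using this
  have hsmod : s % 3 = 0 := by omega
  have hs3 : 3 ≤ s := by omega
  simp only [Set.mem_insert_iff, Set.mem_singleton_iff, not_or] at hn'
  obtain ⟨h5, h6, h7, h9, h10⟩ := hn'
  -- fixed point set
  have hcompl : g.supportᶜ.card = n - s := by
    rw [Finset.card_compl]
    simp [hs]
  have hmemc : ∀ t : Fin n, t ∈ g.supportᶜ → g t = t := by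
    intro t ht
    rw [Finset.mem_compl, Equiv.Perm.notMem_support] at ht
    exact ht
  rcases (by omega : 4 ≤ n - s ∨ (6 ≤ s ∧ 2 ≤ n - s) ∨ 12 ≤ s) with hA | hB | hC
  · -- Case A: at least 4 fixed points
    obtain ⟨a, haF⟩ := Finset.card_pos.mp (show 0 < g.supportᶜ.card by omega)
    obtain ⟨b, hbF⟩ := Finset.card_pos.mp (show 0 < (g.supportᶜ.erase a).card by
      rw [Finset.card_erase_of_mem haF]; omega)
    obtain ⟨c, hcF⟩ := Finset.card_pos.mp
      (show 0 < ((g.supportᶜ.erase a).erase b).card by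
        rw [Finset.card_erase_of_mem hbF, Finset.card_erase_of_mem haF]; omega)
    obtain ⟨d, hdF⟩ := Finset.card_pos.mp
      (show 0 < (((g.supportᶜ.erase a).erase b).erase c).card by
        rw [Finset.card_erase_of_mem hcF, Finset.card_erase_of_mem hbF,
          Finset.card_erase_of_mem haF]; omega)
    simp only [Finset.mem_erase] at hbF hcF hdF
    obtain ⟨hba, hbF⟩ := hbF
    obtain ⟨hcb, hca, hcF⟩ := hcF
    obtain ⟨hdc, hdb, hda, hdF⟩ := hdF
    have hdsw : Equiv.Perm.Disjoint (Equiv.swap a b) (Equiv.swap c d) :=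
      disjoint_swap hca hcb hda hdb
    have hgfix : ∀ t : Fin n, t = a ∨ t = b ∨ t = c ∨ t = d → g t = t := by
      rintro t (rfl | rfl | rfl | rfl)
      · exact hmemc _ haF
      · exact hmemc _ hbF
      · exact hmemc _ hcF
      · exact hmemc _ hdF
    have hdg1 : Equiv.Perm.Disjoint g (Equiv.swap a b) := by
      intro t
      by_cases h : t = a ∨ t = b
      · left; exact hgfix t (by tauto)
      · right; push_neg at h; exact Equiv.swap_apply_of_ne_of_ne h.1 h.2
    have hdg2 : Equiv.Perm.Disjoint g (Equiv.swap c d) := by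
      intro t
      by_cases h : t = c ∨ t = d
      · left; exact hgfix t (by tauto)
      · right; push_neg at h; exact Equiv.swap_apply_of_ne_of_ne h.1 h.2
    refine even_card_centralizer x (Equiv.swap a b * Equiv.swap c d) ?_ ?_ ?_ ?_
    · calc Equiv.swap a b * Equiv.swap c d * (Equiv.swap a b * Equiv.swap c d)
          = Equiv.swap a b * Equiv.swap a b * (Equiv.swap c d * Equiv.swap c d) :=
            hdsw.commute.symm.mul_mul_mul_comm _ _
        _ = 1 := by simp [Equiv.swap_mul_self]
    · intro h
      have := Equiv.Perm.ext_iff.mp h a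
      simp only [Equiv.Perm.mul_apply, Equiv.Perm.one_apply] at this
      rw [Equiv.swap_apply_of_ne_of_ne hca.symm hda.symm, Equiv.swap_apply_left] at this
      exact hba this
    · simp [Equiv.Perm.sign_swap, hba.symm, hdc.symm]
    · rw [← hgdef]; exact (hdg1.commute).mul_right hdg2.commute
  · -- Case B: support ≥ 6 and at least 2 fixed points
    obtain ⟨hB6, hB2⟩ := hB
    obtain ⟨a, haS⟩ := Finset.card_pos.mp (show 0 < g.support.card by omega)
    have horbcard : ({a, g a, g (g a)} : Finset (Fin n)).card ≤ 3 := by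
      apply le_trans (Finset.card_insert_le _ _)
      have := Finset.card_insert_le (g a) ({g (g a)} : Finset (Fin n))
      simp at this ⊢
      omega
    obtain ⟨b, hbS⟩ := Finset.card_pos.mp
      (show 0 < (g.support \ ({a, g a, g (g a)} : Finset (Fin n))).card by
        have := Finset.card_le_card_sdiff_add_card (s := g.support)
          (t := ({a, g a, g (g a)} : Finset (Fin n)))
        omega)
    rw [Finset.mem_sdiff] at hbS
    obtain ⟨hbS, hbO⟩ := hbS
    simp only [Finset.mem_insert, Finset.mem_singleton, not_or] at hbO
    obtain ⟨hb1, hb2, hb3⟩ := hbO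
    have haX : g a ≠ a := Equiv.Perm.mem_support.mp haS
    have hbX : g b ≠ b := Equiv.Perm.mem_support.mp hbS
    obtain ⟨σ, hσ2, hσc, hσs, hσa, hσsup⟩ := sigma_spec hg3 haX hbX hb1 hb2 hb3
    -- two fixed points
    obtain ⟨c, hcF⟩ := Finset.card_pos.mp (show 0 < g.supportᶜ.card by omega)
    obtain ⟨d, hdF⟩ := Finset.card_pos.mp (show 0 < (g.supportᶜ.erase c).card by
      rw [Finset.card_erase_of_mem hcF]; omega)
    rw [Finset.mem_erase] at hdF
    obtain ⟨hdc, hdF⟩ := hdF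
    have hsupmem : ∀ t : Fin n, t ∈ ({a, b, g a, g b, g (g a), g (g b)} : Finset (Fin n)) →
        t ∈ g.support := by
      intro t ht
      simp only [Finset.mem_insert, Finset.mem_singleton] at ht
      rcases ht with rfl | rfl | rfl | rfl | rfl | rfl
      · exact haS
      · exact hbS
      · exact Equiv.Perm.apply_mem_support.mpr haS
      · exact Equiv.Perm.apply_mem_support.mpr hbS
      · exact Equiv.Perm.apply_mem_support.mpr (Equiv.Perm.apply_mem_support.mpr haS)
      · exact Equiv.Perm.apply_mem_support.mpr (Equiv.Perm.apply_mem_support.mpr hbS)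
    have hdisj : Equiv.Perm.Disjoint σ (Equiv.swap c d) := by
      intro t
      by_cases h : t = c ∨ t = d
      · left
        rw [← Equiv.Perm.notMem_support]
        intro hts
        have := hsupmem t (hσsup hts)
        rcases h with rfl | rfl
        · exact (Finset.mem_compl.mp hcF) this
        · exact (Finset.mem_compl.mp hdF) this
      · right; push_neg at h; exact Equiv.swap_apply_of_ne_of_ne h.1 h.2
    have hdg : Equiv.Perm.Disjoint g (Equiv.swap c d) := by
      intro t
      by_cases h : t = c ∨ t = d
      · left
        rcases h with rfl | rfl
        · exact hmemc _ hcF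
        · exact hmemc _ hdF
      · right; push_neg at h; exact Equiv.swap_apply_of_ne_of_ne h.1 h.2
    refine even_card_centralizer x (σ * Equiv.swap c d) ?_ ?_ ?_ ?_
    · calc σ * Equiv.swap c d * (σ * Equiv.swap c d)
          = σ * σ * (Equiv.swap c d * Equiv.swap c d) := hdisj.commute.symm.mul_mul_mul_comm _ _
        _ = 1 := by rw [hσ2, Equiv.swap_mul_self, one_mul]
    · intro h
      have hac : a ≠ c := by
        intro h'; exact (Finset.mem_compl.mp hcF) (h' ▸ haS)
      have had : a ≠ d := by
        intro h'; exact (Finset.mem_compl.mp hdF) (h' ▸ haS)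
      have := Equiv.Perm.ext_iff.mp h a
      simp only [Equiv.Perm.mul_apply, Equiv.Perm.one_apply] at this
      rw [Equiv.swap_apply_of_ne_of_ne hac had, hσa] at this
      exact hb1 this
    · simp [Equiv.Perm.sign_swap, hdc.symm, hσs]
    · rw [← hgdef]; exact hσc.mul_right hdg.commute
  · -- Case C: support ≥ 12
    obtain ⟨a, haS⟩ := Finset.card_pos.mp (show 0 < g.support.card by omega)
    have horb : ∀ u : Fin n, ({u, g u, g (g u)} : Finset (Fin n)).card ≤ 3 := by
      intro u
      apply le_trans (Finset.card_insert_le _ _)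
      have := Finset.card_insert_le (g u) ({g (g u)} : Finset (Fin n))
      simp at this ⊢
      omega
    obtain ⟨b, hbS⟩ := Finset.card_pos.mp
      (show 0 < (g.support \ ({a, g a, g (g a)} : Finset (Fin n))).card by
        have h1 := Finset.card_le_card_sdiff_add_card (s := g.support)
          (t := ({a, g a, g (g a)} : Finset (Fin n)))
        have h2 := horb a
        omega)
    rw [Finset.mem_sdiff] at hbS
    obtain ⟨hbS, hbO⟩ := hbS
    simp only [Finset.mem_insert, Finset.mem_singleton, not_or] at hbO
    obtain ⟨hb1, hb2, hb3⟩ := hbO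
    obtain ⟨c, hcS⟩ := Finset.card_pos.mp
      (show 0 < (g.support \ (({a, g a, g (g a)} : Finset (Fin n)) ∪
          ({b, g b, g (g b)} : Finset (Fin n)))).card by
        have h1 := Finset.card_le_card_sdiff_add_card (s := g.support)
          (t := ({a, g a, g (g a)} : Finset (Fin n)) ∪ ({b, g b, g (g b)} : Finset (Fin n)))
        have h2 := Finset.card_union_le ({a, g a, g (g a)} : Finset (Fin n))
          ({b, g b, g (g b)} : Finset (Fin n))
        have h3 := horb a
        have h4 := horb b
        omega)
    rw [Finset.mem_sdiff] at hcS
    obtain ⟨hcS, hcO⟩ := hcS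
    simp only [Finset.mem_union, Finset.mem_insert, Finset.mem_singleton, not_or] at hcO
    obtain ⟨⟨hc1, hc2, hc3⟩, hc4, hc5, hc6⟩ := hcO
    obtain ⟨d, hdS⟩ := Finset.card_pos.mp
      (show 0 < (g.support \ ((({a, g a, g (g a)} : Finset (Fin n)) ∪
          ({b, g b, g (g b)} : Finset (Fin n))) ∪
          ({c, g c, g (g c)} : Finset (Fin n)))).card by
        have h1 := Finset.card_le_card_sdiff_add_card (s := g.support)
          (t := (({a, g a, g (g a)} : Finset (Fin n)) ∪ ({b, g b, g (g b)} : Finset (Fin n))) ∪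
            ({c, g c, g (g c)} : Finset (Fin n)))
        have h2 := Finset.card_union_le (({a, g a, g (g a)} : Finset (Fin n)) ∪
          ({b, g b, g (g b)} : Finset (Fin n))) ({c, g c, g (g c)} : Finset (Fin n))
        have h2' := Finset.card_union_le ({a, g a, g (g a)} : Finset (Fin n))
          ({b, g b, g (g b)} : Finset (Fin n))
        have h3 := horb a
        have h4 := horb b
        have h5 := horb c
        omega)
    rw [Finset.mem_sdiff] at hdS
    obtain ⟨hdS, hdO⟩ := hdS
    simp only [Finset.mem_union, Finset.mem_insert, Finset.mem_singleton, not_or] at hdO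
    obtain ⟨⟨⟨hd1, hd2, hd3⟩, hd4, hd5, hd6⟩, hd7, hd8, hd9⟩ := hdO
    have haX : g a ≠ a := Equiv.Perm.mem_support.mp haS
    have hbX : g b ≠ b := Equiv.Perm.mem_support.mp hbS
    have hcX : g c ≠ c := Equiv.Perm.mem_support.mp hcS
    have hdX : g d ≠ d := Equiv.Perm.mem_support.mp hdS
    obtain ⟨σ₁, hσ₁2, hσ₁c, hσ₁s, hσ₁a, hσ₁sup⟩ := sigma_spec hg3 haX hbX hb1 hb2 hb3
    obtain ⟨σ₂, hσ₂2, hσ₂c, hσ₂s, hσ₂a, hσ₂sup⟩ := sigma_spec hg3 hcX hdX hd7 hd8 hd9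
    obtain ⟨ca1, ca2, ca3, ca4, ca5, ca6, ca7, ca8, ca9⟩ := orbit_sep hg3 hc1 hc2 hc3
    obtain ⟨cb1, cb2, cb3, cb4, cb5, cb6, cb7, cb8, cb9⟩ := orbit_sep hg3 hc4 hc5 hc6
    obtain ⟨da1, da2, da3, da4, da5, da6, da7, da8, da9⟩ := orbit_sep hg3 hd1 hd2 hd3
    obtain ⟨db1, db2, db3, db4, db5, db6, db7, db8, db9⟩ := orbit_sep hg3 hd4 hd5 hd6
    have hsets : Disjoint ({c, d, g c, g d, g (g c), g (g d)} : Finset (Fin n))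
        ({a, b, g a, g b, g (g a), g (g b)} : Finset (Fin n)) := by
      simp only [Finset.disjoint_left, Finset.mem_insert, Finset.mem_singleton]
      rintro t (rfl | rfl | rfl | rfl | rfl | rfl) (h | h | h | h | h | h)
      exacts [ca1 h, cb1 h, ca2 h, cb2 h, ca3 h, cb3 h,
        da1 h, db1 h, da2 h, db2 h, da3 h, db3 h,
        ca4 h, cb4 h, ca5 h, cb5 h, ca6 h, cb6 h,
        da4 h, db4 h, da5 h, db5 h, da6 h, db6 h,
        ca7 h, cb7 h, ca8 h, cb8 h, ca9 h, cb9 h,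
        da7 h, db7 h, da8 h, db8 h, da9 h, db9 h]
    have hdisj : Equiv.Perm.Disjoint σ₁ σ₂ := by
      rw [Equiv.Perm.disjoint_iff_disjoint_support]
      exact Finset.disjoint_of_subset_left hσ₁sup
        (Finset.disjoint_of_subset_right hσ₂sup hsets.symm)
    refine even_card_centralizer x (σ₁ * σ₂) ?_ ?_ ?_ ?_
    · calc σ₁ * σ₂ * (σ₁ * σ₂) = σ₁ * σ₁ * (σ₂ * σ₂) := hdisj.commute.symm.mul_mul_mul_comm _ _
        _ = 1 := by rw [hσ₁2, hσ₂2, one_mul]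
    · intro h
      have haσ₂ : σ₂ a = a := by
        rw [← Equiv.Perm.notMem_support]
        intro hmem
        have := hσ₂sup hmem
        simp only [Finset.mem_insert, Finset.mem_singleton] at this
        rcases this with h | h | h | h | h | h
        exacts [hc1 h.symm, da1 h.symm, ca4 h.symm, da4 h.symm, ca7 h.symm, da7 h.symm]
      have := Equiv.Perm.ext_iff.mp h a
      simp only [Equiv.Perm.mul_apply, Equiv.Perm.one_apply] at this
      rw [haσ₂, hσ₁a] at this
      exact hb1 this
    · simp [hσ₁s, hσ₂s]
    · rw [← hgdef]; exact hσ₁c.mul_right hσ₂c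
end

section
/- For each n ∈ {5, 6, 7, 9, 10}, there exists an element x of order 3 in the alternating group Alt_n whose centralizer in Alt_n has odd order (odd cardinality). -/
set_option maxRecDepth 20000

open Equiv Equiv.Perm

private lemma sextet_ne {α : Type*} [DecidableEq α] {x g : Equiv.Perm α}
    (hgg : ∀ a, g (g a) = a) (hxxx : ∀ a, x (x (x a)) = a)
    (hcm : ∀ a, g (x a) = x (g a))
    (hA : ∀ c, g c ≠ c → x c ≠ c)
    {c : α} (h : g c ≠ c) :
    c ≠ x c ∧ c ≠ x (x c) ∧ x c ≠ x (x c) ∧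
    c ≠ g c ∧ c ≠ x (g c) ∧ c ≠ x (x (g c)) ∧
    x c ≠ g c ∧ x c ≠ x (g c) ∧ x c ≠ x (x (g c)) ∧
    x (x c) ≠ g c ∧ x (x c) ≠ x (g c) ∧ x (x c) ≠ x (x (g c)) ∧
    g c ≠ x (g c) ∧ g c ≠ x (x (g c)) ∧ x (g c) ≠ x (x (g c)) := by
  have xinj := x.injective
  have d01 : x c ≠ c := hA c h
  have d02 : x (x c) ≠ c := by
    intro he
    have h2 := congrArg x he
    rw [hxxx] at h2
    exact d01 h2.symm
  have dgx : g c ≠ x c := by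
    intro he
    have h2 : g (g c) = g (x c) := congrArg g he
    rw [hgg, hcm, he] at h2
    exact d02 h2.symm
  have dgxx : g c ≠ x (x c) := by
    intro he
    have h2 : g (g c) = g (x (x c)) := congrArg g he
    rw [hgg, hcm, hcm, he, hxxx] at h2
    exact d01 h2.symm
  have hgc : g (g c) ≠ g c := by rw [hgg]; exact fun he => h he.symm
  have e01 : x (g c) ≠ g c := hA (g c) hgc
  have e02 : x (x (g c)) ≠ g c := by
    intro he
    have h2 := congrArg x he
    rw [hxxx] at h2
    exact e01 h2.symm
  have n04 : c ≠ x (g c) := by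
    intro he
    have h2 := congrArg x (congrArg x he)
    rw [hxxx] at h2
    exact dgxx h2.symm
  have n05 : c ≠ x (x (g c)) := by
    intro he
    have h2 := congrArg x he
    rw [hxxx] at h2
    exact dgx h2.symm
  refine ⟨d01.symm, d02.symm, fun he => d01 (xinj he).symm, fun he => h he.symm,
    n04, n05, fun he => dgx he.symm, fun he => (fun h3 => h h3.symm) (xinj he),
    fun he => n04 (xinj he), fun he => dgxx he.symm,
    fun he => dgx (xinj he).symm, fun he => (fun h3 => h h3.symm) (xinj (xinj he)),
    e01.symm, e02.symm, fun he => e01 (xinj he).symm⟩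

lemma key_aux {α : Type*} [Fintype α] [DecidableEq α] (x g : Equiv.Perm α)
    (hcard : Fintype.card α < 12)
    (hc : g * x = x * g) (hg2 : g ^ 2 = 1)
    (hx3 : x ^ 3 = 1)
    (hA : ∀ c, g c ≠ c → x c ≠ c)
    (hsign : Equiv.Perm.sign g = 1) : g = 1 := by
  have hgg : ∀ a, g (g a) = a := fun a => by
    have : (g ^ 2) a = (1 : Equiv.Perm α) a := by rw [hg2]
    simpa [pow_succ, Equiv.Perm.mul_apply] using this
  have hxxx : ∀ a, x (x (x a)) = a := fun a => by
    have : (x ^ 3) a = (1 : Equiv.Perm α) a := by rw [hx3]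
    simpa [pow_succ, Equiv.Perm.mul_apply] using this
  have hcm : ∀ a, g (x a) = x (g a) := fun a => by
    have := DFunLike.congr_fun hc a
    simpa [Equiv.Perm.mul_apply] using this
  by_contra hne
  obtain ⟨a, ha⟩ : ∃ a, g a ≠ a := by
    by_contra hco
    push_neg at hco
    exact hne (Equiv.ext hco)
  classical
  set S : α → Finset α := fun c =>
    {c, x c, x (x c), g c, x (g c), x (x (g c))} with hS
  have hmemS : ∀ c u, u ∈ S c ↔
      (u = c ∨ u = x c ∨ u = x (x c) ∨ u = g c ∨ u = x (g c) ∨ u = x (x (g c))) := by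
    intro c u; simp [hS]
  have card6 : ∀ c, g c ≠ c → (S c).card = 6 := by
    intro c h
    obtain ⟨n01, n02, n12, n03, n04, n05, n13, n14, n15, n23, n24, n25, n34, n35, n45⟩ :=
      sextet_ne hgg hxxx hcm hA h
    rw [hS]
    rw [Finset.card_insert_of_notMem (by simp [n01, n02, n03, n04, n05]),
      Finset.card_insert_of_notMem (by simp [n12, n13, n14, n15]),
      Finset.card_insert_of_notMem (by simp [n23, n24, n25]),
      Finset.card_insert_of_notMem (by simp [n34, n35]),
      Finset.card_insert_of_notMem (by simp [n45]),
      Finset.card_singleton]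
  have clx : ∀ c u, u ∈ S c → x u ∈ S c := by
    intro c u hu
    rw [hmemS] at hu ⊢
    rcases hu with rfl | rfl | rfl | rfl | rfl | rfl
    · tauto
    · tauto
    · rw [hxxx]; tauto
    · tauto
    · tauto
    · rw [hxxx]; tauto
  have clg : ∀ c u, u ∈ S c → g u ∈ S c := by
    intro c u hu
    rw [hmemS] at hu ⊢
    rcases hu with rfl | rfl | rfl | rfl | rfl | rfl
    · tauto
    · rw [hcm]; tauto
    · rw [hcm, hcm]; tauto
    · rw [hgg]; tauto
    · rw [hcm, hgg]; tauto
    · rw [hcm, hcm, hgg]; tauto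
  have hout : ∀ b, b ∉ S a → g b = b := by
    intro b hb
    by_contra hgb
    have hdisj : ∀ u ∈ S b, u ∉ S a := by
      intro u hu hua
      apply hb
      rw [hmemS] at hu
      rcases hu with rfl | he | he | he | he | he
      · exact hua
      · have h1 : b = x (x u) := by rw [he, hxxx]
        rw [h1]; exact clx _ _ (clx _ _ hua)
      · have h1 : b = x u := by rw [he, hxxx]
        rw [h1]; exact clx _ _ hua
      · have h1 : b = g u := by rw [he, hgg]
        rw [h1]; exact clg _ _ hua
      · have h1 : b = g (x (x u)) := by rw [he, hxxx, hgg]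
        rw [h1]; exact clg _ _ (clx _ _ (clx _ _ hua))
      · have h1 : b = g (x u) := by rw [he, hxxx, hgg]
        rw [h1]; exact clg _ _ (clx _ _ hua)
    have hd : Disjoint (S a) (S b) := by
      rw [Finset.disjoint_right]
      exact fun {u} hu hua => hdisj u hu hua
    have h12 : (S a ∪ S b).card = 12 := by
      rw [Finset.card_union_of_disjoint hd, card6 a ha, card6 b hgb]
    have h2 := Finset.card_le_univ (S a ∪ S b)
    rw [h12] at h2
    omega
  obtain ⟨n01, n02, n12, n03, n04, n05, n13, n14, n15, n23, n24, n25, n34, n35, n45⟩ :=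
    sextet_ne hgg hxxx hcm hA ha
  have hg_eq : g = Equiv.swap a (g a) * Equiv.swap (x a) (x (g a)) *
      Equiv.swap (x (x a)) (x (x (g a))) := by
    ext b
    by_cases hb : b ∈ S a
    · rw [hmemS] at hb
      rcases hb with rfl | rfl | rfl | rfl | rfl | rfl
      · rw [Equiv.Perm.mul_apply, Equiv.Perm.mul_apply,
          Equiv.swap_apply_of_ne_of_ne n02 n05,
          Equiv.swap_apply_of_ne_of_ne n01 n04,
          Equiv.swap_apply_left]
      · rw [Equiv.Perm.mul_apply, Equiv.Perm.mul_apply,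
          Equiv.swap_apply_of_ne_of_ne n12 n15,
          Equiv.swap_apply_left,
          Equiv.swap_apply_of_ne_of_ne (Ne.symm n04) (Ne.symm n34), hcm]
      · rw [Equiv.Perm.mul_apply, Equiv.Perm.mul_apply,
          Equiv.swap_apply_left,
          Equiv.swap_apply_of_ne_of_ne (Ne.symm n15) (Ne.symm n45),
          Equiv.swap_apply_of_ne_of_ne (Ne.symm n05) (Ne.symm n35),
          hcm, hcm]
      · rw [Equiv.Perm.mul_apply, Equiv.Perm.mul_apply,
          Equiv.swap_apply_of_ne_of_ne (Ne.symm n23) n35,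
          Equiv.swap_apply_of_ne_of_ne (Ne.symm n13) n34,
          Equiv.swap_apply_right, hgg]
      · rw [Equiv.Perm.mul_apply, Equiv.Perm.mul_apply,
          Equiv.swap_apply_of_ne_of_ne (Ne.symm n24) n45,
          Equiv.swap_apply_right,
          Equiv.swap_apply_of_ne_of_ne (Ne.symm n01) n13,
          hcm, hgg]
      · rw [Equiv.Perm.mul_apply, Equiv.Perm.mul_apply,
          Equiv.swap_apply_right,
          Equiv.swap_apply_of_ne_of_ne (Ne.symm n12) n24,
          Equiv.swap_apply_of_ne_of_ne (Ne.symm n02) n23,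
          hcm, hcm, hgg]
    · have h1 : b ≠ a := fun he => hb (by rw [hmemS]; tauto)
      have h2 : b ≠ x a := fun he => hb (by rw [hmemS]; tauto)
      have h3 : b ≠ x (x a) := fun he => hb (by rw [hmemS]; tauto)
      have h4 : b ≠ g a := fun he => hb (by rw [hmemS]; tauto)
      have h5 : b ≠ x (g a) := fun he => hb (by rw [hmemS]; tauto)
      have h6 : b ≠ x (x (g a)) := fun he => hb (by rw [hmemS]; tauto)
      rw [hout b hb, Equiv.Perm.mul_apply, Equiv.Perm.mul_apply,
        Equiv.swap_apply_of_ne_of_ne h3 h6,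
        Equiv.swap_apply_of_ne_of_ne h2 h5,
        Equiv.swap_apply_of_ne_of_ne h1 h4]
  have hsg : Equiv.Perm.sign g = -1 := by
    rw [hg_eq, map_mul, map_mul, Equiv.Perm.sign_swap n03, Equiv.Perm.sign_swap n14,
      Equiv.Perm.sign_swap n25]
    norm_num
  rw [hsign] at hsg
  exact absurd hsg (by decide)


private lemma order_three_sub {n : ℕ} {x : Equiv.Perm (Fin n)}
    (hsx : x ∈ alternatingGroup (Fin n)) (hx3 : x ^ 3 = 1) (hx1 : x ≠ 1) :
    orderOf (⟨x, hsx⟩ : alternatingGroup (Fin n)) = 3 := by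
  haveI : Fact (Nat.Prime 3) := ⟨by norm_num⟩
  refine orderOf_eq_prime ?_ ?_
  · exact Subtype.ext (by simp [hx3])
  · exact fun h => hx1 (congrArg Subtype.val h)

private lemma odd_centralizer {n : ℕ} {x : Equiv.Perm (Fin n)}
    (hsx : x ∈ alternatingGroup (Fin n))
    (hkey : ∀ g : Equiv.Perm (Fin n), g * x = x * g → g ^ 2 = 1 →
      Equiv.Perm.sign g = 1 → g = 1) :
    Odd (Nat.card (Subgroup.centralizer
      {(⟨x, hsx⟩ : alternatingGroup (Fin n))})) := by
  classical
  set H := Subgroup.centralizer {(⟨x, hsx⟩ : alternatingGroup (Fin n))} with hH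
  haveI : Fintype H := Fintype.ofFinite H
  rw [Nat.card_eq_fintype_card, ← Nat.not_even_iff_odd]
  intro heven
  have h2 : 2 ∣ Fintype.card H := heven.two_dvd
  obtain ⟨g, hg⟩ := exists_prime_orderOf_dvd_card 2 h2
  have hg2 : g ^ 2 = 1 := by rw [← hg]; exact pow_orderOf_eq_one g
  have hg1 : g ≠ 1 := by rintro rfl; simp at hg
  set p : Equiv.Perm (Fin n) := ((g : alternatingGroup (Fin n)) : Equiv.Perm (Fin n)) with hp
  have hp2 : p ^ 2 = 1 := by
    have := congrArg (fun h : H => ((h : alternatingGroup (Fin n)) : Equiv.Perm (Fin n))) hg2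
    simpa [hp] using this
  have hpc : p * x = x * p := by
    have hmem := Subgroup.mem_centralizer_singleton_iff.mp g.2
    have := congrArg (fun z : alternatingGroup (Fin n) => (z : Equiv.Perm (Fin n))) hmem
    simpa [hp] using this
  have hps : Equiv.Perm.sign p = 1 :=
    Equiv.Perm.mem_alternatingGroup.mp (g : alternatingGroup (Fin n)).2
  have hp1 := hkey p hpc hp2 hps
  exact hg1 (Subtype.ext (Subtype.ext hp1))

private def xx5 : Equiv.Perm (Fin 5) := Equiv.swap 0 1 * Equiv.swap 1 2
private def xx6 : Equiv.Perm (Fin 6) :=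
  Equiv.swap 0 1 * Equiv.swap 1 2 * (Equiv.swap 3 4 * Equiv.swap 4 5)
private def xx7 : Equiv.Perm (Fin 7) :=
  Equiv.swap 0 1 * Equiv.swap 1 2 * (Equiv.swap 3 4 * Equiv.swap 4 5)
private def xx9 : Equiv.Perm (Fin 9) :=
  Equiv.swap 0 1 * Equiv.swap 1 2 * (Equiv.swap 3 4 * Equiv.swap 4 5) *
    (Equiv.swap 6 7 * Equiv.swap 7 8)
private def xx10 : Equiv.Perm (Fin 10) :=
  Equiv.swap 0 1 * Equiv.swap 1 2 * (Equiv.swap 3 4 * Equiv.swap 4 5) *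
    (Equiv.swap 6 7 * Equiv.swap 7 8)

private lemma hsx5 : xx5 ∈ alternatingGroup (Fin 5) := by
  rw [Equiv.Perm.mem_alternatingGroup, xx5, map_mul,
    Equiv.Perm.sign_swap (by decide), Equiv.Perm.sign_swap (by decide)]
  norm_num

private lemma hsx6 : xx6 ∈ alternatingGroup (Fin 6) := by
  rw [Equiv.Perm.mem_alternatingGroup, xx6, map_mul, map_mul, map_mul,
    Equiv.Perm.sign_swap (by decide), Equiv.Perm.sign_swap (by decide),
    Equiv.Perm.sign_swap (by decide), Equiv.Perm.sign_swap (by decide)]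
  norm_num

private lemma hsx7 : xx7 ∈ alternatingGroup (Fin 7) := by
  rw [Equiv.Perm.mem_alternatingGroup, xx7, map_mul, map_mul, map_mul,
    Equiv.Perm.sign_swap (by decide), Equiv.Perm.sign_swap (by decide),
    Equiv.Perm.sign_swap (by decide), Equiv.Perm.sign_swap (by decide)]
  norm_num

private lemma hsx9 : xx9 ∈ alternatingGroup (Fin 9) := by
  rw [Equiv.Perm.mem_alternatingGroup, xx9, map_mul, map_mul, map_mul, map_mul, map_mul,
    Equiv.Perm.sign_swap (by decide), Equiv.Perm.sign_swap (by decide),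
    Equiv.Perm.sign_swap (by decide), Equiv.Perm.sign_swap (by decide),
    Equiv.Perm.sign_swap (by decide), Equiv.Perm.sign_swap (by decide)]
  norm_num

private lemma hsx10 : xx10 ∈ alternatingGroup (Fin 10) := by
  rw [Equiv.Perm.mem_alternatingGroup, xx10, map_mul, map_mul, map_mul, map_mul, map_mul,
    Equiv.Perm.sign_swap (by decide), Equiv.Perm.sign_swap (by decide),
    Equiv.Perm.sign_swap (by decide), Equiv.Perm.sign_swap (by decide),
    Equiv.Perm.sign_swap (by decide), Equiv.Perm.sign_swap (by decide)]
  norm_num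

private lemma hkey5 : ∀ g : Equiv.Perm (Fin 5), g * xx5 = xx5 * g → g ^ 2 = 1 →
    Equiv.Perm.sign g = 1 → g = 1 := by
  have D5 : ∀ g : Equiv.Perm (Fin 5), g * xx5 = xx5 * g → g ^ 2 = 1 →
      (g = 1 ∨ g = Equiv.swap 3 4) := by decide
  intro g hcomm hg2 hsgn
  rcases D5 g hcomm hg2 with rfl | rfl
  · rfl
  · rw [Equiv.Perm.sign_swap (by decide)] at hsgn
    exact absurd hsgn (by decide)

private lemma hkey6 : ∀ g : Equiv.Perm (Fin 6), g * xx6 = xx6 * g → g ^ 2 = 1 →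
    Equiv.Perm.sign g = 1 → g = 1 := by
  intro g hcomm hg2 hsgn
  exact key_aux xx6 g (by simp) hcomm hg2 (by decide)
    (fun c _ => (by decide : ∀ c : Fin 6, xx6 c ≠ c) c) hsgn

private lemma hkey7 : ∀ g : Equiv.Perm (Fin 7), g * xx7 = xx7 * g → g ^ 2 = 1 →
    Equiv.Perm.sign g = 1 → g = 1 := by
  have fact7 : ∀ c : Fin 7, xx7 c = c → c = 6 := by decide
  intro g hcomm hg2 hsgn
  refine key_aux xx7 g (by simp) hcomm hg2 (by decide) ?_ hsgn
  intro c hgc hxc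
  have hc6 : c = 6 := fact7 c hxc
  subst hc6
  have e1 := DFunLike.congr_fun hcomm (6 : Fin 7)
  simp only [Equiv.Perm.mul_apply] at e1
  rw [show xx7 (6 : Fin 7) = 6 from by decide] at e1
  exact hgc (fact7 (g 6) e1.symm)

private lemma hkey9 : ∀ g : Equiv.Perm (Fin 9), g * xx9 = xx9 * g → g ^ 2 = 1 →
    Equiv.Perm.sign g = 1 → g = 1 := by
  intro g hcomm hg2 hsgn
  exact key_aux xx9 g (by simp) hcomm hg2 (by decide)
    (fun c _ => (by decide : ∀ c : Fin 9, xx9 c ≠ c) c) hsgn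

private lemma hkey10 : ∀ g : Equiv.Perm (Fin 10), g * xx10 = xx10 * g → g ^ 2 = 1 →
    Equiv.Perm.sign g = 1 → g = 1 := by
  have fact10 : ∀ c : Fin 10, xx10 c = c → c = 9 := by decide
  intro g hcomm hg2 hsgn
  refine key_aux xx10 g (by simp) hcomm hg2 (by decide) ?_ hsgn
  intro c hgc hxc
  have hc9 : c = 9 := fact10 c hxc
  subst hc9
  have e1 := DFunLike.congr_fun hcomm (9 : Fin 10)
  simp only [Equiv.Perm.mul_apply] at e1
  rw [show xx10 (9 : Fin 10) = 9 from by decide] at e1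
  exact hgc (fact10 (g 9) e1.symm)

/-- For each `n ∈ {5, 6, 7, 9, 10}`, the alternating group `Alt_n` contains an
element of order 3 whose centralizer has odd order. -/
theorem alternatingGroup_exists_orderThree_centralizer_odd :
    ∀ n ∈ ({5, 6, 7, 9, 10} : Set ℕ),
      ∃ x : alternatingGroup (Fin n), orderOf x = 3 ∧
        Odd (Nat.card (Subgroup.centralizer {x})) := by
  intro n hn
  simp only [Set.mem_insert_iff, Set.mem_singleton_iff] at hn
  rcases hn with rfl | rfl | rfl | rfl | rfl
  · exact ⟨⟨xx5, hsx5⟩, order_three_sub hsx5 (by decide) (by decide),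
      odd_centralizer hsx5 hkey5⟩
  · exact ⟨⟨xx6, hsx6⟩, order_three_sub hsx6 (by decide) (by decide),
      odd_centralizer hsx6 hkey6⟩
  · exact ⟨⟨xx7, hsx7⟩, order_three_sub hsx7 (by decide) (by decide),
      odd_centralizer hsx7 hkey7⟩
  · exact ⟨⟨xx9, hsx9⟩, order_three_sub hsx9 (by decide) (by decide),
      odd_centralizer hsx9 hkey9⟩
  · exact ⟨⟨xx10, hsx10⟩, order_three_sub hsx10 (by decide) (by decide),
      odd_centralizer hsx10 hkey10⟩
end

section
/- Let G be a finite group in which every normal 3-subgroup is trivial (O_3(G) = 1), and let x ∈ G be an element of order 3 that normalizes no nontrivial 2-subgroup of G (i.e., for every subgroup P of G that is a 2-group, if x normalizes P then P is trivial). If N is a normal subgroup of G whose order is prime to 3, then the order of N is prime to 6 (equivalently, N has odd order). -/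
/-!
An element `x` of order `3` acts by conjugation on the Sylow `2`-subgroups of `N`. Their number
divides `|N|`, which is prime to `3`, so the `3`-group `⟨x⟩` has a fixed point: a Sylow
`2`-subgroup of `N` normalized by `x`. By hypothesis it is trivial, so `|N|` is odd.
-/

open Pointwise

theorem Subgroup.map_subtype_conjAct_smul {G : Type*} [Group G] {N : Subgroup G} [N.Normal]
    (c : ConjAct G) (K : Subgroup N) : (c • K).map N.subtype = c • K.map N.subtype := by
  ext g
  simp only [mem_map, mem_pointwise_smul_iff_inv_smul_mem]
  constructor
  · rintro ⟨n, hn, rfl⟩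
    exact ⟨c⁻¹ • n, hn, rfl⟩
  · rintro ⟨n, hn, hng⟩
    refine ⟨c • n, by rwa [inv_smul_smul], ?_⟩
    rw [subtype_apply, ConjAct.Subgroup.val_conj_smul, ← subtype_apply, hng, smul_inv_smul]

theorem Sylow.exists_forall_smul_eq_of_isPGroup {p q : ℕ} [Fact p.Prime] [Fact q.Prime]
    {H N : Type*} [Group H] [Group N] [Finite N] [MulDistribMulAction H N]
    (hH : IsPGroup p H) (hN : ¬p ∣ Nat.card N) : ∃ P : Sylow q N, ∀ h : H, h • P = P := by
  obtain ⟨P⟩ := (inferInstance : Nonempty (Sylow q N))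
  have hcard : ¬p ∣ Nat.card (Sylow q N) := fun hdvd =>
    hN (hdvd.trans (P.card_dvd_index.trans (Subgroup.index_dvd_card _)))
  exact hH.nonempty_fixed_point_of_prime_not_dvd_card (Sylow q N) hcard

theorem Sylow.exists_mem_normalizer_map_subtype {G : Type*} [Group G] [Finite G]
    {p q : ℕ} [Fact p.Prime] [Fact q.Prime] {N : Subgroup G} [N.Normal]
    (hN : ¬p ∣ Nat.card N) {x : G} {k : ℕ} (hx : orderOf x = p ^ k) :
    ∃ P : Sylow q N,
      x ∈ Subgroup.normalizer (((P : Subgroup N).map N.subtype : Subgroup G) : Set G) := by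
  set c := ConjAct.toConjAct x
  have hc : IsPGroup p (Subgroup.zpowers c) :=
    IsPGroup.of_card (n := k) (by rw [Nat.card_zpowers, MulEquiv.orderOf_eq, hx])
  obtain ⟨P, hP⟩ := exists_forall_smul_eq_of_isPGroup (q := q) hc hN
  refine ⟨P, Subgroup.conjAct_pointwise_smul_iff.mp ?_⟩
  rw [← Subgroup.map_subtype_conjAct_smul, ← Sylow.pointwise_smul_def]
  exact congrArg (fun Q : Sylow q N => (Q : Subgroup N).map N.subtype)
    (hP ⟨c, Subgroup.mem_zpowers c⟩)

theorem normal_subgroup_coprime_six_general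
    {G : Type*} [Group G] [Finite G]
    (x : G) (hx : orderOf x = 3)
    (hnorm : ∀ P : Subgroup G, IsPGroup 2 P → x ∈ Subgroup.normalizer (P : Set G) → P = ⊥)
    (N : Subgroup G) (hN : N.Normal) (hN3 : Nat.Coprime (Nat.card N) 3) :
    Nat.Coprime (Nat.card N) 6 := by
  have h3 : ¬3 ∣ Nat.card N := (Nat.Prime.coprime_iff_not_dvd Nat.prime_three).mp hN3.symm
  obtain ⟨P, hxP⟩ := Sylow.exists_mem_normalizer_map_subtype (q := 2) h3 (k := 1)
    (hx.trans (pow_one 3).symm)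
  have hP : (P : Subgroup N) = ⊥ :=
    (Subgroup.map_eq_bot_iff_of_injective _ N.subtype_injective).mp
      (hnorm _ (P.isPGroup'.map _) hxP)
  have h2 : ¬2 ∣ Nat.card N := fun h2 => P.ne_bot_of_dvd_card h2 hP
  rw [show (6 : ℕ) = 2 * 3 by norm_num]
  exact ((Nat.Prime.coprime_iff_not_dvd Nat.prime_two).mpr h2).symm.mul_right hN3

/-- Let `G` be a finite group with `O_3(G) = 1` (every normal 3-subgroup is trivial),
and let `x ∈ G` have order 3 and normalize no nontrivial 2-subgroup of `G`.
Then every normal subgroup of `G` of order prime to 3 has order prime to 6. -/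
theorem normal_subgroup_coprime_six
    {G : Type*} [Group G] [Finite G]
    (hO3 : ∀ P : Subgroup G, P.Normal → IsPGroup 3 P → P = ⊥)
    (x : G) (hx : orderOf x = 3)
    (hnorm : ∀ P : Subgroup G, IsPGroup 2 P → x ∈ Subgroup.normalizer (P : Set G) → P = ⊥)
    (N : Subgroup G) (hN : N.Normal) (hN3 : Nat.Coprime (Nat.card N) 3) :
    Nat.Coprime (Nat.card N) 6 :=
  normal_subgroup_coprime_six_general x hx hnorm N hN hN3
end

section
/- Let F be a finite field of characteristic 2 and let x be an element of order 3 in SL_2(F). Then the centralizer of x in SL_2(F) has odd order. -/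
section SL2AuxLemmas

open Matrix

private lemma SL2aux_CH2 {F : Type*} [Field F] (A : Matrix (Fin 2) (Fin 2) F) (hdet : A.det = 1) :
    A * A = (A 0 0 + A 1 1) • A - 1 := by
  ext i j
  fin_cases i <;> fin_cases j <;>
    simp [Matrix.mul_apply, Fin.sum_univ_two, Matrix.one_apply] <;>
    rw [Matrix.det_fin_two] at hdet <;> ring_nf <;> linear_combination -hdet

private lemma SL2aux_trace_eq_one {F : Type*} [Field F] [CharP F 2]
    (A : Matrix (Fin 2) (Fin 2) F) (hdet : A.det = 1) (h3 : A ^ 3 = 1)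
    (h1 : A ≠ 1) : A 0 0 + A 1 1 = 1 := by
  have h2 : (2 : F) = 0 := by exact_mod_cast CharP.cast_eq_zero F 2
  set t : F := A 0 0 + A 1 1 with ht
  have hch := SL2aux_CH2 A hdet
  rw [← ht] at hch
  have h3' : (A * A) * A = 1 := by rw [← h3, pow_succ, pow_two]
  rw [hch, sub_mul, smul_mul_assoc, one_mul, hch, smul_sub, smul_smul] at h3'
  have key : ((t + 1) * (t + 1)) • A = (t + 1) • (1 : Matrix (Fin 2) (Fin 2) F) := by
    have c1 : (t + 1) * (t + 1) = t * t - 1 := by linear_combination (t + 1) * h2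
    rw [c1, sub_smul, one_smul]
    have c2 : (t + 1 : F) = 1 + t := by ring
    rw [c2, add_smul, one_smul]
    linear_combination (norm := module) h3'
  have e01 := congrFun (congrFun key 0) 1
  have e10 := congrFun (congrFun key 1) 0
  have e00 := congrFun (congrFun key 0) 0
  have e11 := congrFun (congrFun key 1) 1
  simp [Matrix.smul_apply, Matrix.one_apply] at e01 e10 e00 e11
  by_contra hne
  have htne : t + 1 ≠ 0 := by
    intro h; apply hne; linear_combination h - h2
  have hb : A 0 1 = 0 := e01.resolve_left htne
  have hc : A 1 0 = 0 := e10.resolve_left htne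
  have haa : (t + 1) * A 0 0 = 1 := by
    have : (t + 1) * ((t + 1) * A 0 0 - 1) = 0 := by linear_combination e00
    rcases mul_eq_zero.mp this with h | h
    · exact absurd h htne
    · linear_combination h
  have hdd : (t + 1) * A 1 1 = 1 := by
    have : (t + 1) * ((t + 1) * A 1 1 - 1) = 0 := by linear_combination e11
    rcases mul_eq_zero.mp this with h | h
    · exact absurd h htne
    · linear_combination h
  have ht0 : t = 0 := by
    have : (t + 1) * t = 0 := by linear_combination haa + hdd + h2
    rcases mul_eq_zero.mp this with h | h
    · exact absurd h htne
    · exact h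
  rw [ht0] at haa hdd
  apply h1
  ext i j
  fin_cases i <;> fin_cases j <;>
    simp [Matrix.one_apply, hb, hc] <;>
    first
      | linear_combination haa
      | linear_combination hdd

private lemma SL2aux_invol_eq_one {F : Type*} [Field F] [CharP F 2]
    (A B : Matrix (Fin 2) (Fin 2) F) (htr : A 0 0 + A 1 1 = 1)
    (hB2 : B * B = 1) (hdetB : B.det = 1) (hc : A * B = B * A) : B = 1 := by
  have h2 : (2 : F) = 0 := by exact_mod_cast CharP.cast_eq_zero F 2
  have f00 := congrFun (congrFun hB2 0) 0
  have f11 := congrFun (congrFun hB2 1) 1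
  have g01 := congrFun (congrFun hc 0) 1
  have g10 := congrFun (congrFun hc 1) 0
  simp [Matrix.mul_apply, Fin.sum_univ_two, Matrix.one_apply] at f00 f11 g01 g10
  rw [Matrix.det_fin_two] at hdetB
  have hps : B 0 0 = B 1 1 := by
    have hsq : (B 0 0 - B 1 1) ^ 2 = 0 := by
      linear_combination f00 - f11 + (B 1 1 ^ 2 - B 0 0 * B 1 1) * h2
    have := pow_eq_zero_iff (n := 2) (by norm_num) |>.mp hsq
    linear_combination this
  have hq : B 0 1 = 0 := by
    linear_combination B 0 1 * htr + g01 + A 0 1 * hps + (B 0 1 - A 0 0 * B 0 1) * h2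
  have hr : B 1 0 = 0 := by
    linear_combination B 1 0 * htr - g10 + A 1 0 * hps + (B 1 0 - A 0 0 * B 1 0) * h2
  have hp : B 0 0 = 1 := by
    have hsq : B 0 0 ^ 2 = 1 := by
      linear_combination hdetB + B 0 0 * hps + B 0 1 * hr
    have h0 : (B 0 0 - 1) ^ 2 = 0 := by linear_combination hsq + (1 - B 0 0) * h2
    have := pow_eq_zero_iff (n := 2) (by norm_num) |>.mp h0
    linear_combination this
  have hs : B 1 1 = 1 := hps ▸ hp
  ext i j
  fin_cases i <;> fin_cases j <;> simp [Matrix.one_apply, hq, hr, hp, hs]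

end SL2AuxLemmas

/-- Let `F` be a finite field of characteristic 2 and let `x ∈ SL₂(F)` have order 3.
Then the centralizer of `x` in `SL₂(F)` has odd order. -/
theorem SL2_char_two_orderThree_centralizer_odd
    {F : Type*} [Field F] [Fintype F] [CharP F 2]
    (x : Matrix.SpecialLinearGroup (Fin 2) F) (hx : orderOf x = 3) :
    Odd (Nat.card (Subgroup.centralizer {x})) := by
  rw [← Nat.not_even_iff_odd]
  intro heven
  haveI : DecidableEq F := Classical.decEq F
  haveI : Fintype (Subgroup.centralizer {x} : Subgroup (Matrix.SpecialLinearGroup (Fin 2) F)) :=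
    Fintype.ofFinite _
  rw [Nat.card_eq_fintype_card] at heven
  obtain ⟨y, hy⟩ := exists_prime_orderOf_dvd_card 2 heven.two_dvd
  have hyv : orderOf (y : Matrix.SpecialLinearGroup (Fin 2) F) = 2 := by
    rw [Subgroup.orderOf_coe]; exact hy
  have hcomm : x * (y : Matrix.SpecialLinearGroup (Fin 2) F)
      = (y : Matrix.SpecialLinearGroup (Fin 2) F) * x := by
    have h := y.2
    rw [Subgroup.mem_centralizer_iff] at h
    exact h x (Set.mem_singleton x)
  set z : Matrix.SpecialLinearGroup (Fin 2) F := (y : Matrix.SpecialLinearGroup (Fin 2) F)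
    with hz
  -- matrix-level facts
  have hx3 : x ^ 3 = 1 := by rw [← hx]; exact pow_orderOf_eq_one x
  have hx1 : x ≠ 1 := by
    intro h; rw [h, orderOf_one] at hx; norm_num at hx
  have hA3 : (x : Matrix (Fin 2) (Fin 2) F) ^ 3 = 1 := by
    have := congrArg (fun g : Matrix.SpecialLinearGroup (Fin 2) F =>
      (g : Matrix (Fin 2) (Fin 2) F)) hx3
    simpa using this
  have hA1 : (x : Matrix (Fin 2) (Fin 2) F) ≠ 1 := by
    intro h
    exact hx1 (Subtype.ext (by simpa using h))
  have htr := SL2aux_trace_eq_one (x : Matrix (Fin 2) (Fin 2) F) x.2 hA3 hA1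
  have hz2 : z ^ 2 = 1 := by
    have := pow_orderOf_eq_one z
    rwa [hyv] at this
  have hB2 : (z : Matrix (Fin 2) (Fin 2) F) * (z : Matrix (Fin 2) (Fin 2) F) = 1 := by
    have := congrArg (fun g : Matrix.SpecialLinearGroup (Fin 2) F =>
      (g : Matrix (Fin 2) (Fin 2) F)) hz2
    simpa [pow_two] using this
  have hcM : (x : Matrix (Fin 2) (Fin 2) F) * (z : Matrix (Fin 2) (Fin 2) F)
      = (z : Matrix (Fin 2) (Fin 2) F) * (x : Matrix (Fin 2) (Fin 2) F) := by
    have := congrArg (fun g : Matrix.SpecialLinearGroup (Fin 2) F =>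
      (g : Matrix (Fin 2) (Fin 2) F)) hcomm
    simpa using this
  have hB1 := SL2aux_invol_eq_one (x : Matrix (Fin 2) (Fin 2) F)
    (z : Matrix (Fin 2) (Fin 2) F) htr hB2 z.2 hcM
  have hzone : z = 1 := Subtype.ext (by simpa using hB1)
  rw [hzone, orderOf_one] at hyv
  norm_num at hyv
end

section
/- Let F be a finite field with |F| = 2^a where a is odd, and let x be an element of order 3 in SL_2(F). If P is a 2-subgroup of SL_2(F) normalized by x, then P is trivial. (Thus PSL_2(2^a) ≅ SL_2(2^a), a odd, contains elements of order three normalizing no nontrivial 2-subgroup.) -/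
/-!
A 2-group `P` acting on `F²`, a set of even size, has an even number of fixed points, so
it fixes some `v ≠ 0`; as `x` normalizes `P`, the vector `x • v` is fixed by `P` as well.
If `v` and `x • v` are independent, `P` fixes a basis, so `P = 1`. Otherwise `v` is an
eigenvector of `x` with eigenvalue `c`, `c ^ 3 = 1`, and `c = 1` because `3 ∤ 2 ^ a - 1 = |Fˣ|`
for odd `a`. But in characteristic 2 an element of `SL₂` with a nonzero fixed vector is an
involution, which `x` is not.
-/

theorem Nat.coprime_three_two_pow_sub_one {a : ℕ} (ha : Odd a) : Nat.Coprime 3 (2 ^ a - 1) := by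
  obtain ⟨k, rfl⟩ := ha
  have h : 2 ^ (2 * k + 1) % 3 = 2 := by
    rw [pow_succ, pow_mul, Nat.mul_mod, Nat.pow_mod]
    norm_num
  rw [Nat.Prime.coprime_iff_not_dvd Nat.prime_three]
  generalize 2 ^ (2 * k + 1) = m at h
  omega

theorem FiniteField.eq_one_of_pow_eq_one_of_coprime {F : Type*} [Field F] [Fintype F]
    {n : ℕ} (hn : n.Coprime (Fintype.card F - 1)) (hn0 : n ≠ 0) {z : F} (hz : z ^ n = 1) :
    z = 1 := by
  have hz0 : z ≠ 0 := by rintro rfl; simp [hn0] at hz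
  exact orderOf_eq_one_iff.mp <| Nat.eq_one_of_dvd_coprimes hn (orderOf_dvd_of_pow_eq_one hz)
    (orderOf_dvd_of_pow_eq_one (FiniteField.pow_card_sub_one_eq_one z hz0))

theorem pow_smul_eq_pow_smul_of_smul_eq {G K V : Type*} [Monoid G] [Monoid K] [MulAction G V]
    [MulAction K V] [SMulCommClass G K V] {g : G} {c : K} {v : V} (h : g • v = c • v)
    (n : ℕ) : g ^ n • v = c ^ n • v := by
  induction n with
  | zero => simp
  | succ n ih => rw [pow_succ', mul_smul, ih, smul_comm, h, smul_smul, ← pow_succ]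

theorem IsPGroup.exists_ne_zero_mem_fixedPoints {p : ℕ} [Fact p.Prime] {G V : Type*} [Group G]
    [AddMonoid V] [DistribMulAction G V] [Finite V] (hG : IsPGroup p G) (hpV : p ∣ Nat.card V) :
    ∃ v ≠ 0, v ∈ MulAction.fixedPoints G V := by
  obtain ⟨v, hv, h0v⟩ := hG.exists_fixed_point_of_prime_dvd_card_of_fixed_point V hpV
    (a := 0) fun g ↦ smul_zero g
  exact ⟨v, h0v.symm, hv⟩

theorem MulAction.smul_mem_fixedPoints_of_mem_normalizer {G α : Type*} [Group G] [MulAction G α]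
    {H : Subgroup G} {g : G} (hg : g ∈ Subgroup.normalizer (H : Set G)) {a : α}
    (ha : a ∈ fixedPoints H α) : g • a ∈ fixedPoints H α := fun h ↦ by
  have hconj : g⁻¹ * h * g ∈ H := (Subgroup.mem_normalizer_iff''.mp hg h).mp h.2
  calc (h : G) • g • a = g • (g⁻¹ * h * g) • a := by simp only [mul_smul, smul_inv_smul]
    _ = g • a := congrArg (g • ·) (ha ⟨_, hconj⟩)

namespace Matrix.SpecialLinearGroup

theorem eq_one_of_forall_smul_basis_eq {ι R : Type*} [Fintype ι] [DecidableEq ι] [CommRing R]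
    (b : Module.Basis ι R (ι → R)) {g : SpecialLinearGroup ι R} (h : ∀ i, g • b i = b i) :
    g = 1 := by
  refine toLin'_injective (LinearEquiv.toLinearMap_injective (b.ext fun i ↦ ?_))
  simpa [toLin'_apply, SpecialLinearGroup.smul_def] using h i

/-- `det (g - 1) = 2 - tr g`, so in characteristic 2 we get `tr g = 0`, and then Cayley–Hamilton
reads `g ^ 2 = 1`. -/
theorem sq_eq_one_of_smul_eq_self {R : Type*} [CommRing R] [IsDomain R] [CharP R 2]
    {g : SpecialLinearGroup (Fin 2) R} {v : Fin 2 → R} (hv : v ≠ 0) (h : g • v = v) :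
    g ^ 2 = 1 := by
  have hdet : (g - 1 : Matrix (Fin 2) (Fin 2) R).det = 0 :=
    exists_mulVec_eq_zero_iff.mp ⟨v, hv, by
      rw [SpecialLinearGroup.smul_def, smul_eq_mulVec] at h
      rw [sub_mulVec, one_mulVec, h, sub_self]⟩
  have hdet1 : g 0 0 * g 1 1 - g 0 1 * g 1 0 = 1 := by rw [← det_fin_two]; exact g.2
  have h2 : (2 : R) = 0 := CharTwo.two_eq_zero
  simp only [det_fin_two, sub_apply, one_apply_eq, one_apply_ne zero_ne_one,
    one_apply_ne one_ne_zero, sub_zero] at hdet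
  have htr : g 0 0 + g 1 1 = 0 := by linear_combination hdet1 - hdet + h2
  ext i j
  fin_cases i <;> fin_cases j <;> simp only [sq, Fin.zero_eta, Fin.mk_one,
    Fin.isValue, coe_mul, coe_one, mul_apply, Fin.sum_univ_two, one_apply_eq,
    one_apply_ne zero_ne_one, one_apply_ne one_ne_zero]
  · linear_combination g 0 0 * htr - hdet1 - h2
  · linear_combination g 0 1 * htr
  · linear_combination g 1 0 * htr
  · linear_combination g 1 1 * htr - hdet1 - h2

theorem smul_ne_smul_of_orderOf_eq_three {F : Type*} [Field F] [Fintype F] {a : ℕ} (ha : Odd a)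
    (hcard : Fintype.card F = 2 ^ a) {x : SpecialLinearGroup (Fin 2) F} (hx : orderOf x = 3)
    {v : Fin 2 → F} (hv : v ≠ 0) (c : F) : x • v ≠ c • v := by
  intro hxv
  have : CharP F 2 := charP_of_card_eq_prime_pow hcard
  have hc3 : c ^ 3 = 1 := by
    have h3 := pow_smul_eq_pow_smul_of_smul_eq hxv 3
    rw [← hx, pow_orderOf_eq_one, one_smul, hx] at h3
    exact smul_left_injective F hv (h3.symm.trans (one_smul F v).symm)
  have hc1 : c = 1 := FiniteField.eq_one_of_pow_eq_one_of_coprime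
    (hcard ▸ Nat.coprime_three_two_pow_sub_one ha) three_ne_zero hc3
  rw [hc1, one_smul] at hxv
  have h32 : 3 ∣ 2 := hx ▸ orderOf_dvd_of_pow_eq_one (sq_eq_one_of_smul_eq_self hv hxv)
  norm_num at h32

end Matrix.SpecialLinearGroup

/-- Let `F` be a finite field with `|F| = 2^a`, `a` odd, and let `x ∈ SL₂(F)` have
order 3. Then every 2-subgroup of `SL₂(F)` normalized by `x` is trivial. -/
theorem SL2_two_pow_odd_orderThree_normalizes_no_two_subgroup
    {F : Type*} [Field F] [Fintype F] (a : ℕ) (ha : Odd a)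
    (hcard : Fintype.card F = 2 ^ a)
    (x : Matrix.SpecialLinearGroup (Fin 2) F) (hx : orderOf x = 3)
    (P : Subgroup (Matrix.SpecialLinearGroup (Fin 2) F))
    (hP : IsPGroup 2 P) (hxP : x ∈ Subgroup.normalizer (P : Set (Matrix.SpecialLinearGroup (Fin 2) F))) :
    P = ⊥ := by
  have h2V : 2 ∣ Nat.card (Fin 2 → F) := by
    rw [Nat.card_eq_fintype_card, Fintype.card_fun, hcard, Fintype.card_fin]
    exact dvd_pow (dvd_pow_self 2 ha.pos.ne') two_ne_zero
  obtain ⟨v, hv, hvP⟩ := hP.exists_ne_zero_mem_fixedPoints h2V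
  have hxvP := MulAction.smul_mem_fixedPoints_of_mem_normalizer hxP hvP
  by_cases hind : LinearIndependent F ![v, x • v]
  · let b := basisOfLinearIndependentOfCardEqFinrank hind (by simp)
    refine (Subgroup.eq_bot_iff_forall P).mpr fun g hg ↦
      Matrix.SpecialLinearGroup.eq_one_of_forall_smul_basis_eq b ?_
    intro i
    fin_cases i
    · simpa [b] using hvP ⟨g, hg⟩
    · simpa [b] using hxvP ⟨g, hg⟩
  · obtain ⟨c, hc⟩ : ∃ c : F, c • v = x • v := by
      simpa [LinearIndependent.pair_iff' hv] using hind
    exact (Matrix.SpecialLinearGroup.smul_ne_smul_of_orderOf_eq_three ha hcard hx hv c hc.symm).elim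
end

section
/- Let F be a finite field with |F| = 2^a where a is even, and let x be an element of order 3 in SL_2(F). Then x normalizes some nontrivial 2-subgroup of SL_2(F): there exists a subgroup P of SL_2(F) with P nontrivial, P a 2-group, and x * P * x⁻¹ = P. -/
/-!
Since `|F| = 4 ^ k`, the field `F` contains a primitive cube root of unity, so `X ^ 3 - 1` splits
over `F` and `x` has an eigenvector `v`. The stabilizer of `v` in `SL₂(F)` is nontrivial (it
contains a transvection), and each of its elements `g` satisfies `(g - 1) ^ 2 = 0`, hence
`g ^ 2 = 1` in characteristic `2`. As `x` maps `v` to a multiple of itself, it normalizes this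
stabilizer.
-/

open Matrix Polynomial
open scoped MatrixGroups

theorem MulAction.mem_normalizer_stabilizer_of_smul_eq_smul {G α β : Type*} [Group G] [Group α]
    [MulAction G β] [MulAction α β] [SMulCommClass G α β] {g : G} {a : α} {b : β}
    (h : g • b = a • b) : g ∈ Subgroup.normalizer (stabilizer G b : Set G) := by
  rw [Subgroup.mem_normalizer_iff_map_conj_eq, ← MulEquiv.toMonoidHom_eq_coe,
    ← stabilizer_smul_eq_stabilizer_map_conj, h, stabilizer_smul_eq_right]

theorem FiniteField.exists_isPrimitiveRoot_of_dvd_card_sub_one {F : Type*} [Field F] [Fintype F]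
    {p : ℕ} [Fact p.Prime] (h : p ∣ Fintype.card F - 1) : ∃ ζ : F, IsPrimitiveRoot ζ p := by
  classical
  rw [← Fintype.card_units] at h
  obtain ⟨ζ, hζ⟩ := exists_prime_orderOf_dvd_card p h
  exact ⟨ζ, IsPrimitiveRoot.coe_units_iff.mpr (hζ ▸ IsPrimitiveRoot.orderOf ζ)⟩

namespace Matrix

variable {F ι : Type*} [Field F] [Fintype ι] [DecidableEq ι]

theorem exists_mulVec_eq_smul_of_pow_eq_one [Nonempty ι] {n : ℕ} (hn : 0 < n) {ζ : F}
    (hζ : IsPrimitiveRoot ζ n) {M : Matrix ι ι F} (hM : M ^ n = 1) :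
    ∃ c : F, c ^ n = 1 ∧ ∃ v : ι → F, v ≠ 0 ∧ M *ᵥ v = c • v := by
  let detEval : F[X] →* F :=
    detMonoidHom.comp (aeval M : F[X] →ₐ[F] Matrix ι ι F).toMonoidHom
  have hprod : ∏ c ∈ nthRootsFinset n (1 : F), detEval (X - C c) = 0 := by
    rw [← map_prod, ← X_pow_sub_one_eq_prod hn hζ]
    simp [detEval, hM]
  obtain ⟨c, hc, hdet⟩ := Finset.prod_eq_zero_iff.mp hprod
  obtain ⟨v, hv, hMv⟩ := exists_mulVec_eq_zero_iff.mpr hdet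
  refine ⟨c, (mem_nthRootsFinset hn 1).mp hc, v, hv, ?_⟩
  simpa [detEval, sub_mulVec, sub_eq_zero, Algebra.algebraMap_eq_smul_one, smul_mulVec]
    using hMv

end Matrix

namespace Matrix.SpecialLinearGroup

variable {F : Type*} [Field F] {v : Fin 2 → F}

theorem sub_one_sq_eq_zero_of_smul_eq_self (hv : v ≠ 0) {g : SL(2, F)} (hg : g • v = v) :
    ((g : Matrix (Fin 2) (Fin 2) F) - 1) ^ 2 = 0 := by
  set A := (g : Matrix (Fin 2) (Fin 2) F) - 1 with hA
  have hdet : A.det = 0 :=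
    exists_mulVec_eq_zero_iff.mp
      ⟨v, hv, by rw [hA, sub_mulVec, one_mulVec]; exact sub_eq_zero.mpr hg⟩
  -- `det (1 + A) = 1 + trace A + det A` for `2 × 2` matrices
  have htrace : A.trace = 0 := by
    have hg1 : (A + 1).det = 1 := by rw [hA, sub_add_cancel]; exact g.prop
    simp [det_fin_two, trace_fin_two] at hdet hg1 ⊢
    linear_combination hg1 - hdet
  simpa [charpoly_fin_two, hdet, htrace] using aeval_self_charpoly A

theorem isPGroup_stabilizer (p : ℕ) [Fact p.Prime] [CharP F p] (hv : v ≠ 0) :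
    IsPGroup p (MulAction.stabilizer SL(2, F) v) := by
  rintro ⟨g, hg⟩
  refine ⟨1, Subtype.ext (Subtype.ext ?_)⟩
  simp only [pow_one, SubgroupClass.coe_pow, coe_pow, OneMemClass.coe_one, coe_one]
  have hN := sub_one_sq_eq_zero_of_smul_eq_self hv hg
  calc (g : Matrix (Fin 2) (Fin 2) F) ^ p = (1 + ((g : Matrix (Fin 2) (Fin 2) F) - 1)) ^ p := by
        rw [add_sub_cancel]
    _ = 1 := by
        rw [add_pow_char_of_commute p (Commute.one_left _), one_pow,
          pow_eq_zero_of_le (Fact.out : p.Prime).two_le hN, add_zero]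

theorem stabilizer_ne_bot (hv : v ≠ 0) : MulAction.stabilizer SL(2, F) v ≠ ⊥ := by
  let N : Matrix (Fin 2) (Fin 2) F := vecMulVec v ![-v 1, v 0]
  let t : SL(2, F) := ⟨1 + N, by simp [N, det_fin_two]; ring⟩
  have hNv : N *ᵥ v = 0 := by
    rw [vecMulVec_mulVec, show ![-v 1, v 0] ⬝ᵥ v = 0 by simp [dotProduct]; ring]
    simp
  have ht : t ∈ MulAction.stabilizer SL(2, F) v := by
    rw [MulAction.mem_stabilizer_iff, SpecialLinearGroup.smul_def]
    simp [t, add_mulVec, hNv]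
  rw [Subgroup.ne_bot_iff_exists_ne_one]
  refine ⟨⟨t, ht⟩, fun h => hv ?_⟩
  have hN : N = 0 := by
    simpa [t] using congrArg Subtype.val (congrArg Subtype.val h)
  have h01 := congrFun (congrFun hN 0) 1
  have h10 := congrFun (congrFun hN 1) 0
  simp [N] at h01 h10
  ext i; fin_cases i <;> simp [h01, h10]

end Matrix.SpecialLinearGroup

/-- Let `F` be a finite field with `|F| = 2^a`, `a` even, and let `x ∈ SL₂(F)` have
order 3. Then `x` normalizes some nontrivial 2-subgroup of `SL₂(F)`. -/
theorem SL2_two_pow_even_orderThree_normalizes_two_subgroup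
    {F : Type*} [Field F] [Fintype F] (a : ℕ) (ha : Even a)
    (hcard : Fintype.card F = 2 ^ a)
    (x : Matrix.SpecialLinearGroup (Fin 2) F) (hx : orderOf x = 3) :
    ∃ P : Subgroup (Matrix.SpecialLinearGroup (Fin 2) F),
      P ≠ ⊥ ∧ IsPGroup 2 P ∧ x ∈ Subgroup.normalizer (P : Set (Matrix.SpecialLinearGroup (Fin 2) F)) := by
  have : CharP F 2 := charP_of_card_eq_prime_pow hcard
  have hdvd : 3 ∣ Fintype.card F - 1 := by
    obtain ⟨k, rfl⟩ := ha
    rw [hcard, ← two_mul, pow_mul]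
    exact Nat.sub_one_dvd_pow_sub_one (2 ^ 2) k
  obtain ⟨ζ, hζ⟩ := FiniteField.exists_isPrimitiveRoot_of_dvd_card_sub_one hdvd
  have hx3 : (x : Matrix (Fin 2) (Fin 2) F) ^ 3 = 1 := by
    simpa [hx] using congrArg Subtype.val (pow_orderOf_eq_one x)
  obtain ⟨c, hc, v, hv, hxv⟩ := exists_mulVec_eq_smul_of_pow_eq_one three_pos hζ hx3
  have hc0 : c ≠ 0 := by rintro rfl; simp at hc
  exact ⟨MulAction.stabilizer _ v, SpecialLinearGroup.stabilizer_ne_bot hv,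
    SpecialLinearGroup.isPGroup_stabilizer 2 hv,
    MulAction.mem_normalizer_stabilizer_of_smul_eq_smul (a := Units.mk0 c hc0) hxv⟩
end

section
/- Let q be an odd prime power with q ≡ 5 (mod 12) or q ≡ 7 (mod 12), and let F be the finite field with q elements. Let x be an element of order 3 in PSL_2(q) := SL_2(F) / Z(SL_2(F)). Then the centralizer of x in PSL_2(q) has odd order. -/
/-!
Lift `x` and an involution `y` commuting with it to `A, B ∈ SL₂(F)`. Their commutator is central,
hence `±1`, and conjugating `A³ = ±1` by `B` shows it is `1`, so `A` and `B` commute. As neither is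
scalar, Cayley–Hamilton forces `tr(A)² = 1` and `B² = -1`; then `(AB)² = -A²`, and taking traces
gives `tr(AB)² = 3`. By quadratic reciprocity `3` is not a square in `F` when `q ≡ ±5 (mod 12)`,
so the centralizer has no involution and Cauchy's theorem makes its order odd.
-/

open Matrix Subgroup
open scoped MatrixGroups

theorem pow_eq_one_of_mul_eq_mul_mul {G : Type*} [Group G] {a b z : G} {n : ℕ}
    (hz : z ∈ center G) (ha : a ^ n ∈ center G) (h : a * b = b * a * z) : z ^ n = 1 := by
  have hconj : SemiconjBy b (a * z) a := by rw [SemiconjBy, h, mul_assoc]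
  have hcomm : Commute a z := mem_center_iff.mp hz a
  have hpow : b * (a ^ n * z ^ n) = b * a ^ n := by
    rw [← hcomm.mul_pow]
    exact (hconj.pow_right n).eq.trans (mem_center_iff.mp ha b).symm
  simpa using mul_left_cancel hpow

namespace Matrix

variable {R : Type*} [CommRing R]

theorem sq_fin_two_eq_trace_smul_sub_det (M : Matrix (Fin 2) (Fin 2) R) :
    M ^ 2 = M.trace • M - scalar (Fin 2) M.det := by
  ext i j
  fin_cases i <;> fin_cases j <;> simp [sq, mul_apply, trace_fin_two, det_fin_two] <;> ring

theorem trace_sq_fin_two (M : Matrix (Fin 2) (Fin 2) R) :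
    (M ^ 2).trace = M.trace ^ 2 - 2 * M.det := by
  rw [sq_fin_two_eq_trace_smul_sub_det, trace_sub, trace_smul, scalar_apply, trace_diagonal]
  simp only [smul_eq_mul, Finset.sum_const, Finset.card_univ, Fintype.card_fin, nsmul_eq_mul]
  ring

namespace SpecialLinearGroup

section center

variable {n : Type*} [DecidableEq n] [Fintype n]

theorem mem_center_of_coe_eq_scalar {A : SpecialLinearGroup n R} {r : R}
    (h : (A : Matrix n n R) = scalar n r) : A ∈ center (SpecialLinearGroup n R) :=
  mem_center_iff.mpr ⟨r, by simpa [h] using A.det_coe, h.symm⟩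

theorem pow_card_eq_one_of_mem_center {z : SpecialLinearGroup n R}
    (hz : z ∈ center (SpecialLinearGroup n R)) : z ^ Fintype.card n = 1 := by
  obtain ⟨r, hr, hrz⟩ := mem_center_iff.mp hz
  ext1
  rw [coe_pow, ← hrz, ← map_pow, hr, map_one, coe_one]

theorem mem_center_of_smul_coe_eq_scalar {K : Type*} [Field K] {A : SpecialLinearGroup n K}
    {c d : K} (hc : c ≠ 0) (h : c • (A : Matrix n n K) = scalar n d) :
    A ∈ center (SpecialLinearGroup n K) :=
  mem_center_of_coe_eq_scalar (r := c⁻¹ * d) <| by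
    rw [← inv_smul_smul₀ hc (A : Matrix n n K), h, map_mul, scalar_apply c⁻¹,
      ← smul_eq_diagonal_mul]

end center

theorem sq_coe_eq_trace_smul_sub_one (A : SL(2, R)) :
    (A : Matrix (Fin 2) (Fin 2) R) ^ 2 = (A : Matrix (Fin 2) (Fin 2) R).trace • A - 1 := by
  rw [sq_fin_two_eq_trace_smul_sub_det, A.det_coe, map_one]

theorem trace_mul_sq_eq_three {A B : SL(2, R)} (hAB : Commute A B)
    (hA : (A : Matrix (Fin 2) (Fin 2) R).trace ^ 2 = 1)
    (hB : (B : Matrix (Fin 2) (Fin 2) R) ^ 2 = -1) :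
    ((A * B : SL(2, R)) : Matrix (Fin 2) (Fin 2) R).trace ^ 2 = 3 := by
  have hsq := trace_sq_fin_two ((A * B : SL(2, R)) : Matrix (Fin 2) (Fin 2) R)
  have hAB' : Commute (A : Matrix (Fin 2) (Fin 2) R) B := by
    simpa only [Commute, SemiconjBy, coe_mul] using
      congrArg ((↑) : SL(2, R) → Matrix (Fin 2) (Fin 2) R) hAB.eq
  rw [det_coe, coe_mul, hAB'.mul_pow, hB, mul_neg_one, trace_neg, trace_sq_fin_two, A.det_coe,
    hA] at hsq
  rw [coe_mul]
  linear_combination -hsq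

section Field

variable {K : Type*} [Field K]

theorem sq_coe_eq_neg_one_of_sq_mem_center {B : SL(2, K)}
    (hB2 : B ^ 2 ∈ center SL(2, K)) (hB : B ∉ center SL(2, K)) :
    (B : Matrix (Fin 2) (Fin 2) K) ^ 2 = -1 := by
  obtain ⟨s, -, hs⟩ := mem_center_iff.mp hB2
  have hsq := sq_coe_eq_trace_smul_sub_one B
  have hsmul : (B : Matrix (Fin 2) (Fin 2) K).trace • (B : Matrix (Fin 2) (Fin 2) K) =
      scalar (Fin 2) (s + 1) := by
    rw [map_add, hs, coe_pow, hsq, map_one, sub_add_cancel]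
  have htr : (B : Matrix (Fin 2) (Fin 2) K).trace = 0 := by
    by_contra htr
    exact hB (mem_center_of_smul_coe_eq_scalar htr hsmul)
  rw [hsq, htr, zero_smul, zero_sub]

theorem trace_sq_eq_one_of_pow_three_mem_center {A : SL(2, K)}
    (hA3 : A ^ 3 ∈ center SL(2, K)) (hA : A ∉ center SL(2, K)) :
    (A : Matrix (Fin 2) (Fin 2) K).trace ^ 2 = 1 := by
  obtain ⟨r, -, hr⟩ := mem_center_iff.mp hA3
  have hsq := sq_coe_eq_trace_smul_sub_one A
  set t := (A : Matrix (Fin 2) (Fin 2) K).trace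
  have hsmul : (t ^ 2 - 1) • (A : Matrix (Fin 2) (Fin 2) K) = scalar (Fin 2) (r + t) := by
    have hcube : (A : Matrix (Fin 2) (Fin 2) K) ^ 3 =
        (t ^ 2 - 1) • (A : Matrix (Fin 2) (Fin 2) K) - scalar (Fin 2) t := by
      rw [pow_succ, hsq, sub_mul, smul_mul_assoc, ← sq, hsq, one_mul, smul_sub, smul_smul, ← sq,
        sub_smul, one_smul, scalar_apply, ← smul_one_eq_diagonal]
      abel
    rw [map_add, hr, coe_pow, hcube, sub_add_cancel]
  by_contra ht
  exact hA (mem_center_of_smul_coe_eq_scalar (sub_ne_zero.mpr ht) hsmul)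

theorem not_commute_of_orderOf_eq_three_of_orderOf_eq_two
    (h3 : ¬IsSquare (3 : K)) {x y : SL(2, K) ⧸ center SL(2, K)}
    (hx : orderOf x = 3) (hy : orderOf y = 2) : ¬Commute x y := by
  intro hxy
  obtain ⟨A, rfl⟩ := QuotientGroup.mk_surjective x
  obtain ⟨B, rfl⟩ := QuotientGroup.mk_surjective y
  have pow_mem {g : SL(2, K)} {k : ℕ} (hg : orderOf (g : SL(2, K) ⧸ center SL(2, K)) = k) :
      g ^ k ∈ center SL(2, K) := by
    rw [← QuotientGroup.eq_one_iff, QuotientGroup.mk_pow, ← hg, pow_orderOf_eq_one]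
  have not_mem {g : SL(2, K)} {k : ℕ} (hg : orderOf (g : SL(2, K) ⧸ center SL(2, K)) = k)
      (hk : k ≠ 1) : g ∉ center SL(2, K) := by
    rw [← QuotientGroup.eq_one_iff]
    intro h
    rw [h, orderOf_one] at hg
    exact hk hg.symm
  set z := (B * A)⁻¹ * (A * B)
  have hz : z ∈ center SL(2, K) := QuotientGroup.eq.mp hxy.eq.symm
  have hz1 : z = 1 := by
    have hz3 : z ^ 3 = 1 :=
      pow_eq_one_of_mul_eq_mul_mul hz (pow_mem hx) (mul_inv_cancel_left _ _).symm
    have hz2 : z ^ 2 = 1 := pow_card_eq_one_of_mem_center hz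
    simpa using pow_gcd_eq_one.mpr ⟨hz3, hz2⟩
  have hAB : Commute A B := (inv_mul_eq_one.mp hz1).symm
  have htr := trace_mul_sq_eq_three hAB
    (trace_sq_eq_one_of_pow_three_mem_center (pow_mem hx) (not_mem hx (by norm_num)))
    (sq_coe_eq_neg_one_of_sq_mem_center (pow_mem hy) (not_mem hy (by norm_num)))
  exact h3 ⟨_, htr.symm.trans (sq _)⟩

end Field

end SpecialLinearGroup

end Matrix

theorem FiniteField.not_isSquare_three {F : Type*} [Field F] [Fintype F]
    (hF : Fintype.card F % 12 = 5 ∨ Fintype.card F % 12 = 7) : ¬IsSquare (3 : F) := by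
  have hchar : ringChar F ≠ 2 := fun h => by
    have := FiniteField.even_card_of_char_two h
    omega
  rw [← Nat.cast_ofNat, FiniteField.isSquare_odd_prime_iff hchar (by norm_num), not_not,
    ZMod.χ₄_nat_mod_four, ← ZMod.natCast_mod (Fintype.card F) 3]
  rcases hF with h | h
  · rw [show Fintype.card F % 4 = 1 by omega, show Fintype.card F % 3 = 2 by omega]
    decide
  · rw [show Fintype.card F % 4 = 3 by omega, show Fintype.card F % 3 = 1 by omega]
    decide

theorem PSL2_orderThree_centralizer_odd_of_five_or_seven_mod_twelve_general
    {F : Type*} [Field F] [Fintype F] (q : ℕ)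
    (hcard : Fintype.card F = q)
    (hmod : q % 12 = 5 ∨ q % 12 = 7)
    (x : Matrix.SpecialLinearGroup (Fin 2) F ⧸
        Subgroup.center (Matrix.SpecialLinearGroup (Fin 2) F))
    (hx : orderOf x = 3) :
    Odd (Nat.card (Subgroup.centralizer {x})) := by
  subst hcard
  by_contra heven
  obtain ⟨y, hy⟩ := exists_prime_orderOf_dvd_card' 2
    (even_iff_two_dvd.mp (Nat.not_odd_iff_even.mp heven))
  exact SpecialLinearGroup.not_commute_of_orderOf_eq_three_of_orderOf_eq_two
    (FiniteField.not_isSquare_three hmod) hx ((orderOf_coe y).trans hy)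
    (mem_centralizer_iff.mp y.2 x rfl)

/-- Let `q` be an odd prime power with `q ≡ 5 (mod 12)` or `q ≡ 7 (mod 12)`, let `F` be
the field with `q` elements, and let `x` be an element of order 3 in
`PSL₂(q) = SL₂(F)/Z(SL₂(F))`. Then the centralizer of `x` has odd order. -/
theorem PSL2_orderThree_centralizer_odd_of_five_or_seven_mod_twelve
    {F : Type*} [Field F] [Fintype F] (q : ℕ)
    (hq : Odd q) (hq' : IsPrimePow q) (hcard : Fintype.card F = q)
    (hmod : q % 12 = 5 ∨ q % 12 = 7)
    (x : Matrix.SpecialLinearGroup (Fin 2) F ⧸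
        Subgroup.center (Matrix.SpecialLinearGroup (Fin 2) F))
    (hx : orderOf x = 3) :
    Odd (Nat.card (Subgroup.centralizer {x})) :=
  PSL2_orderThree_centralizer_odd_of_five_or_seven_mod_twelve_general q hcard hmod x hx
end

section
/- Let q be an odd prime power with q ≡ 1 (mod 12) or q ≡ 11 (mod 12), and let F be the finite field with q elements. Let x be an element of order 3 in PSL_2(q) := SL_2(F) / Z(SL_2(F)). Then the centralizer of x in PSL_2(q) has even order. -/
open Matrix

lemma cayley2 {F : Type*} [Field F] (M : Matrix (Fin 2) (Fin 2) F) :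
    M * M = M.trace • M - M.det • 1 := by
  ext i j
  fin_cases i <;> fin_cases j <;>
    simp [Matrix.mul_apply, Fin.sum_univ_two, Matrix.trace_fin_two, Matrix.det_fin_two,
      Matrix.one_apply] <;> ring

lemma det_aux {F : Type*} [Field F] (a b : F) (A : Matrix (Fin 2) (Fin 2) F) :
    (a • 1 + b • A).det = a^2 + a*b*A.trace + b^2*A.det := by
  simp [Matrix.det_fin_two, Matrix.trace_fin_two, Matrix.one_apply]
  ring

lemma quadChar_arg_aux (q : ℕ) (hmod : q % 12 = 1 ∨ q % 12 = 11) :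
    ((ZMod.χ₄ (q : ZMod 4) : ℤ) : ZMod 3) * (q : ZMod 3) = 1 := by
  rcases hmod with h | h
  · have h4 : ZMod.χ₄ (q : ZMod 4) = 1 := by
      rw [ZMod.χ₄_nat_eq_if_mod_four]; simp [show q % 4 = 1 by omega, show q % 2 = 1 by omega]
    have h3 : ((q : ZMod 3)) = 1 := by
      rw [← ZMod.natCast_mod, show q % 3 = 1 by omega]; norm_num
    rw [h4, h3]; norm_num
  · have h4 : ZMod.χ₄ (q : ZMod 4) = -1 := by
      rw [ZMod.χ₄_nat_eq_if_mod_four]; simp [show q % 4 = 3 by omega, show q % 2 = 1 by omega]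
    have h3 : ((q : ZMod 3)) = 2 := by
      rw [← ZMod.natCast_mod, show q % 3 = 2 by omega]; norm_num
    rw [h4, h3]; push_cast; rw [neg_one_mul]; decide

lemma three_is_square {F : Type*} [Field F] [Fintype F] (q : ℕ)
    (hcard : Fintype.card F = q) (hchar2 : ringChar F ≠ 2)
    (hmod : q % 12 = 1 ∨ q % 12 = 11) : IsSquare (3 : F) := by
  classical
  haveI : Fact (Nat.Prime 3) := ⟨by norm_num⟩
  rw [show ((3 : F) = ((3 : ℕ) : F)) by norm_num]
  rw [FiniteField.isSquare_odd_prime_iff hchar2 (by norm_num), hcard]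
  have key := quadChar_arg_aux q hmod
  rw [key]
  simp



/-- Let `q` be an odd prime power with `q ≡ 1 (mod 12)` or `q ≡ 11 (mod 12)`, let `F` be
the field with `q` elements, and let `x` be an element of order 3 in
`PSL₂(q) = SL₂(F)/Z(SL₂(F))`. Then the centralizer of `x` has even order. -/
theorem PSL2_orderThree_centralizer_even_of_one_or_eleven_mod_twelve
    {F : Type*} [Field F] [Fintype F] (q : ℕ)
    (hq : Odd q) (hq' : IsPrimePow q) (hcard : Fintype.card F = q)
    (hmod : q % 12 = 1 ∨ q % 12 = 11)
    (x : Matrix.SpecialLinearGroup (Fin 2) F ⧸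
        Subgroup.center (Matrix.SpecialLinearGroup (Fin 2) F))
    (hx : orderOf x = 3) :
    Even (Nat.card (Subgroup.centralizer {x})) := by
  classical
  have hchar2 : ringChar F ≠ 2 := by
    intro h
    have he := FiniteField.even_card_of_char_two h
    rw [hcard] at he
    rw [Nat.odd_iff] at hq
    omega
  have h2 : (2 : F) ≠ 0 := Ring.two_ne_zero hchar2
  have h3ne : (3 : F) ≠ 0 := by
    intro h
    haveI := ringChar.charP F
    have hd : ringChar F ∣ 3 := by
      rw [← CharP.cast_eq_zero_iff F (ringChar F) 3]
      exact_mod_cast h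
    obtain ⟨n, hp, hc⟩ := FiniteField.card F (ringChar F)
    have hp3 : ringChar F = 3 := (Nat.prime_dvd_prime_iff_eq hp (by norm_num)).mp hd
    rw [hcard, hp3] at hc
    have h3q : 3 ∣ q := hc ▸ dvd_pow_self 3 n.ne_zero
    omega
  obtain ⟨s, hs⟩ := three_is_square q hcard hchar2 hmod
  have hs0 : s ≠ 0 := fun h => h3ne (by rw [hs, h, mul_zero])
  set a : F := s⁻¹ with hadef
  have ha3 : 3 * (a * a) = 1 := by rw [hs, hadef]; field_simp
  obtain ⟨A, hA⟩ := QuotientGroup.mk_surjective x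
  have hx1 : x ≠ 1 := by intro h; rw [h, orderOf_one] at hx; omega
  have hAnc : A ∉ Subgroup.center (Matrix.SpecialLinearGroup (Fin 2) F) := by
    intro h; exact hx1 (hA ▸ (QuotientGroup.eq_one_iff A).mpr h)
  have hx3 : A ^ 3 ∈ Subgroup.center (Matrix.SpecialLinearGroup (Fin 2) F) := by
    rw [← QuotientGroup.eq_one_iff]
    have h' : (QuotientGroup.mk (A ^ 3) :
        Matrix.SpecialLinearGroup (Fin 2) F ⧸ _) = x ^ 3 := by rw [← hA]; rfl
    rw [h', ← hx, pow_orderOf_eq_one]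
  obtain ⟨r, hr2, hr⟩ := Matrix.SpecialLinearGroup.mem_center_iff.mp hx3
  rw [Fintype.card_fin] at hr2
  have hr2' : r * r = 1 := by rw [← sq]; exact hr2
  have hdetA : Matrix.det (A : Matrix (Fin 2) (Fin 2) F) = 1 := A.prop
  set M : Matrix (Fin 2) (Fin 2) F := (A : Matrix (Fin 2) (Fin 2) F) with hMdef
  set t : F := M.trace with ht
  have hCH : M * M = t • M - 1 := by
    have h' := cayley2 M; rw [hdetA, one_smul] at h'; exact h'
  have hA3m : M * M * M = (t * t - 1) • M - t • 1 := by
    rw [hCH, sub_mul, smul_mul_assoc, hCH, one_mul, smul_sub, smul_smul, sub_smul, one_smul]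
    abel
  have hA3m' : M * M * M = r • (1 : Matrix (Fin 2) (Fin 2) F) := by
    have hcoe : ((A ^ 3 : Matrix.SpecialLinearGroup (Fin 2) F) :
        Matrix (Fin 2) (Fin 2) F) = M * M * M := by
      rw [pow_succ, pow_two]; simp [hMdef]
    rw [← hcoe, ← hr, Matrix.scalar_apply, Matrix.smul_one_eq_diagonal]
  have hkey : (t * t - 1) • M = (r + t) • (1 : Matrix (Fin 2) (Fin 2) F) := by
    have h' := hA3m.symm.trans hA3m'
    rw [sub_eq_iff_eq_add] at h'
    rw [h', ← add_smul]
  have htt : t * t - 1 = 0 := by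
    by_contra h
    apply hAnc
    rw [Matrix.SpecialLinearGroup.mem_center_iff]
    have hMeq : M = ((t * t - 1)⁻¹ * (r + t)) • (1 : Matrix (Fin 2) (Fin 2) F) := by
      rw [mul_smul, ← hkey, smul_smul, inv_mul_cancel₀ h, one_smul]
    refine ⟨(t * t - 1)⁻¹ * (r + t), ?_, ?_⟩
    · have hd := hdetA
      rw [hMeq, Matrix.det_smul, Matrix.det_one, mul_one, Fintype.card_fin] at hd
      rw [Fintype.card_fin]
      exact hd
    · rw [Matrix.scalar_apply, ← Matrix.smul_one_eq_diagonal, ← hMeq]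
  have htr : t = -r := by
    have h0 : (r + t) • (1 : Matrix (Fin 2) (Fin 2) F) = 0 := by
      rw [← hkey, htt, zero_smul]
    have h00 := congrFun (congrFun h0 0) 0
    simp [Matrix.one_apply] at h00
    linear_combination h00
  set b : F := 2 * a * r with hbdef
  have hdetN : (a • 1 + b • M).det = 1 := by
    rw [det_aux, hdetA, ← ht, htr]
    simp only [hbdef]
    linear_combination (2*a*a) * hr2' + ha3
  set B : Matrix.SpecialLinearGroup (Fin 2) F := ⟨a • 1 + b • M, hdetN⟩ with hBdef
  have hNN : (a • 1 + b • M) * (a • 1 + b • M) = (-1 : Matrix (Fin 2) (Fin 2) F) := by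
    have hMM : M * M = (-r) • M - 1 := by rw [hCH, htr]
    rw [add_mul, mul_add, mul_add, smul_mul_smul_comm, smul_mul_smul_comm,
      smul_mul_smul_comm, smul_mul_smul_comm, one_mul, one_mul, mul_one, hMM]
    match_scalars
    · simp only [hbdef]; linear_combination (-4*a*a) * hr2' - ha3
    · simp only [hbdef]; linear_combination (-4*a*a*r) * hr2'
  have hBB : B * B ∈ Subgroup.center (Matrix.SpecialLinearGroup (Fin 2) F) := by
    rw [Matrix.SpecialLinearGroup.mem_center_iff]
    refine ⟨-1, by rw [Fintype.card_fin]; ring, ?_⟩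
    rw [Matrix.scalar_apply, ← Matrix.smul_one_eq_diagonal]
    have : ((B * B : Matrix.SpecialLinearGroup (Fin 2) F) :
        Matrix (Fin 2) (Fin 2) F) = (a • 1 + b • M) * (a • 1 + b • M) := rfl
    rw [this, hNN, neg_smul, one_smul]
  have hBnc : B ∉ Subgroup.center (Matrix.SpecialLinearGroup (Fin 2) F) := by
    intro h
    obtain ⟨c, hc2, hc⟩ := Matrix.SpecialLinearGroup.mem_center_iff.mp h
    have hBc : a • (1 : Matrix (Fin 2) (Fin 2) F) + b • M = c • 1 := by
      have h' := hc
      rw [Matrix.scalar_apply, ← Matrix.smul_one_eq_diagonal] at h'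
      exact h'.symm
    rw [Fintype.card_fin] at hc2
    have h1 : (-1 : Matrix (Fin 2) (Fin 2) F) = 1 := by
      rw [← hNN, hBc, smul_mul_smul_comm, one_mul, ← sq, hc2, one_smul]
    have h00 := congrFun (congrFun h1 0) 0
    simp [Matrix.one_apply] at h00
    exact h2 (by linear_combination -h00)
  haveI : Fact (Nat.Prime 2) := ⟨Nat.prime_two⟩
  set y := (QuotientGroup.mk B :
      Matrix.SpecialLinearGroup (Fin 2) F ⧸ Subgroup.center (Matrix.SpecialLinearGroup (Fin 2) F))
    with hydef
  have hy2 : y ^ 2 = 1 := by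
    have h' : y ^ 2 = QuotientGroup.mk (B ^ 2) := rfl
    rw [h', QuotientGroup.eq_one_iff, pow_two]
    exact hBB
  have hy1 : y ≠ 1 := fun h => hBnc ((QuotientGroup.eq_one_iff B).mp h)
  have hyc : y ∈ Subgroup.centralizer {x} := by
    rw [Subgroup.mem_centralizer_singleton_iff, ← hA]
    have hcomm : B * A = A * B := by
      apply Subtype.ext
      show (a • 1 + b • M) * M = M * (a • 1 + b • M)
      rw [add_mul, mul_add, smul_mul_assoc, mul_smul_comm, smul_mul_assoc, mul_smul_comm,
        one_mul, mul_one]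
    show (QuotientGroup.mk B) * (QuotientGroup.mk A) =
      (QuotientGroup.mk A) * (QuotientGroup.mk B :
        Matrix.SpecialLinearGroup (Fin 2) F ⧸ _)
    rw [← QuotientGroup.mk_mul, ← QuotientGroup.mk_mul, hcomm]
  have hyo : orderOf y = 2 := orderOf_eq_prime hy2 hy1
  have hdvd : 2 ∣ Nat.card (Subgroup.centralizer {x}) := by
    have hd := Subgroup.orderOf_dvd_natCard _ hyc
    rw [hyo] at hd
    exact hd
  exact even_iff_two_dvd.mpr hdvd
end

section
/- Let F be a finite field of characteristic 3, let x ∈ SL_2(F) have order 3, and let w ∈ SL_2(F) be an element whose order is a power of 2 and which commutes with x. Then w = 1 or w = -1 (the negative of the identity matrix); i.e., every 2-power order element of SL_2(F) commuting with x is central. -/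
/-- Let `F` be a finite field of characteristic 3, let `x ∈ SL₂(F)` have order 3, and
let `w ∈ SL₂(F)` have 2-power order and commute with `x`. Then `w = 1` or `w = -1`,
i.e. `w` is central. -/
theorem SL2_char_three_two_power_commuting_is_central
    {F : Type*} [Field F] [Fintype F] [CharP F 3]
    (x w : Matrix.SpecialLinearGroup (Fin 2) F) (hx : orderOf x = 3)
    (hw : ∃ k : ℕ, orderOf w = 2 ^ k) (hcomm : w * x = x * w) :
    (w : Matrix (Fin 2) (Fin 2) F) = 1 ∨ (w : Matrix (Fin 2) (Fin 2) F) = -1 := by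
  obtain ⟨k, hk⟩ := hw
  haveI : Fact (Nat.Prime 3) := ⟨by norm_num⟩
  set X : Matrix (Fin 2) (Fin 2) F := (x : Matrix (Fin 2) (Fin 2) F) with hX
  set W : Matrix (Fin 2) (Fin 2) F := (w : Matrix (Fin 2) (Fin 2) F) with hW
  have hx3 : x ^ 3 = 1 := by rw [← hx]; exact pow_orderOf_eq_one x
  have hX3 : X ^ 3 = 1 := by
    rw [hX, ← Matrix.SpecialLinearGroup.coe_pow, hx3]; rfl
  set n : Matrix (Fin 2) (Fin 2) F := X - 1 with hn
  have hn3 : n ^ 3 = 0 := by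
    rw [hn, sub_pow_char_of_commute 3 (Commute.one_right X), hX3, one_pow, sub_self]
  have hxne : x ≠ 1 := by
    intro h; rw [h, orderOf_one] at hx; norm_num at hx
  have hnne : n ≠ 0 := by
    intro h
    apply hxne
    have : X = 1 := by rw [← sub_eq_zero]; exact h
    exact Subtype.coe_injective this
  set a : F := n 0 0 with ha
  set b : F := n 0 1 with hb
  set c : F := n 1 0 with hc
  set d : F := n 1 1 with hd
  have hdetn : a * d - b * c = 0 := by
    have h1 : n.det ^ 3 = 0 := by rw [← Matrix.det_pow, hn3]; simp
    have h2 : n.det = 0 := pow_eq_zero_iff (by norm_num) |>.mp h1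
    rw [Matrix.det_fin_two] at h2
    exact h2
  have hCHn : n * n = (a + d) • n := by
    ext i j
    fin_cases i <;> fin_cases j <;>
      simp [Matrix.mul_apply, Fin.sum_univ_two, ← ha, ← hb, ← hc, ← hd] <;>
      first
        | linear_combination -hdetn
        | linear_combination -2 * hdetn
        | linear_combination hdetn
        | linear_combination 2 * hdetn
        | ring
  have htr : a + d = 0 := by
    have h3 : ((a + d) ^ 2) • n = 0 := by
      have h4 : n ^ 3 = ((a + d) ^ 2) • n := by
        calc n ^ 3 = (n * n) * n := by rw [pow_succ, pow_succ, pow_one]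
        _ = ((a + d) • n) * n := by rw [hCHn]
        _ = (a + d) • (n * n) := by rw [Matrix.smul_mul]
        _ = (a + d) • ((a + d) • n) := by rw [hCHn]
        _ = ((a + d) ^ 2) • n := by rw [smul_smul, sq]
      rw [← h4, hn3]
    rcases smul_eq_zero.mp h3 with h | h
    · exact pow_eq_zero_iff (by norm_num) |>.mp h
    · exact absurd h hnne
  have hdne : d = -a := by linear_combination htr
  have ha2 : a * a + b * c = 0 := by linear_combination a * hdne - hdetn
  set p : F := W 0 0 with hp
  set q : F := W 0 1 with hq
  set r : F := W 1 0 with hr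
  set s : F := W 1 1 with hs
  have hdetW : p * s - q * r = 1 := by
    have h5 := w.2
    rw [Matrix.det_fin_two] at h5
    exact h5
  have hWn : W * n = n * W := by
    have hc' : W * X = X * W := by
      rw [hX, hW, ← Matrix.SpecialLinearGroup.coe_mul, ← Matrix.SpecialLinearGroup.coe_mul, hcomm]
    rw [hn, Matrix.mul_sub, Matrix.sub_mul, Matrix.mul_one, Matrix.one_mul, hc']
  have E00 : p * a + q * c = a * p + b * r := by
    have h6 := congrFun (congrFun hWn 0) 0
    simpa [Matrix.mul_apply, Fin.sum_univ_two, ← ha, ← hb, ← hc, ← hd, ← hp, ← hq, ← hr, ← hs]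
      using h6
  have E01 : p * b + q * d = a * q + b * s := by
    have h6 := congrFun (congrFun hWn 0) 1
    simpa [Matrix.mul_apply, Fin.sum_univ_two, ← ha, ← hb, ← hc, ← hd, ← hp, ← hq, ← hr, ← hs]
      using h6
  have E10 : r * a + s * c = c * p + d * r := by
    have h6 := congrFun (congrFun hWn 1) 0
    simpa [Matrix.mul_apply, Fin.sum_univ_two, ← ha, ← hb, ← hc, ← hd, ← hp, ← hq, ← hr, ← hs]
      using h6
  have hb2 : b * (p - s) = 2 * a * q := by linear_combination E01 - q * htr
  have hc2 : c * (p - s) = 2 * a * r := by linear_combination -E10 - r * htr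
  have key : (p - s) ^ 2 + 4 * (q * r) = 0 := by
    by_cases hbz : b = 0
    · have haz : a = 0 := by
        have h7 : a * a = 0 := by linear_combination ha2 - c * hbz
        exact mul_self_eq_zero.mp h7
      have hcz : c ≠ 0 := by
        intro hcz
        apply hnne
        ext i j
        fin_cases i <;> fin_cases j <;>
          simp [← ha, ← hb, ← hc, ← hd, haz, hbz, hcz, hdne]
      have hps : p = s := by
        have h8 : c * (p - s) = 0 := by rw [hc2, haz]; ring
        exact sub_eq_zero.mp ((mul_eq_zero.mp h8).resolve_left hcz)
      have hqz : q = 0 := by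
        have h9 : q * c = 0 := by linear_combination E00 + r * hbz
        exact (mul_eq_zero.mp h9).resolve_right hcz
      rw [hps, hqz]; ring
    · by_cases hcz : c = 0
      · have haz : a = 0 := by
          have h7 : a * a = 0 := by linear_combination ha2 - b * hcz
          exact mul_self_eq_zero.mp h7
        have hps : p = s := by
          have h8 : b * (p - s) = 0 := by rw [hb2, haz]; ring
          exact sub_eq_zero.mp ((mul_eq_zero.mp h8).resolve_left hbz)
        have hrz : r = 0 := by
          have h9 : b * r = 0 := by linear_combination q * hcz - E00
          exact (mul_eq_zero.mp h9).resolve_left hbz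
        rw [hps, hrz]; ring
      · have hbc : b * c * ((p - s) ^ 2 + 4 * (q * r)) = 0 := by
          linear_combination (c * (p - s)) * hb2 + (2 * a * q) * hc2 + (4 * (q * r)) * ha2
        rcases mul_eq_zero.mp hbc with h | h
        · rcases mul_eq_zero.mp h with h' | h'
          · exact absurd h' hbz
          · exact absurd h' hcz
        · exact h
  have h3zero : (3 : F) = 0 := by exact_mod_cast CharP.cast_eq_zero F 3
  have htrW : (p + s - 1) * (p + s + 1) = 0 := by
    linear_combination key + 4 * hdetW + h3zero
  rcases mul_eq_zero.mp htrW with ht | ht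
  · -- trace = 1 : W² = W - 1, W³ = -1, order divides 6
    have ht' : p + s = 1 := by linear_combination ht
    have hch : W * W = W - 1 := by
      ext i j
      fin_cases i <;> fin_cases j <;>
        simp [Matrix.mul_apply, Fin.sum_univ_two, Matrix.one_apply, ← hp, ← hq, ← hr, ← hs]
      · linear_combination -hdetW + p * ht'
      · linear_combination q * ht'
      · linear_combination r * ht'
      · linear_combination -hdetW + s * ht'
    have hW3 : W ^ 3 = -1 := by
      have e1 : W ^ 3 = (W * W) * W := by rw [pow_succ, pow_succ, pow_one]
      rw [e1, hch, Matrix.sub_mul, Matrix.one_mul, hch]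
      noncomm_ring
    have hw6 : w ^ 6 = 1 := by
      apply Subtype.coe_injective
      show ((w ^ 6 : Matrix.SpecialLinearGroup (Fin 2) F) : Matrix (Fin 2) (Fin 2) F)
          = ((1 : Matrix.SpecialLinearGroup (Fin 2) F) : Matrix (Fin 2) (Fin 2) F)
      have e3 : W ^ 6 = (W ^ 3) * (W ^ 3) := by rw [← pow_add]
      rw [Matrix.SpecialLinearGroup.coe_pow, Matrix.SpecialLinearGroup.coe_one, ← hW, e3, hW3]
      simp
    have hdvd : 2 ^ k ∣ 6 := by rw [← hk]; exact orderOf_dvd_of_pow_eq_one hw6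
    have hkle : k ≤ 1 := by
      by_contra hkg
      push_neg at hkg
      have : (4 : ℕ) ∣ 6 := dvd_trans (pow_dvd_pow 2 hkg : 2 ^ 2 ∣ 2 ^ k) hdvd
      norm_num at this
    have hw2 : w ^ 2 = 1 := by
      apply orderOf_dvd_iff_pow_eq_one.mp
      rw [hk]
      calc (2:ℕ) ^ k ∣ 2 ^ 1 := pow_dvd_pow 2 hkle
      _ = 2 := by norm_num
    have hW2 : W * W = 1 := by
      rw [hW, ← Matrix.SpecialLinearGroup.coe_mul, ← sq, hw2,
        Matrix.SpecialLinearGroup.coe_one]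
    right
    have hWeq : W = 1 + 1 := by
      have := hch.symm.trans hW2
      linear_combination (norm := noncomm_ring) this
    rw [hWeq]
    ext i j
    fin_cases i <;> fin_cases j <;> simp [Matrix.one_apply] <;> linear_combination h3zero
  · -- trace = -1 : W² = -W - 1, W³ = 1, order divides 3
    have ht' : p + s = -1 := by linear_combination ht
    have hch : W * W = -W - 1 := by
      ext i j
      fin_cases i <;> fin_cases j <;>
        simp [Matrix.mul_apply, Fin.sum_univ_two, Matrix.one_apply, ← hp, ← hq, ← hr, ← hs]
      · linear_combination -hdetW + p * ht'
      · linear_combination q * ht'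
      · linear_combination r * ht'
      · linear_combination -hdetW + s * ht'
    have hW3 : W ^ 3 = 1 := by
      have e1 : W ^ 3 = (W * W) * W := by rw [pow_succ, pow_succ, pow_one]
      rw [e1, hch, Matrix.sub_mul, Matrix.neg_mul, Matrix.one_mul, hch]
      noncomm_ring
    have hw3 : w ^ 3 = 1 := by
      apply Subtype.coe_injective
      show ((w ^ 3 : Matrix.SpecialLinearGroup (Fin 2) F) : Matrix (Fin 2) (Fin 2) F)
          = ((1 : Matrix.SpecialLinearGroup (Fin 2) F) : Matrix (Fin 2) (Fin 2) F)
      rw [Matrix.SpecialLinearGroup.coe_pow, Matrix.SpecialLinearGroup.coe_one, ← hW, hW3]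
    have hdvd : 2 ^ k ∣ 3 := by rw [← hk]; exact orderOf_dvd_of_pow_eq_one hw3
    have hk0 : k = 0 := by
      by_contra hkg
      have : (2 : ℕ) ∣ 3 := dvd_trans (pow_dvd_pow 2 (Nat.one_le_iff_ne_zero.mpr hkg) : 2 ^ 1 ∣ 2 ^ k) (by simpa using hdvd)
      norm_num at this
    have hw1 : w = 1 := orderOf_eq_one_iff.mp (by rw [hk, hk0, pow_zero])
    left
    rw [hW, hw1, Matrix.SpecialLinearGroup.coe_one]
end

section
/- Let F be a finite field of characteristic 3 and let x ∈ SL_3(F) be an element of order 3 such that (x - 1)² ≠ 0 (as a 3×3 matrix; i.e., x is a regular unipotent element, with Jordan form a single block J_3). Then the centralizer of x in SL_3(F) has odd order. -/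
/-!
In characteristic 3, `x³ = 1` gives `(x - 1)³ = x³ - 1 = 0`, so `N = x - 1` is nilpotent with
`N² ≠ 0`: for any `v` with `N² v ≠ 0`, the vectors `v, N v, N² v` form a basis. By Cauchy it
suffices to exclude an involution `g` commuting with `x`. Since `2 ≠ 0`, `v` splits as the sum of
`v + g v` and `v - g v`, eigenvectors of `g` for `1` and `-1`, and one of them, `w`, still has
`N² w ≠ 0`. Then `g` is scalar on the basis `w, N w, N² w`, so `g = ±1`; but `g ≠ 1` and
`det (-1) = -1 ≠ 1`.
-/

namespace Module.End

variable {K V : Type*} [Field K] [AddCommGroup V] [Module K V]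

theorem linearIndependent_pow_apply {N : Module.End K V} {n : ℕ} {w : V}
    (hN : (N ^ (n + 1)) w = 0) (hw : (N ^ n) w ≠ 0) :
    LinearIndependent K fun i : Fin (n + 1) => (N ^ (i : ℕ)) w := by
  rw [Fintype.linearIndependent_iff]
  intro g hg i
  induction i using WellFoundedLT.induction with
  | ind i ih =>
    -- Applying `N ^ (n - i)` kills the terms above `i`; those below `i` vanish by induction.
    have hvanish : ∀ j : Fin (n + 1), j ≠ i → g j • (N ^ (n - i + j)) w = 0 := by
      intro j hji
      rcases lt_or_gt_of_ne hji with hlt | hgt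
      · rw [ih j hlt, zero_smul]
      · obtain ⟨k, hk⟩ : ∃ k, n - i + j = k + (n + 1) := ⟨j - i - 1, by omega⟩
        rw [hk, pow_add, mul_apply, hN, map_zero, smul_zero]
    have := congrArg (N ^ (n - i)) hg
    simp only [map_sum, map_smul, ← mul_apply, ← pow_add, map_zero] at this
    rw [Finset.sum_eq_single i (fun j _ => hvanish j) (by simp),
      Nat.sub_add_cancel (Nat.lt_succ_iff.mp i.is_lt)] at this
    exact (smul_eq_zero.mp this).resolve_right hw

theorem eq_algebraMap_of_commute_of_apply_eq_smul {N M : Module.End K V}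
    {n : ℕ} (hV : finrank K V = n + 1) {w : V} (hN : (N ^ (n + 1)) w = 0) (hw : (N ^ n) w ≠ 0)
    (hMN : Commute M N) {c : K} (hMw : M w = c • w) : M = algebraMap K _ c := by
  let B := basisOfLinearIndependentOfCardEqFinrank (linearIndependent_pow_apply hN hw)
    (by rw [Fintype.card_fin, hV])
  refine B.ext fun i => ?_
  rw [coe_basisOfLinearIndependentOfCardEqFinrank, algebraMap_end_apply, ← mul_apply,
    (hMN.pow_right i).eq, mul_apply, hMw, map_smul]

theorem eq_one_or_eq_neg_one_of_sq_eq_one_of_commute {N M : Module.End K V} {n : ℕ}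
    (hV : finrank K V = n + 1) (h2 : (2 : K) ≠ 0)
    (hN : N ^ (n + 1) = 0) (hN' : N ^ n ≠ 0) (hMN : Commute M N) (hM : M ^ 2 = 1) :
    M = 1 ∨ M = -1 := by
  have eq_scalar {c : K} {w : V} (hw : (N ^ n) w ≠ 0) (hMw : M w = c • w) :
      M = algebraMap K _ c :=
    eq_algebraMap_of_commute_of_apply_eq_smul hV (by rw [hN, LinearMap.zero_apply]) hw hMN hMw
  obtain ⟨v, hv⟩ : ∃ v, (N ^ n) v ≠ 0 := by
    by_contra! h
    exact hN' (LinearMap.ext h)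
  have hMM : M (M v) = v := by rw [← mul_apply, ← sq, hM, one_apply]
  have hsplit : (N ^ n) (v + M v) + (N ^ n) (v - M v) ≠ 0 := by
    rw [← map_add, add_add_sub_cancel, ← two_smul K, map_smul]
    exact smul_ne_zero h2 hv
  by_cases hplus : (N ^ n) (v + M v) = 0
  · rw [hplus, zero_add] at hsplit
    right
    rw [eq_scalar hsplit (c := -1) (by rw [map_sub, hMM, neg_one_smul, neg_sub]), map_neg, map_one]
  · left
    rw [eq_scalar hplus (c := 1) (by rw [map_add, hMM, one_smul, add_comm]), map_one]

end Module.End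

theorem Matrix.eq_one_or_eq_neg_one_of_sq_eq_one_of_commute {K : Type*} [Field K] {n : ℕ}
    {A M : Matrix (Fin (n + 1)) (Fin (n + 1)) K} (h2 : (2 : K) ≠ 0) (hA : A ^ (n + 1) = 0)
    (hA' : A ^ n ≠ 0) (hMA : Commute M A) (hM : M ^ 2 = 1) : M = 1 ∨ M = -1 := by
  let e := Matrix.toLinAlgEquiv' (R := K) (n := Fin (n + 1))
  have := Module.End.eq_one_or_eq_neg_one_of_sq_eq_one_of_commute (n := n) (N := e A) (M := e M)
    (by simp) h2 (by rw [← map_pow, hA, map_zero])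
    (by rwa [← map_pow, ne_eq, map_eq_zero_iff _ e.injective])
    (hMA.map e) (by rw [← map_pow, hM, map_one])
  simpa only [← map_one e, ← map_neg, e.injective.eq_iff] using this

theorem Matrix.SpecialLinearGroup.coe_ne_neg_one {n R : Type*} [Fintype n] [DecidableEq n]
    [CommRing R] (hn : Odd (Fintype.card n)) (h2 : (2 : R) ≠ 0)
    (g : Matrix.SpecialLinearGroup n R) :
    (g : Matrix n n R) ≠ -1 := by
  intro hg
  have hdet := g.det_coe
  rw [hg, Matrix.det_neg, Matrix.det_one, mul_one, hn.neg_one_pow] at hdet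
  exact h2 (by linear_combination -hdet)

/-- Let `F` be a finite field of characteristic 3 and let `x ∈ SL₃(F)` have order 3
with `(x - 1)² ≠ 0` (a regular unipotent element, Jordan form `J₃`). Then the
centralizer of `x` in `SL₃(F)` has odd order. -/
theorem SL3_char_three_regular_unipotent_centralizer_odd
    {F : Type*} [Field F] [Fintype F] [CharP F 3]
    (x : Matrix.SpecialLinearGroup (Fin 3) F) (hx : orderOf x = 3)
    (hreg : ((x : Matrix (Fin 3) (Fin 3) F) - 1) ^ 2 ≠ 0) :
    Odd (Nat.card (Subgroup.centralizer {x})) := by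
  have : Fact (Nat.Prime 3) := ⟨Nat.prime_three⟩
  have h2 : (2 : F) ≠ 0 := fun h => absurd ((CharP.cast_eq_zero_iff F 3 2).mp h) (by decide)
  have hnil : ((x : Matrix (Fin 3) (Fin 3) F) - 1) ^ 3 = 0 := by
    rw [sub_pow_char_of_commute 3 (Commute.one_right _), one_pow,
      ← Matrix.SpecialLinearGroup.coe_pow, orderOf_dvd_iff_pow_eq_one.mp hx.dvd,
      Matrix.SpecialLinearGroup.coe_one, sub_self]
  rw [← Nat.not_even_iff_odd]
  intro heven
  obtain ⟨g, hg⟩ := exists_prime_orderOf_dvd_card' 2 heven.two_dvd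
  have hcomm : Commute (g : Matrix (Fin 3) (Fin 3) F) ((x : Matrix (Fin 3) (Fin 3) F) - 1) :=
    (Commute.map (Subgroup.mem_centralizer_singleton_iff.mp g.2)
      Matrix.SpecialLinearGroup.coeMonoidHom).sub_right (Commute.one_right _)
  have hsq : (g : Matrix (Fin 3) (Fin 3) F) ^ 2 = 1 := by
    rw [← Matrix.SpecialLinearGroup.coe_pow, ← Subgroup.coe_pow, ← hg, pow_orderOf_eq_one,
      Subgroup.coe_one, Matrix.SpecialLinearGroup.coe_one]
  rcases Matrix.eq_one_or_eq_neg_one_of_sq_eq_one_of_commute h2 hnil hreg hcomm hsq with h | h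
  · rw [show g = 1 from Subtype.ext (Subtype.ext h), orderOf_one] at hg
    exact absurd hg (by decide)
  · exact Matrix.SpecialLinearGroup.coe_ne_neg_one (by decide) h2 _ h
end

section
/- Let F be a finite field of characteristic 3 and let x ∈ SL_3(F) be an element of order 3. Then x normalizes some nontrivial 2-subgroup of SL_3(F): there exists a subgroup P of SL_3(F) with P nontrivial, P a 2-group, and x * P * x⁻¹ = P. -/
/-!
Since the characteristic is 3, `(x - 1)^3 = x^3 - 1 = 0`, so `x` is a nontrivial unipotent
matrix and is conjugate in `GL₃(F)` to `1 + J` with `J` a nilpotent Jordan matrix of type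
`(3)` or `(2, 1)`. Conjugation by `GL₃(F)` preserves `SL₃(F)`, so it suffices to treat these two
normal forms. The subregular one is block diagonal and commutes with the involution
`diag(-1, -1, 1)`. The regular one is, in characteristic 3, conjugate to the cyclic permutation
matrix, which permutes the diagonal entries of the Klein four-group of diagonal sign matrices.
-/

open Matrix Equiv

def NormalizesNontrivialPSubgroup (p : ℕ) {G : Type*} [Group G] (x : G) : Prop :=
  ∃ P : Subgroup G, P ≠ ⊥ ∧ IsPGroup p P ∧ x ∈ Subgroup.normalizer (P : Set G)

namespace NormalizesNontrivialPSubgroup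

variable {p : ℕ} {G H : Type*} [Group G] [Group H]

theorem map_mulEquiv {x : G} (hx : NormalizesNontrivialPSubgroup p x) (φ : G ≃* H) :
    NormalizesNontrivialPSubgroup p (φ x) := by
  obtain ⟨P, hP, hPp, hxP⟩ := hx
  refine ⟨P.map φ.toMonoidHom, ?_, hPp.map _, ?_⟩
  · rwa [Ne, Subgroup.map_eq_bot_iff_of_injective _ φ.injective]
  · rw [← Subgroup.map_equiv_normalizer_eq P φ]
    exact ⟨x, hxP, rfl⟩

theorem of_commute [Fact p.Prime] {x t : G} (ht : t ^ p = 1) (ht1 : t ≠ 1) (hxt : Commute x t) :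
    NormalizesNontrivialPSubgroup p x := by
  refine ⟨Subgroup.zpowers t, by rwa [Ne, Subgroup.zpowers_eq_bot],
    IsPGroup.of_card (n := 1) ?_, Subgroup.centralizer_le_normalizer _ ?_⟩
  · rw [Nat.card_zpowers, orderOf_eq_prime ht ht1, pow_one]
  · rintro _ ⟨k, rfl⟩
    exact (hxt.zpow_right k).eq.symm

end NormalizesNontrivialPSubgroup

theorem Matrix.permMatrix_mul_diagonal {n R : Type*} [Fintype n] [DecidableEq n] [CommRing R]
    (σ : Perm n) (f : n → R) :
    σ.permMatrix R * diagonal f = diagonal (f ∘ σ) * σ.permMatrix R := by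
  ext i j
  by_cases h : σ i = j <;> simp [PEquiv.toMatrix_apply, h]

namespace Matrix.SpecialLinearGroup

variable {n R : Type*} [Fintype n] [DecidableEq n] [CommRing R]

def conjUnit (u : (Matrix n n R)ˣ) : SpecialLinearGroup n R ≃* SpecialLinearGroup n R where
  toFun a := ⟨u * a * ↑u⁻¹, by rw [det_mul, det_mul, a.2, mul_one, ← det_mul, u.mul_inv, det_one]⟩
  invFun a := ⟨↑u⁻¹ * a * u, by rw [det_mul, det_mul, a.2, mul_one, ← det_mul, u.inv_mul, det_one]⟩
  left_inv a := Subtype.ext <| by simp [mul_assoc]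
  right_inv a := Subtype.ext <| by simp [mul_assoc]
  map_mul' a b := Subtype.ext <|
    show (u : Matrix n n R) * (a * b) * ↑u⁻¹ = u * a * ↑u⁻¹ * (u * b * ↑u⁻¹) by simp [mul_assoc]

theorem normalizesNontrivialPSubgroup_of_mul_eq_mul {p : ℕ} {x e : SpecialLinearGroup n R}
    {g : Matrix n n R} (hg : IsUnit g) (hxe : (x : Matrix n n R) * g = g * e)
    (he : NormalizesNontrivialPSubgroup p e) : NormalizesNontrivialPSubgroup p x := by
  obtain ⟨u, rfl⟩ := hg
  convert he.map_mulEquiv (conjUnit u)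
  refine Subtype.ext ?_
  change (x : Matrix n n R) = u * e * ((u⁻¹ : (Matrix n n R)ˣ) : Matrix n n R)
  rw [← hxe, mul_assoc, u.mul_inv, mul_one]

variable (n R) in
def signDiagonal : Subgroup (SpecialLinearGroup n R) where
  carrier := {a | ∃ f : n → R, (∀ i, f i ^ 2 = 1) ∧ (a : Matrix n n R) = diagonal f}
  one_mem' := ⟨1, by simp, diagonal_one.symm⟩
  mul_mem' := by
    rintro a b ⟨f, hf, ha⟩ ⟨g, hg, hb⟩
    exact ⟨f * g, by simp [mul_pow, hf, hg], by simp [ha, hb]⟩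
  inv_mem' := by
    rintro a ⟨f, hf, ha⟩
    have : a * a = 1 := Subtype.ext <| by
      simp [ha, ← sq, diagonal_pow, show f ^ 2 = 1 from funext hf]
    rw [inv_eq_of_mul_eq_one_right this]
    exact ⟨f, hf, ha⟩

theorem sq_eq_one_of_mem_signDiagonal {a : SpecialLinearGroup n R} (ha : a ∈ signDiagonal n R) :
    a ^ 2 = 1 := by
  obtain ⟨f, hf, ha⟩ := ha
  exact Subtype.ext <| by simp [ha, diagonal_pow, show f ^ 2 = 1 from funext hf]

theorem isPGroup_signDiagonal : IsPGroup 2 (signDiagonal n R) :=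
  fun a => ⟨1, Subtype.ext <| by simpa using sq_eq_one_of_mem_signDiagonal a.2⟩

theorem mem_signDiagonal_iff_of_mul_eq {σ : Perm n} {c a b : SpecialLinearGroup n R}
    (hc : (c : Matrix n n R) = σ.permMatrix R) (h : c * a = b * c) :
    a ∈ signDiagonal n R ↔ b ∈ signDiagonal n R := by
  have hcu : IsUnit (c : Matrix n n R) := (isUnit_iff_isUnit_det _).mpr (by simp)
  have hmat : (c : Matrix n n R) * a = b * c := congrArg Subtype.val h
  constructor
  · rintro ⟨f, hf, ha⟩
    refine ⟨f ∘ σ, fun i => hf (σ i), hcu.mul_right_cancel ?_⟩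
    rw [← hmat, ha, hc, permMatrix_mul_diagonal]
  · rintro ⟨f, hf, hb⟩
    refine ⟨f ∘ σ.symm, fun i => hf (σ.symm i), hcu.mul_left_cancel ?_⟩
    rw [hmat, hb, hc, permMatrix_mul_diagonal]
    simp [Function.comp_def]

theorem mem_normalizer_signDiagonal {σ : Perm n} {c : SpecialLinearGroup n R}
    (hc : (c : Matrix n n R) = σ.permMatrix R) :
    c ∈ Subgroup.normalizer (signDiagonal n R : Set (SpecialLinearGroup n R)) :=
  Subgroup.mem_normalizer_iff.mpr fun _ => mem_signDiagonal_iff_of_mul_eq hc (by group)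

end Matrix.SpecialLinearGroup

open Matrix.SpecialLinearGroup

section NilpotentNormalForm

variable (R : Type*) [CommRing R]

def regularNilpotent : Matrix (Fin 3) (Fin 3) R := !![0, 0, 0; 1, 0, 0; 0, 1, 0]

def subregularNilpotent : Matrix (Fin 3) (Fin 3) R := !![0, 0, 0; 1, 0, 0; 0, 0, 0]

variable {K : Type*} [Field K] {N : Matrix (Fin 3) (Fin 3) K}

theorem exists_mulVec_ne_zero_of_ne_zero {m n : Type*} [Fintype n] {A : Matrix m n K}
    (hA : A ≠ 0) : ∃ v, A *ᵥ v ≠ 0 := by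
  contrapose! hA
  exact ext_iff_mulVec.mpr fun v => by simp [hA]

theorem exists_mulVec_eq_zero_notMem_span (hN : N ^ 2 = 0) (u : Fin 3 → K) :
    ∃ w, N *ᵥ w = 0 ∧ w ∉ K ∙ u := by
  by_contra! h
  have hker : LinearMap.ker (toLin' N) ≤ K ∙ u := fun w hw => h w hw
  have hrange : LinearMap.range (toLin' N) ≤ LinearMap.ker (toLin' N) :=
    LinearMap.range_le_ker_iff.mpr (by rw [← toLin'_mul, ← sq, hN, map_zero])
  have h1 := (Submodule.finrank_mono hker).trans (finrank_span_le_card ({u} : Set (Fin 3 → K)))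
  have h2 := Submodule.finrank_mono hrange
  have h3 := LinearMap.finrank_range_add_finrank_ker (toLin' N)
  simp only [Module.finrank_fin_fun, Set.toFinset_singleton, Finset.card_singleton] at h1 h3
  omega

theorem exists_isUnit_mul_eq_mul_regularNilpotent (hN3 : N ^ 3 = 0) (hN2 : N ^ 2 ≠ 0) :
    ∃ g, IsUnit g ∧ N * g = g * regularNilpotent K := by
  obtain ⟨v, hv⟩ := exists_mulVec_ne_zero_of_ne_zero hN2
  rw [sq, ← mulVec_mulVec] at hv
  have hv3 : N *ᵥ N *ᵥ N *ᵥ v = 0 := by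
    rw [mulVec_mulVec, mulVec_mulVec, ← pow_three', hN3, zero_mulVec]
  let b : Fin 3 → Fin 3 → K := ![v, N *ᵥ v, N *ᵥ N *ᵥ v]
  refine ⟨(of b)ᵀ, linearIndependent_cols_iff_isUnit.mp ?_, ?_⟩
  · rw [show (of b)ᵀ.col = b from rfl, Fintype.linearIndependent_iff]
    intro c hc
    simp only [Fin.sum_univ_three, b, cons_val_zero, cons_val_one, cons_val_two, head_cons,
      tail_cons] at hc
    have h0 : c 0 = 0 := by
      have := congrArg (N *ᵥ N *ᵥ ·) hc
      simp only [mulVec_add, mulVec_smul, hv3, mulVec_zero, smul_zero, add_zero] at this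
      exact (smul_eq_zero.mp this).resolve_right hv
    have h1 : c 1 = 0 := by
      have := congrArg (N *ᵥ ·) hc
      simp only [mulVec_add, mulVec_smul, hv3, h0, mulVec_zero, zero_smul, smul_zero, add_zero,
        zero_add] at this
      exact (smul_eq_zero.mp this).resolve_right hv
    have h2 : c 2 = 0 := by
      simp only [h0, h1, zero_smul, zero_add] at hc
      exact (smul_eq_zero.mp hc).resolve_right hv
    intro i
    fin_cases i <;> assumption
  · ext i j
    change (N *ᵥ b j) i = _
    fin_cases j <;>
      simp [b, regularNilpotent, mul_apply, Fin.sum_univ_three, -mulVec_mulVec, hv3]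

theorem exists_isUnit_mul_eq_mul_subregularNilpotent (hN2 : N ^ 2 = 0) (hN : N ≠ 0) :
    ∃ g, IsUnit g ∧ N * g = g * subregularNilpotent K := by
  obtain ⟨v, hv⟩ := exists_mulVec_ne_zero_of_ne_zero hN
  obtain ⟨w, hw, hwv⟩ := exists_mulVec_eq_zero_notMem_span hN2 (N *ᵥ v)
  have hv2 : N *ᵥ N *ᵥ v = 0 := by rw [mulVec_mulVec, ← sq, hN2, zero_mulVec]
  let b : Fin 3 → Fin 3 → K := ![v, N *ᵥ v, w]
  refine ⟨(of b)ᵀ, linearIndependent_cols_iff_isUnit.mp ?_, ?_⟩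
  · rw [show (of b)ᵀ.col = b from rfl, Fintype.linearIndependent_iff]
    intro c hc
    simp only [Fin.sum_univ_three, b, cons_val_zero, cons_val_one, cons_val_two, head_cons,
      tail_cons] at hc
    have h0 : c 0 = 0 := by
      have := congrArg (N *ᵥ ·) hc
      simp only [mulVec_add, mulVec_smul, hv2, hw, mulVec_zero, smul_zero, add_zero] at this
      exact (smul_eq_zero.mp this).resolve_right hv
    rw [h0, zero_smul, zero_add] at hc
    have h2 : c 2 = 0 := by
      by_contra h2
      refine hwv ((Submodule.smul_mem_iff _ h2).mp ?_)
      rw [eq_neg_of_add_eq_zero_right hc]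
      exact neg_mem (Submodule.smul_mem _ _ (Submodule.mem_span_singleton_self _))
    have h1 : c 1 = 0 := by
      rw [h2, zero_smul, add_zero] at hc
      exact (smul_eq_zero.mp hc).resolve_right hv
    intro i
    fin_cases i <;> assumption
  · ext i j
    change (N *ᵥ b j) i = _
    fin_cases j <;>
      simp [b, subregularNilpotent, mul_apply, Fin.sum_univ_three, -mulVec_mulVec, hv2, hw]

end NilpotentNormalForm

section UnipotentNormalForm

variable (R : Type*) [CommRing R]

def regularUnipotent : SpecialLinearGroup (Fin 3) R :=
  ⟨1 + regularNilpotent R, by simp [det_fin_three, regularNilpotent]⟩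

def subregularUnipotent : SpecialLinearGroup (Fin 3) R :=
  ⟨1 + subregularNilpotent R, by simp [det_fin_three, subregularNilpotent]⟩

def diagNegOneNegOneOne : SpecialLinearGroup (Fin 3) R :=
  ⟨diagonal ![-1, -1, 1], by simp [det_diagonal, Fin.prod_univ_three]⟩

def finRotateSL : SpecialLinearGroup (Fin 3) R :=
  ⟨(finRotate 3).permMatrix R, by simp [sign_finRotate]⟩

variable {R}

theorem diagNegOneNegOneOne_mem_signDiagonal :
    diagNegOneNegOneOne R ∈ signDiagonal (Fin 3) R :=
  ⟨![-1, -1, 1], fun i => by fin_cases i <;> simp, rfl⟩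

theorem diagNegOneNegOneOne_ne_one (hR : (-1 : R) ≠ 1) : diagNegOneNegOneOne R ≠ 1 := fun h =>
  hR <| by simpa [diagNegOneNegOneOne] using congrArg (fun a => a.1 0 0) h

theorem commute_subregularUnipotent_diagNegOneNegOneOne :
    Commute (subregularUnipotent R) (diagNegOneNegOneOne R) := Subtype.ext <| by
  change (1 + subregularNilpotent R) * diagonal ![-1, -1, 1]
    = diagonal ![-1, -1, 1] * (1 + subregularNilpotent R)
  ext i j
  fin_cases i <;> fin_cases j <;> simp [subregularNilpotent, mul_apply, Fin.sum_univ_three]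

/-- The columns are `e₀, U² e₀, U e₀` for `U = regularUnipotent R`, and `U³ = 1` in
characteristic 3. -/
theorem regularUnipotent_mul_eq_mul_finRotateSL [CharP R 3] :
    (regularUnipotent R : Matrix (Fin 3) (Fin 3) R) * !![1, 1, 1; 0, -1, 1; 0, 1, 0]
      = !![1, 1, 1; 0, -1, 1; 0, 1, 0] * (finRotateSL R : Matrix (Fin 3) (Fin 3) R) := by
  have h3 : (3 : R) = 0 := by exact_mod_cast CharP.cast_eq_zero R 3
  ext i j
  fin_cases i <;> fin_cases j <;>
    simp [regularUnipotent, regularNilpotent, finRotateSL, mul_apply, Fin.sum_univ_three,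
      PEquiv.toMatrix_apply]
  linear_combination h3

theorem normalizesNontrivialPSubgroup_subregularUnipotent (hR : (-1 : R) ≠ 1) :
    NormalizesNontrivialPSubgroup 2 (subregularUnipotent R) :=
  .of_commute (sq_eq_one_of_mem_signDiagonal diagNegOneNegOneOne_mem_signDiagonal)
    (diagNegOneNegOneOne_ne_one hR) commute_subregularUnipotent_diagNegOneNegOneOne

theorem normalizesNontrivialPSubgroup_finRotateSL (hR : (-1 : R) ≠ 1) :
    NormalizesNontrivialPSubgroup 2 (finRotateSL R) :=
  ⟨signDiagonal (Fin 3) R,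
    fun h => diagNegOneNegOneOne_ne_one hR <|
      (Subgroup.eq_bot_iff_forall _).mp h _ diagNegOneNegOneOne_mem_signDiagonal,
    isPGroup_signDiagonal, mem_normalizer_signDiagonal rfl⟩

theorem normalizesNontrivialPSubgroup_regularUnipotent [CharP R 3] (hR : (-1 : R) ≠ 1) :
    NormalizesNontrivialPSubgroup 2 (regularUnipotent R) :=
  normalizesNontrivialPSubgroup_of_mul_eq_mul
    ((isUnit_iff_isUnit_det _).mpr (by simp [det_fin_three]))
    regularUnipotent_mul_eq_mul_finRotateSL (normalizesNontrivialPSubgroup_finRotateSL hR)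

end UnipotentNormalForm

theorem SL3_char_three_orderThree_normalizes_two_subgroup_general
    {F : Type*} [Field F] [CharP F 3]
    (x : Matrix.SpecialLinearGroup (Fin 3) F) (hx : orderOf x = 3) :
    ∃ P : Subgroup (Matrix.SpecialLinearGroup (Fin 3) F),
      P ≠ ⊥ ∧ IsPGroup 2 P ∧ x ∈ Subgroup.normalizer (P : Set (Matrix.SpecialLinearGroup (Fin 3) F)) := by
  have hF : (-1 : F) ≠ 1 := Ring.neg_one_ne_one_of_char_ne_two (by rw [ringChar.eq F 3]; decide)
  set N := (x : Matrix (Fin 3) (Fin 3) F) - 1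
  have hN3 : N ^ 3 = 0 := by
    have hx3 : x ^ 3 = 1 := orderOf_dvd_iff_pow_eq_one.mp hx.dvd
    rw [sub_pow_char_of_commute _ (Commute.one_right _), one_pow, sub_eq_zero]
    exact congrArg Subtype.val hx3
  have hN : N ≠ 0 := fun h => by
    have : x = 1 := Subtype.ext (sub_eq_zero.mp h)
    simp [this] at hx
  have hx_mul {g J : Matrix (Fin 3) (Fin 3) F} (h : N * g = g * J) :
      (x : Matrix (Fin 3) (Fin 3) F) * g = g * (1 + J) := by
    rw [mul_add, mul_one, ← h, sub_mul, one_mul, add_sub_cancel]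
  rcases eq_or_ne (N ^ 2) 0 with hN2 | hN2
  · obtain ⟨g, hg, hNg⟩ := exists_isUnit_mul_eq_mul_subregularNilpotent hN2 hN
    exact normalizesNontrivialPSubgroup_of_mul_eq_mul hg (hx_mul hNg)
      (normalizesNontrivialPSubgroup_subregularUnipotent hF)
  · obtain ⟨g, hg, hNg⟩ := exists_isUnit_mul_eq_mul_regularNilpotent hN3 hN2
    exact normalizesNontrivialPSubgroup_of_mul_eq_mul hg (hx_mul hNg)
      (normalizesNontrivialPSubgroup_regularUnipotent hF)

/-- Let `F` be a finite field of characteristic 3 and let `x ∈ SL₃(F)` have order 3.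
Then `x` normalizes some nontrivial 2-subgroup of `SL₃(F)`. -/
theorem SL3_char_three_orderThree_normalizes_two_subgroup
    {F : Type*} [Field F] [Fintype F] [CharP F 3]
    (x : Matrix.SpecialLinearGroup (Fin 3) F) (hx : orderOf x = 3) :
    ∃ P : Subgroup (Matrix.SpecialLinearGroup (Fin 3) F),
      P ≠ ⊥ ∧ IsPGroup 2 P ∧ x ∈ Subgroup.normalizer (P : Set (Matrix.SpecialLinearGroup (Fin 3) F)) :=
  SL3_char_three_orderThree_normalizes_two_subgroup_general x hx
end

section
/- Let F be a finite field with |F| = 3^a where a is odd, let x ∈ SL_4(F) be an element of order 3 with (x - 1)² ≠ 0 (as a 4×4 matrix; i.e., x has Jordan form J_3 ⊕ J_1), and let w ∈ SL_4(F) be an element whose order is a power of 2 and which commutes with x. Then w = 1 or w = -1 (the negative of the identity matrix); i.e., every 2-power order element of SL_4(F) commuting with x is central. -/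
/-!
Put `N = x - 1`. In characteristic 3, `N ^ 3 = x ^ 3 - 1 = 0`, and `N ^ 2 ≠ 0`, so `N` has Jordan
type `(3, 1)`: there is a basis `N²v, Nv, z, v` with `N z = 0`. Every matrix commuting with `N` is
upper triangular in this basis, with diagonal `(c, c, e, c)`. Since `w` has `2`-power order, so has
`c` in `F^×`, whose `2`-part is `2` because `3 ^ a - 1 ≡ 2 [MOD 4]`; hence `c = ±1`, and
`det w = c ^ 3 * e = 1` forces `e = c`. Then `(w - c) ^ 3 = 0`, so `w ^ 3 = c` in characteristic 3,
and `w ^ 6 = 1` together with the `2`-power order gives `w ^ 2 = 1`, whence `w = w ^ 3 = c`.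
-/

open Module

theorem Nat.three_pow_mod_four_of_odd {a : ℕ} (ha : Odd a) : 3 ^ a % 4 = 3 := by
  obtain ⟨m, rfl⟩ := ha
  rw [pow_succ, pow_mul, Nat.mul_mod, Nat.pow_mod]
  norm_num

theorem sq_eq_one_of_pow_two_pow_eq_one_of_pow_two_mul_eq_one {M : Type*} [Monoid M] {g : M}
    {k m : ℕ} (hm : Odd m) (hk : g ^ 2 ^ k = 1) (hm' : g ^ (2 * m) = 1) : g ^ 2 = 1 := by
  rw [← orderOf_dvd_iff_pow_eq_one] at hk hm' ⊢
  have hcop : (orderOf g).Coprime m :=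
    (Nat.Coprime.pow_left k (Nat.coprime_two_left.mpr hm)).coprime_dvd_left hk
  exact hcop.dvd_of_dvd_mul_right hm'

theorem FiniteField.sq_eq_one_of_pow_two_pow_eq_one {K : Type*} [Field K] [Fintype K]
    (hK : Fintype.card K % 4 = 3) {c : K} {k : ℕ} (hc : c ^ 2 ^ k = 1) : c ^ 2 = 1 := by
  have hc0 : c ≠ 0 := by
    rintro rfl
    simp at hc
  refine sq_eq_one_of_pow_two_pow_eq_one_of_pow_two_mul_eq_one
    (m := (Fintype.card K - 1) / 2) (Nat.odd_iff.mpr (by omega)) hc ?_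
  rw [show 2 * ((Fintype.card K - 1) / 2) = Fintype.card K - 1 by omega]
  exact FiniteField.pow_card_sub_one_eq_one c hc0

theorem eq_of_sub_pow_three_eq_zero {R : Type*} [Ring R] [CharP R 3] {g c : R} {k : ℕ}
    (hgc : Commute g c) (hc : c ^ 2 = 1) (hnil : (g - c) ^ 3 = 0) (hg : g ^ 2 ^ k = 1) :
    g = c := by
  have hg3 : g ^ 3 = c := by
    rw [sub_pow_char_of_commute 3 hgc, sub_eq_zero] at hnil
    rw [hnil, pow_succ, hc, one_mul]
  have hg2 : g ^ 2 = 1 :=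
    sq_eq_one_of_pow_two_pow_eq_one_of_pow_two_mul_eq_one (m := 3) (by decide) hg
      (by rw [pow_mul', hg3, hc])
  rw [← hg3, pow_succ', hg2, mul_one]

/-- The general endomorphism commuting with a nilpotent `f` of Jordan type `(3, 1)`, written in the
basis `(f (f v), f v, z, v)` with `f z = 0`. -/
def centralizerMatrix {K : Type*} [Zero K] (c e p q r s : K) : Matrix (Fin 4) (Fin 4) K :=
  !![c, q, s, p; 0, c, 0, q; 0, 0, e, r; 0, 0, 0, c]

section
variable {K : Type*} [CommRing K] (c e p q r s : K)

theorem det_centralizerMatrix : (centralizerMatrix c e p q r s).det = c ^ 3 * e := by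
  simp [centralizerMatrix, Matrix.det_succ_row_zero, Fin.sum_univ_succ]
  ring

theorem centralizerMatrix_sub_smul_one_pow_three :
    (centralizerMatrix c c p q r s - c • 1) ^ 3 = 0 := by
  ext i j
  fin_cases i <;> fin_cases j <;>
    simp [centralizerMatrix, pow_succ, Matrix.mul_apply, Fin.sum_univ_four, Matrix.one_apply]

end

theorem Module.End.apply_apply_apply_eq_zero_of_pow_three_eq_zero {R M : Type*} [Semiring R]
    [AddCommMonoid M] [Module R M] {f : Module.End R M} (hf : f ^ 3 = 0) (u : M) :
    f (f (f u)) = 0 := by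
  simpa [pow_succ] using LinearMap.congr_fun hf u

section
variable {K V : Type*} [Field K] [AddCommGroup V] [Module K V] {f g : Module.End K V}

theorem exists_apply_eq_zero_notMem_span_singleton (hV : 3 < finrank K V) (hf3 : f ^ 3 = 0)
    (v : V) : ∃ z, f z = 0 ∧ z ∉ K ∙ f (f v) := by
  by_contra! h
  have hfff := Module.End.apply_apply_apply_eq_zero_of_pow_three_eq_zero hf3
  have htop : Submodule.span K (Set.range ![f (f v), f v, v]) = ⊤ := by
    refine Submodule.eq_top_iff'.mpr fun z => ?_
    obtain ⟨t, ht⟩ := Submodule.mem_span_singleton.mp (h _ (hfff z))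
    obtain ⟨s, hs⟩ := Submodule.mem_span_singleton.mp (h (f (z - t • v)) (by simp [← ht]))
    obtain ⟨r, hr⟩ := Submodule.mem_span_singleton.mp
      (h (z - t • v - s • f v) (by simp [← hs]))
    refine (Submodule.mem_span_range_iff_exists_fun K).mpr ⟨![r, s, t], ?_⟩
    simp [Fin.sum_univ_three, hr]
  have := finrank_range_le_card (R := K) ![f (f v), f v, v]
  rw [Set.finrank, htop, finrank_top, Fintype.card_fin] at this
  omega

theorem linearIndependent_jordanChain (hf3 : f ^ 3 = 0) {v z : V} (hv : f (f v) ≠ 0)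
    (hz : f z = 0) (hzs : z ∉ K ∙ f (f v)) : LinearIndependent K ![f (f v), f v, z, v] := by
  have hfff := Module.End.apply_apply_apply_eq_zero_of_pow_three_eq_zero hf3 v
  rw [Fintype.linearIndependent_iff]
  intro c hc
  simp only [Fin.sum_univ_four, Matrix.cons_val] at hc
  have hc3 : c 3 = 0 := by
    simpa [hz, hfff, hv] using congrArg (fun u => f (f u)) hc
  have hc1 : c 1 = 0 := by
    simpa [hz, hfff, hv, hc3] using congrArg f hc
  have hpair := LinearIndependent.pair_iff.mp
    (LinearIndependent.pair_iff' hv |>.mpr ?_) (c 0) (c 2) (by simpa [hc1, hc3] using hc)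
  · intro i
    fin_cases i
    exacts [hpair.1, hc1, hpair.2, hc3]
  · intro a ha
    exact hzs (ha ▸ Submodule.smul_mem _ a (Submodule.mem_span_singleton_self _))

theorem exists_basis_eq_toLinAlgEquiv_centralizerMatrix (hV : finrank K V = 4) (hf3 : f ^ 3 = 0)
    (hf2 : f ^ 2 ≠ 0) (hfg : Commute f g) : ∃ (B : Basis (Fin 4) K V) (c e p q r s : K),
      g = Matrix.toLinAlgEquiv B (centralizerMatrix c e p q r s) := by
  obtain ⟨v, hv⟩ : ∃ v, f (f v) ≠ 0 := by
    simpa [pow_two] using DFunLike.ne_iff.mp hf2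
  obtain ⟨z, hz, hzs⟩ := exists_apply_eq_zero_notMem_span_singleton (by omega) hf3 v
  have hli := linearIndependent_jordanChain hf3 hv hz hzs
  let B := basisOfLinearIndependentOfCardEqFinrank hli (by simp [hV])
  have hB : ⇑B = ![f (f v), f v, z, v] := coe_basisOfLinearIndependentOfCardEqFinrank _ _
  have hcoord (u : V) :
      ∃ a₀ a₁ a₂ a₃ : K, u = a₀ • f (f v) + a₁ • f v + a₂ • z + a₃ • v :=
    ⟨B.repr u 0, B.repr u 1, B.repr u 2, B.repr u 3, by
      simpa [Fin.sum_univ_four, hB] using (B.sum_repr u).symm⟩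
  have hgf (u : V) : g (f u) = f (g u) := LinearMap.congr_fun hfg.symm u
  obtain ⟨p, q, r, c, hgv⟩ := hcoord (g v)
  obtain ⟨s, t, e, t', hgz⟩ := hcoord (g z)
  have hfff : f (f (f v)) = 0 := Module.End.apply_apply_apply_eq_zero_of_pow_three_eq_zero hf3 v
  have hgfv : g (f v) = q • f (f v) + c • f v := by
    rw [hgf, hgv]
    simp [hz, hfff]
  have hgffv : g (f (f v)) = c • f (f v) := by
    rw [hgf, hgfv]
    simp [hfff]
  have hgz' : g z = s • f (f v) + e • z := by
    have hfgz : t • f (f v) + t' • f v = 0 := by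
      simpa [hz, hfff, ← hgf] using (congrArg f hgz).symm
    have ht' : t' = 0 := by
      simpa [hfff, hv] using congrArg f hfgz
    have ht : t = 0 := by
      simpa [ht', hv] using hfgz
    simpa [ht, ht'] using hgz
  refine ⟨B, c, e, p, q, r, s, B.ext fun j => ?_⟩
  rw [Matrix.toLinAlgEquiv_self, Fin.sum_univ_four]
  fin_cases j <;> simp [hB, centralizerMatrix, hgffv, hgfv, hgz', hgv]

theorem exists_sq_eq_one_and_eq_smul_one_of_commute [Fintype K] [CharP K 3]
    (hK : Fintype.card K % 4 = 3) (hV : finrank K V = 4) (hf3 : f ^ 3 = 0) (hf2 : f ^ 2 ≠ 0)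
    (hfg : Commute f g) (hdet : LinearMap.det g = 1) {k : ℕ} (hg : g ^ 2 ^ k = 1) :
    ∃ c : K, c ^ 2 = 1 ∧ g = c • 1 := by
  obtain ⟨B, c, e, p, q, r, s, rfl⟩ :=
    exists_basis_eq_toLinAlgEquiv_centralizerMatrix hV hf3 hf2 hfg
  set T := Matrix.toLinAlgEquiv B
  have hB0 : T (centralizerMatrix c e p q r s) (B 0) = c • B 0 := by
    rw [Matrix.toLinAlgEquiv_self, Fin.sum_univ_four]
    simp [centralizerMatrix]
  have hc : c ^ 2 = 1 := by
    refine FiniteField.sq_eq_one_of_pow_two_pow_eq_one hK (k := k) <|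
      smul_left_injective K (B.ne_zero 0) ?_
    have hB0_eig : Module.End.HasEigenvector (T (centralizerMatrix c e p q r s)) c (B 0) :=
      ⟨Module.End.mem_eigenspace_iff.mpr hB0, B.ne_zero 0⟩
    simpa [hB0_eig.pow_apply] using LinearMap.congr_fun hg (B 0)
  have he : e = c := by
    have h : c ^ 3 * e = 1 := by
      rw [← det_centralizerMatrix c e p q r s, ← LinearMap.det_toLin B, ← hdet]
      rfl
    linear_combination c * h - e * (1 + c ^ 2) * hc
  subst e
  refine ⟨c, hc, ?_⟩
  have hW := eq_of_sub_pow_three_eq_zero (g := centralizerMatrix c c p q r s) (c := c • 1)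
    ((Commute.one_right _).smul_right c) (by rw [smul_pow, one_pow, hc, one_smul])
    (centralizerMatrix_sub_smul_one_pow_three c p q r s)
    (T.injective (by rw [map_pow, hg, map_one]))
  rw [hW, map_smul, map_one]

end

/-- Let `F` be a finite field with `|F| = 3^a`, `a` odd, let `x ∈ SL₄(F)` have order 3
with `(x - 1)² ≠ 0` (Jordan form `J₃ ⊕ J₁`), and let `w ∈ SL₄(F)` have 2-power order
and commute with `x`. Then `w = 1` or `w = -1`, i.e. `w` is central. -/
theorem SL4_three_pow_odd_two_power_commuting_is_central
    {F : Type*} [Field F] [Fintype F] (a : ℕ) (ha : Odd a)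
    (hcard : Fintype.card F = 3 ^ a)
    (x w : Matrix.SpecialLinearGroup (Fin 4) F) (hx : orderOf x = 3)
    (hreg : ((x : Matrix (Fin 4) (Fin 4) F) - 1) ^ 2 ≠ 0)
    (hw : ∃ k : ℕ, orderOf w = 2 ^ k) (hcomm : w * x = x * w) :
    (w : Matrix (Fin 4) (Fin 4) F) = 1 ∨ (w : Matrix (Fin 4) (Fin 4) F) = -1 := by
  obtain ⟨k, hk⟩ := hw
  have : CharP F 3 := charP_of_card_eq_prime_pow hcard
  have hx3 : (x : Matrix (Fin 4) (Fin 4) F) ^ 3 = 1 := by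
    rw [← Matrix.SpecialLinearGroup.coe_pow, ← hx, pow_orderOf_eq_one,
      Matrix.SpecialLinearGroup.coe_one]
  have hwk : (w : Matrix (Fin 4) (Fin 4) F) ^ 2 ^ k = 1 := by
    rw [← Matrix.SpecialLinearGroup.coe_pow, ← hk, pow_orderOf_eq_one,
      Matrix.SpecialLinearGroup.coe_one]
  have hxw : Commute ((x : Matrix (Fin 4) (Fin 4) F) - 1) w :=
    Commute.sub_left (congrArg Subtype.val hcomm).symm (Commute.one_left _)
  let T := Matrix.toLinAlgEquiv' (R := F) (n := Fin 4)
  obtain ⟨c, hc, hwc⟩ := exists_sq_eq_one_and_eq_smul_one_of_commute (f := T (x - 1)) (g := T w)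
    (hcard ▸ Nat.three_pow_mod_four_of_odd ha) (by simp)
    (by rw [← map_pow, sub_pow_char_of_commute 3 (Commute.one_right _), hx3, one_pow, sub_self,
      map_zero])
    (by rwa [← map_pow, Ne, map_eq_zero_iff _ T.injective])
    (hxw.map T) ((LinearMap.det_toLin' _).trans w.2)
    (by rw [← map_pow, hwk, map_one])
  have hwc' : (w : Matrix (Fin 4) (Fin 4) F) = c • 1 :=
    T.injective (by rw [hwc, map_smul, map_one])
  rcases sq_eq_one_iff.mp hc with rfl | rfl
  · left; simpa using hwc'
  · right; simpa using hwc'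
end

section
/- Let F be a finite field of characteristic 2 and let x ∈ GL_3(F) act irreducibly on F³, i.e., the only F-subspaces of F³ invariant under x are 0 and F³. If P is a 2-subgroup of GL_3(F) normalized by x, then P is trivial. (Hence x normalizes no nontrivial 2-subgroup of GL_3(F).) -/
/-!
Let `P` be a `2`-subgroup normalized by `x`. Since `x` normalizes `P`, the subspace of `P`-fixed
vectors is `x`-invariant. It is also nonzero: the `2`-group `P` permutes the vectors of `F³`,
whose number `|F|³` is even, so the fixed vectors, `0` among them, are even in number too.
By irreducibility every vector is fixed by `P`, and as `GL₃(F)` acts faithfully, `P` is trivial.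
-/

open Representation

theorem prime_dvd_natCard_of_charP {k V : Type*} [Semiring k] [AddCommGroup V] [Module k V]
    (p : ℕ) [Fact p.Prime] [CharP k p] [Finite V] [Nontrivial V] : p ∣ Nat.card V := by
  obtain ⟨v, hv⟩ := exists_ne (0 : V)
  have hpv : p • v = 0 := by
    rw [← Nat.cast_smul_eq_nsmul k, CharP.cast_eq_zero, zero_smul]
  rw [← addOrderOf_eq_prime hpv hv]
  exact addOrderOf_dvd_natCard v

section

variable {k V G : Type*} [CommRing k] [AddCommGroup V] [Module k V] [Group G]
  [DistribMulAction G V] [SMulCommClass G k V]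

theorem IsPGroup.invariants_ne_bot {p : ℕ} [Fact p.Prime] [CharP k p] [Finite V]
    [Nontrivial V] (hG : IsPGroup p G) : (ofDistribMulAction k G V).invariants ≠ ⊥ := by
  obtain ⟨v, hv, hv0⟩ := hG.exists_fixed_point_of_prime_dvd_card_of_fixed_point V
    (prime_dvd_natCard_of_charP (k := k) p) (a := 0) (smul_zero ·)
  exact (Submodule.ne_bot_iff _).2 ⟨v, hv, hv0.symm⟩

theorem smul_mem_invariants_of_mem_normalizer {P : Subgroup G} {x : G}
    (hx : x ∈ Subgroup.normalizer (P : Set G)) {v : V}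
    (hv : v ∈ (ofDistribMulAction k P V).invariants) :
    x • v ∈ (ofDistribMulAction k P V).invariants := by
  rintro ⟨g, hg⟩
  have hconj := hv ⟨x⁻¹ * g * x, (Subgroup.mem_normalizer_iff''.mp hx g).mp hg⟩
  simp only [ofDistribMulAction_apply_apply, Subgroup.mk_smul, mul_smul] at hconj ⊢
  exact inv_smul_eq_iff.mp hconj

theorem Subgroup.eq_bot_of_isPGroup_of_mem_normalizer [FaithfulSMul G V] [Finite V]
    [Nontrivial V] {p : ℕ} [Fact p.Prime] [CharP k p] {x : G}
    (hirr : ∀ W : Submodule k V, (∀ v ∈ W, x • v ∈ W) → W = ⊥ ∨ W = ⊤)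
    {P : Subgroup G} (hP : IsPGroup p P) (hxP : x ∈ Subgroup.normalizer (P : Set G)) :
    P = ⊥ := by
  have htop : (ofDistribMulAction k P V).invariants = ⊤ :=
    (hirr _ fun _ hv => smul_mem_invariants_of_mem_normalizer hxP hv).resolve_left
      hP.invariants_ne_bot
  refine (Subgroup.eq_bot_iff_forall P).2 fun g hg => eq_of_smul_eq_smul (α := V) fun v => ?_
  simpa using (htop ▸ Submodule.mem_top : v ∈ (ofDistribMulAction k P V).invariants) ⟨g, hg⟩

end

instance Matrix.GeneralLinearGroup.faithfulSMul {n R : Type*} [Fintype n] [DecidableEq n]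
    [Semiring R] : FaithfulSMul (GL n R) (n → R) where
  eq_of_smul_eq_smul h := Units.ext <| Matrix.ext_iff_mulVec.2 h

/-- Let `F` be a finite field of characteristic 2 and let `x ∈ GL₃(F)` act irreducibly
on `F³` (the only `x`-invariant subspaces are `0` and `F³`). Then every 2-subgroup of
`GL₃(F)` normalized by `x` is trivial. -/
theorem GL3_char_two_irreducible_normalizes_no_two_subgroup
    {F : Type*} [Field F] [Fintype F] [CharP F 2]
    (x : Matrix.GeneralLinearGroup (Fin 3) F)
    (hirr : ∀ W : Submodule F (Fin 3 → F),
      (∀ v ∈ W, Matrix.mulVec (x : Matrix (Fin 3) (Fin 3) F) v ∈ W) → W = ⊥ ∨ W = ⊤)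
    (P : Subgroup (Matrix.GeneralLinearGroup (Fin 3) F))
    (hP : IsPGroup 2 P) (hxP : x ∈ Subgroup.normalizer (P : Set (Matrix.GeneralLinearGroup (Fin 3) F))) :
    P = ⊥ :=
  Subgroup.eq_bot_of_isPGroup_of_mem_normalizer (k := F) (V := Fin 3 → F) hirr hP hxP
end

section
/- Let q be an odd prime power with q ≡ 1 (mod 3), let F be the finite field with q elements, and let x be an element of order 3 in PGL_3(q) := GL_3(F) / Z(GL_3(F)). Then x normalizes some nontrivial 2-subgroup of PGL_3(q). -/
/-!
Lift `x` to `g ∈ GL₃(F)`: then `g` is not scalar but `g³ = c` is. Since `q ≡ 1 (mod 3)`, `F`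
contains a primitive cube root of unity `ω`, and `2 ≠ 0` because `q` is odd.

If `c = μ³`, then `u = μ⁻¹ g` satisfies `u³ = 1`, so `u = e₁ + ω e_ω + ω² e_{ω²}` for its three
spectral idempotents `e_a = (1 + a⁻¹ u + a⁻² u²) / 3`. One of them, `e`, is not scalar, and the
involution `1 - 2e` commutes with `g`.

If `c` is not a cube, `X³ - c` is irreducible, so `v, g v, g² v` is a basis for any `v ≠ 0`. In
this basis `g` is the monomial matrix of a 3-cycle, which normalizes the group of diagonal
`±1`-matrices.

In both cases the image in `PGL₃(F)` of the 2-group found is nontrivial and normalized by `x`.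
-/

open Matrix Polynomial

theorem IsPGroup.two_of_forall_sq_eq_one {G : Type*} [Group G] {H : Subgroup G}
    (hH : ∀ h ∈ H, h ^ 2 = 1) : IsPGroup 2 H :=
  fun h => ⟨1, Subtype.ext (hH h h.2)⟩

theorem QuotientGroup.exists_isPGroup_ne_bot_mem_normalizer {G : Type*} [Group G] {p : ℕ}
    (N : Subgroup G) [N.Normal] {H : Subgroup G} (hH : IsPGroup p H) (hHN : ¬H ≤ N) {g : G}
    (hg : g ∈ Subgroup.normalizer (H : Set G)) :
    ∃ P : Subgroup (G ⧸ N), P ≠ ⊥ ∧ IsPGroup p P ∧ (g : G ⧸ N) ∈ Subgroup.normalizer (P : Set _) :=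
  ⟨H.map (QuotientGroup.mk' N), by rwa [Ne, Subgroup.map_eq_bot_iff, QuotientGroup.ker_mk'],
    hH.map _, Subgroup.le_normalizer_map _ (Subgroup.mem_map_of_mem _ hg)⟩

theorem FiniteField.two_ne_zero_of_odd_card {F : Type*} [Field F] [Fintype F]
    (hF : Odd (Fintype.card F)) : (2 : F) ≠ 0 := by
  obtain ⟨k, hk⟩ := hF
  intro h2
  simpa [hk, h2] using FiniteField.cast_card_eq_zero F

theorem FiniteField.exists_isPrimitiveRoot_three {F : Type*} [Field F] [Fintype F]
    (hF : Fintype.card F % 3 = 1) : ∃ ω : F, IsPrimitiveRoot ω 3 := by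
  classical
  obtain ⟨ζ, hζ⟩ := exists_prime_orderOf_dvd_card (G := Fˣ) 3
    (by rw [Fintype.card_units]; omega)
  exact ⟨ζ, IsPrimitiveRoot.coe_units_iff.mpr (hζ ▸ IsPrimitiveRoot.orderOf ζ)⟩
theorem IsIdempotentElem.one_sub_two_mul_mul_self {R : Type*} [Ring R] {e : R}
    (he : IsIdempotentElem e) : (1 - 2 * e) * (1 - 2 * e) = 1 := by
  have : (1 - 2 * e) * (1 - 2 * e) = 1 - 4 * e + 4 * (e * e) := by noncomm_ring
  rw [this, he.eq]
  noncomm_ring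

section CubeRootsOfUnity

variable {F : Type*} [Field F]

/-- For `a ^ 3 = 1`, evaluated at `u` with `u ^ 3 = 1` this is `(1 + a⁻¹ u + a⁻² u²) / 3`, the
projection onto the `a`-eigenspace of `u`. -/
noncomputable def cubicEigenproj (a : F) : F[X] :=
  C (3 : F)⁻¹ * (1 + C (a ^ 2) * X + C a * X ^ 2)

theorem X_pow_three_sub_one_dvd_cubicEigenproj_sq_sub {a : F} (ha : a ^ 3 = 1)
    (h3 : (3 : F) ≠ 0) :
    X ^ 3 - 1 ∣ cubicEigenproj a ^ 2 - cubicEigenproj a := by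
  have hCa : C a ^ 3 = 1 := by rw [← C_pow, ha, C_1]
  have hC3 : C (3 : F)⁻¹ * 3 = 1 := by
    rw [← map_ofNat C 3, ← C_mul, inv_mul_cancel₀ h3, C_1]
  refine ⟨C (3 : F)⁻¹ ^ 2 * (2 + C a ^ 2 * X), ?_⟩
  simp only [cubicEigenproj, C_pow]
  linear_combination (C (3 : F)⁻¹ ^ 2 * (C a * X ^ 2 + 2 * X ^ 3)) * hCa +
    (C (3 : F)⁻¹ * (1 + C a ^ 2 * X + C a * X ^ 2)) * hC3

theorem cubicEigenproj_spectral_sum {ω : F} (hω : IsPrimitiveRoot ω 3) :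
    cubicEigenproj 1 + C ω * cubicEigenproj ω + C (ω ^ 2) * cubicEigenproj (ω ^ 2) = X := by
  have h3 : (3 : F) ≠ 0 := (hω.neZero').out
  have hω3 : C ω ^ 3 = 1 := by rw [← C_pow, hω.pow_eq_one, C_1]
  have hωs : C ω ^ 2 + C ω + 1 = 0 := by
    have : ω ^ 2 + ω + 1 = 0 := by
      have := hω.geom_sum_eq_zero (by norm_num)
      simp only [Finset.sum_range_succ, Finset.sum_range_zero] at this
      linear_combination this
    rw [← C_pow, ← C_1, ← C_add, ← C_add, this, C_0]
  have hC3 : C (3 : F)⁻¹ * 3 = 1 := by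
    rw [← map_ofNat C 3, ← C_mul, inv_mul_cancel₀ h3, C_1]
  simp only [cubicEigenproj, C_pow, C_1, one_pow]
  linear_combination (C (3:F)⁻¹ * (1 + X ^ 2)) * hωs
    + (C (3:F)⁻¹ * (2 * X + X ^ 2 * C ω + X * C ω ^ 3)) * hω3 + X * hC3

variable {A : Type*} [Ring A] [Algebra F A]

theorem isIdempotentElem_aeval_cubicEigenproj {u : A} (hu : u ^ 3 = 1) {a : F} (ha : a ^ 3 = 1)
    (h3 : (3 : F) ≠ 0) : IsIdempotentElem (aeval u (cubicEigenproj a)) := by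
  obtain ⟨r, hr⟩ := X_pow_three_sub_one_dvd_cubicEigenproj_sq_sub ha h3
  have h := congrArg (aeval u) hr
  rwa [map_mul, map_sub, map_pow, map_sub, map_pow, aeval_X, map_one, hu, sub_self, zero_mul,
    sub_eq_zero, sq] at h

theorem exists_involution_commute_of_pow_three_eq_one (h2 : (2 : F) ≠ 0) {ω : F}
    (hω : IsPrimitiveRoot ω 3) {u : A} (hu : u ^ 3 = 1)
    (hu_scalar : u ∉ Set.range (algebraMap F A)) :
    ∃ s : A, s * s = 1 ∧ Commute s u ∧ s ∉ Set.range (algebraMap F A) := by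
  have h3 : (3 : F) ≠ 0 := hω.neZero'.out
  obtain ⟨a, ha, hea⟩ : ∃ a : F, a ^ 3 = 1 ∧
      aeval u (cubicEigenproj a) ∉ Set.range (algebraMap F A) := by
    by_contra! h
    obtain ⟨r₁, h₁⟩ := h 1 (one_pow 3)
    obtain ⟨r₂, h₂⟩ := h ω hω.pow_eq_one
    obtain ⟨r₃, h₃⟩ := h (ω ^ 2) (by rw [← pow_mul, mul_comm, pow_mul, hω.pow_eq_one, one_pow])
    refine hu_scalar ⟨r₁ + ω * r₂ + ω ^ 2 * r₃, ?_⟩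
    have hsum := congrArg (aeval u) (cubicEigenproj_spectral_sum hω)
    simp only [map_add, map_mul, aeval_C, aeval_X] at hsum
    rw [← hsum, ← h₁, ← h₂, ← h₃]
    simp only [map_add, map_mul]
  have hcomm : Commute (aeval u (cubicEigenproj a)) u := by
    simpa using (Commute.all (cubicEigenproj a) X).map (aeval u)
  refine ⟨1 - 2 * aeval u (cubicEigenproj a),
    (isIdempotentElem_aeval_cubicEigenproj hu ha h3).one_sub_two_mul_mul_self,
    (Commute.one_left u).sub_left ((Commute.ofNat_left 2 u).mul_left hcomm), ?_⟩
  rintro ⟨r, hr⟩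
  refine hea ⟨2⁻¹ * (1 - r), ?_⟩
  rw [map_mul, map_sub, hr, map_one, sub_sub_cancel, ← mul_assoc, ← map_ofNat (algebraMap F A) 2,
    ← map_mul, inv_mul_cancel₀ h2, map_one, one_mul]

end CubeRootsOfUnity

section SignDiagonal

variable {n R : Type*} [Fintype n] [DecidableEq n] [CommRing R]

theorem Matrix.diagonal_mul_diagonal_self_of_sign {d : n → R} (hd : ∀ i, d i = 1 ∨ d i = -1) :
    diagonal d * diagonal d = 1 := by
  rw [diagonal_mul_diagonal, ← diagonal_one]
  congr 1
  ext i
  rcases hd i with h | h <;> simp [h]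

variable (n R) in
def signDiagonal : Subgroup (GL n R) where
  carrier := {u | ∃ d : n → R, (∀ i, d i = 1 ∨ d i = -1) ∧ (u : Matrix n n R) = diagonal d}
  one_mem' := ⟨1, fun _ => Or.inl rfl, by simp⟩
  mul_mem' := by
    rintro u v ⟨d, hd, hu⟩ ⟨e, he, hv⟩
    refine ⟨d * e, fun i => ?_, by rw [Units.val_mul, hu, hv, diagonal_mul_diagonal]; rfl⟩
    rcases hd i with h | h <;> rcases he i with h' | h' <;> simp [h, h']
  inv_mem' := by
    rintro u ⟨d, hd, hu⟩
    have hu_inv : u⁻¹ = u := inv_eq_of_mul_eq_one_right <| Units.ext <| by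
      rw [Units.val_mul, hu, diagonal_mul_diagonal_self_of_sign hd, Units.val_one]
    exact ⟨d, hd, by rw [hu_inv, hu]⟩

theorem sq_eq_one_of_mem_signDiagonal {u : GL n R} (hu : u ∈ signDiagonal n R) : u ^ 2 = 1 := by
  obtain ⟨d, hd, hud⟩ := hu
  exact Units.ext <| by
    rw [Units.val_pow_eq_pow_val, hud, sq, diagonal_mul_diagonal_self_of_sign hd, Units.val_one]

theorem signDiagonal_not_le_center [Nontrivial n] (h2 : (2 : R) ≠ 0) :
    ¬signDiagonal n R ≤ Subgroup.center (GL n R) := by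
  obtain ⟨i, j, hij⟩ := exists_pair_ne n
  set d : n → R := fun k => if k = i then -1 else 1
  have hd : ∀ k, d k = 1 ∨ d k = -1 := fun k => by by_cases hk : k = i <;> simp [d, hk]
  have hdd := diagonal_mul_diagonal_self_of_sign hd
  intro hle
  obtain ⟨r, hr⟩ := GeneralLinearGroup.mem_center_iff_val_mem_range_scalar.mp
    (hle (show (⟨diagonal d, diagonal d, hdd, hdd⟩ : GL n R) ∈ signDiagonal n R from ⟨d, hd, rfl⟩))
  have hi := congrFun₂ hr i i
  have hj := congrFun₂ hr j j
  simp [d, hij.symm] at hi hj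
  exact h2 (by linear_combination hi - hj)

end SignDiagonal

section LinearAlgebra

variable {n : Type*} [Fintype n] [DecidableEq n]

theorem Matrix.eq_zero_of_aeval_mulVec_eq_zero {R : Type*} [CommRing R] {g : Matrix n n R}
    {p q : R[X]} (hpq : IsCoprime p q) (hgp : aeval g p = 0) {v : n → R}
    (hv : aeval g q *ᵥ v = 0) : v = 0 := by
  obtain ⟨a, b, hab⟩ := hpq
  calc v = aeval g (a * p + b * q) *ᵥ v := by rw [hab, map_one, one_mulVec]
    _ = 0 := by rw [map_add, map_mul, map_mul, hgp, mul_zero, zero_add, ← mulVec_mulVec, hv,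
      mulVec_zero]

theorem Matrix.linearIndependent_pow_mulVec {F : Type*} [Field F] {g : Matrix n n F} {p : F[X]}
    (hp : Irreducible p) (hgp : aeval g p = 0) {v : n → F} (hv : v ≠ 0) {k : ℕ}
    (hk : k ≤ p.natDegree) : LinearIndependent F (fun j : Fin k => (g ^ (j : ℕ)) *ᵥ v) := by
  rw [Fintype.linearIndependent_iff]
  intro w hw
  set q : F[X] := ∑ j : Fin k, C (w j) * X ^ (j : ℕ)
  have hq : aeval g q *ᵥ v = 0 := by
    simpa [q, map_sum, sum_mulVec, ← Algebra.smul_def, smul_mulVec] using hw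
  have hq0 : q = 0 := by
    by_contra hq0
    refine hv (eq_zero_of_aeval_mulVec_eq_zero ((hp.coprime_iff_not_dvd).mpr fun hdvd => hq0 ?_)
      hgp hq)
    refine eq_zero_of_dvd_of_degree_lt hdvd ((degree_sum_fin_lt w).trans_le ?_)
    rw [degree_eq_natDegree hp.ne_zero]
    exact_mod_cast hk
  intro j
  simpa [q, finsetSum_coeff, coeff_C_mul_X_pow, Fin.val_inj] using congrArg (coeff · j) hq0

end LinearAlgebra

section GL3

variable {F : Type*} [Field F]

def cyclicMonomial (c : F) : Matrix (Fin 3) (Fin 3) F :=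
  !![0, 0, c; 1, 0, 0; 0, 1, 0]

theorem cyclicMonomial_mul_diagonal (c : F) (d : Fin 3 → F) :
    cyclicMonomial c * diagonal d = diagonal (fun i => d (i + 2)) * cyclicMonomial c := by
  ext i j
  fin_cases i <;> fin_cases j <;> simp [cyclicMonomial, mul_apply, Fin.sum_univ_three]; ring

theorem mem_normalizer_signDiagonal_of_val_eq_cyclicMonomial {c : F} {m : GL (Fin 3) F}
    (hm : (m : Matrix (Fin 3) (Fin 3) F) = cyclicMonomial c) :
    m ∈ Subgroup.normalizer (signDiagonal (Fin 3) F : Set (GL (Fin 3) F)) := by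
  rw [Subgroup.mem_normalizer_iff]
  intro h
  constructor
  · rintro ⟨d, hd, hhd⟩
    refine ⟨fun i => d (i + 2), fun i => hd _, ?_⟩
    rw [Units.val_mul, Units.val_mul, hhd, hm, cyclicMonomial_mul_diagonal, ← hm, mul_assoc,
      Units.mul_inv, mul_one]
  · rintro ⟨d, hd, hhd⟩
    refine ⟨fun i => d (i + 1), fun i => hd _, ?_⟩
    have hmh : (m : Matrix (Fin 3) (Fin 3) F) * h = diagonal d * m := by
      rw [← hhd, Units.val_mul, Units.val_mul, mul_assoc, Units.inv_mul, mul_one]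
    have hmh' : (m : Matrix (Fin 3) (Fin 3) F) * h = m * diagonal (fun i => d (i + 1)) := by
      have hshift : ∀ i : Fin 3, i + 2 + 1 = i := by decide
      rw [hmh, hm, cyclicMonomial_mul_diagonal]
      simp only [hshift]
    simpa using congrArg (fun A => ((m⁻¹ : GL (Fin 3) F) : Matrix (Fin 3) (Fin 3) F) * A) hmh'

theorem exists_mul_eq_mul_cyclicMonomial {g : Matrix (Fin 3) (Fin 3) F} {c : F}
    (hc : ∀ μ : F, μ ^ 3 ≠ c) (hg : g ^ 3 = scalar (Fin 3) c) :
    ∃ b : GL (Fin 3) F, g * b = b * cyclicMonomial c := by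
  set v : Fin 3 → F := Pi.single 0 1
  set K : Matrix (Fin 3) (Fin 3) F := Matrix.of fun i j => (g ^ (j : ℕ) *ᵥ v) i
  have hK : IsUnit K := by
    rw [← linearIndependent_cols_iff_isUnit]
    refine linearIndependent_pow_mulVec (X_pow_sub_C_irreducible_of_prime Nat.prime_three hc)
      ?_ (by simp [v]) (by rw [natDegree_X_pow_sub_C])
    simp [hg, algebraMap_eq_diagonal]
  refine ⟨hK.unit, ?_⟩
  have hg3v : g ^ 3 *ᵥ v = c • v := by simp [hg]
  have hgK : ∀ i (j : Fin 3), (g * K) i j = (g ^ ((j : ℕ) + 1) *ᵥ v) i := by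
    intro i j
    rw [pow_succ', ← mulVec_mulVec]
    rfl
  rw [IsUnit.unit_spec]
  ext i j
  rw [hgK]
  fin_cases j <;> simp [K, cyclicMonomial, mul_apply, Fin.sum_univ_three, hg3v, mul_comm]

theorem exists_two_subgroup_of_pow_three_eq_cube (h2 : (2 : F) ≠ 0) {ω : F}
    (hω : IsPrimitiveRoot ω 3) {g : GL (Fin 3) F} (hg : g ∉ Subgroup.center (GL (Fin 3) F))
    {μ : F} (hμ : (g : Matrix (Fin 3) (Fin 3) F) ^ 3 = scalar (Fin 3) (μ ^ 3)) :
    ∃ H : Subgroup (GL (Fin 3) F), IsPGroup 2 H ∧ ¬H ≤ Subgroup.center (GL (Fin 3) F) ∧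
      g ∈ Subgroup.normalizer (H : Set (GL (Fin 3) F)) := by
  rw [GeneralLinearGroup.mem_center_iff_val_mem_range_scalar] at hg
  change (g : Matrix (Fin 3) (Fin 3) F) ∉ Set.range (algebraMap F _) at hg
  have hμ0 : μ ≠ 0 := by
    rintro rfl
    have := (g ^ 3).ne_zero
    rw [Units.val_pow_eq_pow_val, hμ] at this
    simp at this
  set u : Matrix (Fin 3) (Fin 3) F := μ⁻¹ • (g : Matrix (Fin 3) (Fin 3) F)
  have hgu : (g : Matrix (Fin 3) (Fin 3) F) = μ • u := by
    rw [smul_smul, mul_inv_cancel₀ hμ0, one_smul]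
  have hu : u ^ 3 = 1 := by
    rw [_root_.smul_pow, hμ, scalar_apply, ← smul_one_eq_diagonal, smul_smul, ← mul_pow,
      inv_mul_cancel₀ hμ0, one_pow, one_smul]
  have hu_scalar : u ∉ Set.range (algebraMap F _) := by
    rintro ⟨r, hr⟩
    exact hg ⟨μ * r, by rw [hgu, ← hr, map_mul, Algebra.smul_def]⟩
  obtain ⟨s, hs, hsu, hs_scalar⟩ := exists_involution_commute_of_pow_three_eq_one h2 hω hu hu_scalar
  set S : GL (Fin 3) F := ⟨s, s, hs, hs⟩
  have hS : S ^ 2 = 1 := Units.ext (by simp [S, sq, hs])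
  refine ⟨Subgroup.zpowers S, IsPGroup.two_of_forall_sq_eq_one ?_, fun hle => ?_, ?_⟩
  · rintro _ ⟨k, rfl⟩
    rw [← zpow_natCast, ← _root_.zpow_mul, mul_comm, _root_.zpow_mul, zpow_natCast, hS,
      _root_.one_zpow]
  · exact hs_scalar (GeneralLinearGroup.mem_center_iff_val_mem_range_scalar.mp
      (hle (Subgroup.mem_zpowers S)))
  · have hSg : Commute S g := Units.ext (hgu ▸ hsu.smul_right μ).eq
    refine Subgroup.centralizer_le_normalizer _ (Subgroup.mem_centralizer_iff.mpr ?_)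
    rintro _ ⟨k, rfl⟩
    exact (hSg.zpow_left k).eq

theorem exists_two_subgroup_of_pow_three_eq_noncube (h2 : (2 : F) ≠ 0) {g : GL (Fin 3) F}
    {c : F} (hc : ∀ μ : F, μ ^ 3 ≠ c) (hg : (g : Matrix (Fin 3) (Fin 3) F) ^ 3 = scalar (Fin 3) c) :
    ∃ H : Subgroup (GL (Fin 3) F), IsPGroup 2 H ∧ ¬H ≤ Subgroup.center (GL (Fin 3) F) ∧
      g ∈ Subgroup.normalizer (H : Set (GL (Fin 3) F)) := by
  obtain ⟨b, hb⟩ := exists_mul_eq_mul_cyclicMonomial hc hg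
  have hm : ((b⁻¹ * g * b : GL (Fin 3) F) : Matrix (Fin 3) (Fin 3) F) = cyclicMonomial c := by
    rw [Units.val_mul, Units.val_mul, mul_assoc, hb, ← mul_assoc, Units.inv_mul, one_mul]
  refine ⟨(signDiagonal (Fin 3) F).map (MulAut.conj b).toMonoidHom,
    (IsPGroup.two_of_forall_sq_eq_one fun _ => sq_eq_one_of_mem_signDiagonal).map _, ?_, ?_⟩
  · rw [Subgroup.map_le_iff_le_comap, Subgroup.characteristic_iff_comap_eq.mp inferInstance]
    exact signDiagonal_not_le_center h2
  · rw [← Subgroup.map_equiv_normalizer_eq]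
    exact ⟨_, mem_normalizer_signDiagonal_of_val_eq_cyclicMonomial hm, by simp [mul_assoc]⟩

theorem exists_two_subgroup_not_le_center_mem_normalizer (h2 : (2 : F) ≠ 0) {ω : F}
    (hω : IsPrimitiveRoot ω 3) {g : GL (Fin 3) F} (hg : g ∉ Subgroup.center (GL (Fin 3) F))
    (hg3 : g ^ 3 ∈ Subgroup.center (GL (Fin 3) F)) :
    ∃ H : Subgroup (GL (Fin 3) F), IsPGroup 2 H ∧ ¬H ≤ Subgroup.center (GL (Fin 3) F) ∧
      g ∈ Subgroup.normalizer (H : Set (GL (Fin 3) F)) := by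
  obtain ⟨c, hc⟩ := GeneralLinearGroup.mem_center_iff_val_mem_range_scalar.mp hg3
  rw [Units.val_pow_eq_pow_val] at hc
  by_cases hcube : ∃ μ : F, μ ^ 3 = c
  · obtain ⟨μ, rfl⟩ := hcube
    exact exists_two_subgroup_of_pow_three_eq_cube h2 hω hg hc.symm
  · push Not at hcube
    exact exists_two_subgroup_of_pow_three_eq_noncube h2 hcube hc.symm

end GL3

theorem PGL3_odd_orderThree_normalizes_two_subgroup_general
    {F : Type*} [Field F] [Fintype F] (q : ℕ)
    (hq : Odd q) (hcard : Fintype.card F = q)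
    (hmod : q % 3 = 1)
    (x : Matrix.GeneralLinearGroup (Fin 3) F ⧸
        Subgroup.center (Matrix.GeneralLinearGroup (Fin 3) F))
    (hx : orderOf x = 3) :
    ∃ P : Subgroup (Matrix.GeneralLinearGroup (Fin 3) F ⧸
        Subgroup.center (Matrix.GeneralLinearGroup (Fin 3) F)),
      P ≠ ⊥ ∧ IsPGroup 2 P ∧ x ∈ Subgroup.normalizer (P : Set _) := by
  obtain ⟨ω, hω⟩ := FiniteField.exists_isPrimitiveRoot_three (hcard ▸ hmod)
  have h2 := FiniteField.two_ne_zero_of_odd_card (hcard ▸ hq)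
  have hx3 := pow_orderOf_eq_one x
  rw [hx] at hx3
  obtain ⟨g, rfl⟩ := QuotientGroup.mk_surjective x
  have hg3 : g ^ 3 ∈ Subgroup.center (GL (Fin 3) F) := by
    rw [← QuotientGroup.eq_one_iff, QuotientGroup.mk_pow, hx3]
  have hg : g ∉ Subgroup.center (GL (Fin 3) F) := fun h => by
    simp [(QuotientGroup.eq_one_iff g).mpr h] at hx
  obtain ⟨H, hH, hHc, hgH⟩ := exists_two_subgroup_not_le_center_mem_normalizer h2 hω hg hg3
  exact QuotientGroup.exists_isPGroup_ne_bot_mem_normalizer _ hH hHc hgH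

/-- Let `q` be an odd prime power with `q ≡ 1 (mod 3)`, let `F` be the field with `q`
elements, and let `x` be an element of order 3 in `PGL₃(q) = GL₃(F)/Z(GL₃(F))`.
Then `x` normalizes some nontrivial 2-subgroup of `PGL₃(q)`. -/
theorem PGL3_odd_orderThree_normalizes_two_subgroup
    {F : Type*} [Field F] [Fintype F] (q : ℕ)
    (hq : Odd q) (hq' : IsPrimePow q) (hcard : Fintype.card F = q)
    (hmod : q % 3 = 1)
    (x : Matrix.GeneralLinearGroup (Fin 3) F ⧸
        Subgroup.center (Matrix.GeneralLinearGroup (Fin 3) F))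
    (hx : orderOf x = 3) :
    ∃ P : Subgroup (Matrix.GeneralLinearGroup (Fin 3) F ⧸
        Subgroup.center (Matrix.GeneralLinearGroup (Fin 3) F)),
      P ≠ ⊥ ∧ IsPGroup 2 P ∧ x ∈ Subgroup.normalizer (P : Set _) :=
  PGL3_odd_orderThree_normalizes_two_subgroup_general q hq hcard hmod x hx
end
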